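/- arXiv:math/0310384 — 4 statements merged into one kernel-verified Lean document; each statement's English description precedes it below -/
import Mathlib

section
/- There is an absolute constant C₀ with the following property. Let n > 1, let σ be a permutation of Z_n (identified with {0,1,…,n−1}), and let α ≥ 1 be a real number such that |Σ_{s=0}^{m−1} e(k·σ(s)/n)| ≤ α for every 1 ≤ m ≤ n and every positive integer k not divisible by n. Then D(σ) ≤ C₀ · α · log n. -/
open Finset

/-- An interval of `ZMod n`: the projection of a set of consecutive integers. -/
def IsInterval {n : ℕ} (I : Finset (ZMod n)) : Prop :=
  ∃ a len : ℕ, I = (Finset.range len).image (fun i : ℕ => ((a + i : ℕ) : ZMod n))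

/-- An initial interval of `ZMod n`: the projection of `{0, 1, …, M}` for some `M ≥ 0`. -/
def IsInitialInterval {n : ℕ} (I : Finset (ZMod n)) : Prop :=
  ∃ M : ℕ, I = (Finset.range (M + 1)).image (fun i : ℕ => ((i : ℕ) : ZMod n))

/-- The discrepancy of `S` in `T`: `| |S ∩ T| - |S||T|/n |`. -/
noncomputable def discIn {n : ℕ} (S T : Finset (ZMod n)) : ℝ :=
  |((S ∩ T).card : ℝ) - (S.card : ℝ) * (T.card : ℝ) / (n : ℝ)|

/-- The discrepancy `D(σ)` of a permutation of `ZMod n`: the max of `D_J(σ(I))`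
over all intervals `I`, `J` of `ZMod n`. -/
noncomputable def disc {n : ℕ} (σ : Equiv.Perm (ZMod n)) : ℝ :=
  sSup {d : ℝ | ∃ I J : Finset (ZMod n), IsInterval I ∧ IsInterval J ∧ d = discIn (I.image σ) J}

/-- The discrepancy `D*(σ)`: the max of `D_J(σ(I))` over all initial intervals `I`, `J`. -/
noncomputable def discStar {n : ℕ} (σ : Equiv.Perm (ZMod n)) : ℝ :=
  sSup {d : ℝ | ∃ I J : Finset (ZMod n),
    IsInitialInterval I ∧ IsInitialInterval J ∧ d = discIn (I.image σ) J}

/-- `e(x) = exp(2πix)`. -/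
noncomputable def e (x : ℝ) : ℂ := Complex.exp (2 * Real.pi * Complex.I * x)

/-- The multiplication permutation `ψ_k : s ↦ k·s` of `ZMod n`, for a unit `k`. -/
def psi {n : ℕ} (k : (ZMod n)ˣ) : Equiv.Perm (ZMod n) where
  toFun s := (k : ZMod n) * s
  invFun s := ((k⁻¹ : (ZMod n)ˣ) : ZMod n) * s
  left_inv s := Units.inv_mul_cancel_left k s
  right_inv s := Units.mul_inv_cancel_left k s

/-- The Sós permutation value: `β_α(t) = |{s ∈ [n] : {αs} ≤ {αt}}|`. -/
noncomputable def sos (α : ℝ) (n t : ℕ) : ℕ :=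
  (@Finset.filter ℕ (fun s => Int.fract (α * s) ≤ Int.fract (α * t))
    (Classical.decPred _) (Finset.Icc 1 n)).card

/-- `A_s(α) = { {αx} : x ∈ [s] }`. -/
noncomputable def fracSet (α : ℝ) (s : ℕ) : Finset ℝ :=
  (Finset.Icc 1 s).image (fun x : ℕ => Int.fract (α * x))

/-- `d*(A) = sup_{0 ≤ x ≤ 1} | |A ∩ [0,x]| - x|A| |` for a finite set `A` of reals. -/
noncomputable def dstarSet (A : Finset ℝ) : ℝ :=
  ⨆ x : Set.Icc (0 : ℝ) 1,
    |(((@Finset.filter ℝ (fun a => a ∈ Set.Icc (0 : ℝ) (x : ℝ))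
        (Classical.decPred _) A).card : ℝ)) - (x : ℝ) * (A.card : ℝ)|

/-- Iterated Gauss map: `gaussIter α 0 = α`, `gaussIter α (i+1) = 1/{gaussIter α i}`.
For irrational `α`, the partial quotients of the continued fraction `α = [a₀; a₁, a₂, …]`
are given by `aᵢ = ⌊gaussIter α i⌋`. -/
noncomputable def gaussIter (α : ℝ) : ℕ → ℝ
  | 0 => α
  | n + 1 => 1 / Int.fract (gaussIter α n)

/-- Auxiliary for continuants (operating on the reversed list):
`contRev [] = 1`, `contRev [a] = a`, `contRev (a :: b :: l) = a * contRev (b :: l) + contRev l`. -/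
def contRev : List ℕ → ℕ
  | [] => 1
  | [a] => a
  | a :: b :: l => a * contRev (b :: l) + contRev l

/-- The continuant `K(a₁,…,a_m)`: `K() = 1`, `K(a₁) = a₁`,
`K(a₁,…,a_j) = a_j·K(a₁,…,a_{j−1}) + K(a₁,…,a_{j−2})`. -/
def continuant (l : List ℕ) : ℕ := contRev l.reverse

/-- `B_σ(k) = |{1 ≤ q ≤ k : σ(q) ≤ σ(k)}|` for a permutation `σ` of `[n]`
(realized as `Fin n`, zero-indexed). -/
def Bperm (n : ℕ) (σ : Equiv.Perm (Fin n)) (k : Fin n) : ℕ :=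
  (Finset.univ.filter (fun q : Fin n => q ≤ k ∧ σ q ≤ σ k)).card

/-- `B_α(k) = |{1 ≤ q ≤ k : {qα} ≤ {kα}}|`. -/
noncomputable def Bfrac (α : ℝ) (k : ℕ) : ℕ :=
  (@Finset.filter ℕ (fun q => Int.fract (α * q) ≤ Int.fract (α * k))
    (Classical.decPred _) (Finset.Icc 1 k)).card

noncomputable def zetaC (n : ℕ) : ℂ := Complex.exp (2 * Real.pi * Complex.I / n)
noncomputable def chiC (n : ℕ) (v : ZMod n) : ℂ := zetaC n ^ v.val

lemma zetaC_eq (n : ℕ) : zetaC n = Complex.exp (((2 * Real.pi / n : ℝ) : ℂ) * Complex.I) := by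
  unfold zetaC; congr 1; push_cast; ring

lemma abs_zetaC (n : ℕ) : ‖zetaC n‖ = 1 := by
  rw [zetaC_eq]; exact Complex.norm_exp_ofReal_mul_I _

lemma zetaC_pow_n {n : ℕ} (hn : n ≠ 0) : zetaC n ^ n = 1 :=
  (Complex.isPrimitiveRoot_exp n hn).pow_eq_one

lemma zetaC_pow_mod {n : ℕ} (hn : n ≠ 0) (m : ℕ) : zetaC n ^ (m % n) = zetaC n ^ m := by
  conv_rhs => rw [← Nat.mod_add_div m n]
  rw [pow_add, pow_mul, zetaC_pow_n hn, one_pow, mul_one]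

lemma chiC_natCast {n : ℕ} (hn : n ≠ 0) (m : ℕ) : chiC n (m : ZMod n) = zetaC n ^ m := by
  haveI : NeZero n := ⟨hn⟩
  rw [chiC, ZMod.val_natCast, zetaC_pow_mod hn]

lemma chiC_add {n : ℕ} (hn : n ≠ 0) (a b : ZMod n) : chiC n (a + b) = chiC n a * chiC n b := by
  haveI : NeZero n := ⟨hn⟩
  rw [chiC, ZMod.val_add, zetaC_pow_mod hn, pow_add]; rfl

lemma chiC_mul {n : ℕ} (hn : n ≠ 0) (k : ℕ) (v : ZMod n) :
    chiC n ((k : ZMod n) * v) = (zetaC n ^ v.val) ^ k := by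
  haveI : NeZero n := ⟨hn⟩
  have : (k : ZMod n) * v = ((k * v.val : ℕ) : ZMod n) := by
    push_cast [ZMod.natCast_val, ZMod.cast_id]; rfl
  rw [this, chiC_natCast hn, mul_comm, pow_mul]

lemma abs_chiC {n : ℕ} (v : ZMod n) : ‖chiC n v‖ = 1 := by
  rw [chiC, norm_pow, abs_zetaC, one_pow]

lemma zetaC_pow_ne_one {n : ℕ} (hn : 1 < n) {j : ℕ} (h0 : 0 < j) (h1 : j < n) :
    zetaC n ^ j ≠ 1 :=
  (Complex.isPrimitiveRoot_exp n (by omega)).pow_ne_one_of_pos_of_lt h0.ne' h1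

lemma sum_chiC {n : ℕ} (hn : 1 < n) {v : ZMod n} (hv : v ≠ 0) :
    ∑ k ∈ range n, chiC n ((k : ZMod n) * v) = 0 := by
  haveI : NeZero n := ⟨by omega⟩
  have hne : zetaC n ^ v.val ≠ 1 := by
    refine zetaC_pow_ne_one hn ?_ (ZMod.val_lt v)
    exact Nat.pos_of_ne_zero (fun h => hv (by rwa [← ZMod.val_eq_zero]))
  calc ∑ k ∈ range n, chiC n ((k : ZMod n) * v)
      = ∑ k ∈ range n, (zetaC n ^ v.val) ^ k := by
        exact Finset.sum_congr rfl fun k _ => chiC_mul (by omega) k v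
    _ = ((zetaC n ^ v.val) ^ n - 1) / (zetaC n ^ v.val - 1) := geom_sum_eq hne n
    _ = 0 := by
        rw [← pow_mul, mul_comm, pow_mul, zetaC_pow_n (by omega), one_pow, sub_self, zero_div]

lemma sum_range_natCast {n : ℕ} [NeZero n] (G : ZMod n → ℂ) :
    ∑ i ∈ range n, G (i : ZMod n) = ∑ v : ZMod n, G v := by
  refine Finset.sum_nbij' (fun i => (i : ZMod n)) (fun v => v.val) ?_ ?_ ?_ ?_ ?_
  · intro i _; exact Finset.mem_univ _
  · intro v _; exact Finset.mem_range.mpr (ZMod.val_lt v)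
  · intro i hi; exact ZMod.val_cast_of_lt (Finset.mem_range.mp hi)
  · intro v _; simp [ZMod.natCast_val, ZMod.cast_id]
  · intro i _; rfl

open Complex in
lemma conj_chiC_mul_self {n : ℕ} (v : ZMod n) :
    (starRingEnd ℂ) (chiC n v) * chiC n v = 1 := by
  rw [mul_comm, Complex.mul_conj, ← Complex.sq_norm, abs_chiC]
  norm_num

lemma chiC_pair {n : ℕ} (hn : n ≠ 0) (k : ℕ) (t u : ZMod n) :
    chiC n ((k : ZMod n) * t) * (starRingEnd ℂ) (chiC n ((k : ZMod n) * u))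
      = chiC n ((k : ZMod n) * (t - u)) := by
  have h1 : (k : ZMod n) * (t - u) + (k : ZMod n) * u = (k : ZMod n) * t := by ring
  calc chiC n ((k : ZMod n) * t) * (starRingEnd ℂ) (chiC n ((k : ZMod n) * u))
      = chiC n ((k : ZMod n) * (t - u)) * (chiC n ((k : ZMod n) * u) *
          (starRingEnd ℂ) (chiC n ((k : ZMod n) * u))) := by
        rw [← mul_assoc, ← chiC_add hn, h1]
    _ = chiC n ((k : ZMod n) * (t - u)) := by
        rw [mul_comm (chiC n _) ((starRingEnd ℂ) _), conj_chiC_mul_self, mul_one]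

lemma card_inter_eq {n : ℕ} (hn : 1 < n) (S J : Finset (ZMod n)) :
    (((S ∩ J).card : ℂ)) = (1 / n) * ∑ k ∈ range n,
      (∑ t ∈ S, chiC n ((k : ZMod n) * t)) * (∑ u ∈ J, (starRingEnd ℂ) (chiC n ((k : ZMod n) * u))) := by
  haveI : NeZero n := ⟨by omega⟩
  have hn0 : (n : ℂ) ≠ 0 := by exact_mod_cast (by omega : n ≠ 0)
  have key : ∀ (t u : ZMod n), ∑ k ∈ range n, chiC n ((k : ZMod n) * (t - u))
      = if t = u then (n : ℂ) else 0 := by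
    intro t u
    by_cases h : t = u
    · subst h
      simp only [sub_self, mul_zero, if_pos rfl]
      have : ∀ k ∈ range n, chiC n (0 : ZMod n) = (1:ℂ) := by
        intro k _; rw [chiC, ZMod.val_zero, pow_zero]
      rw [Finset.sum_congr rfl (fun k _ => by rw [chiC, ZMod.val_zero, pow_zero])]
      simp
    · rw [if_neg h]
      exact sum_chiC hn (sub_ne_zero.mpr h)
  calc (((S ∩ J).card : ℂ))
      = ∑ t ∈ S, ∑ u ∈ J, (if t = u then (1:ℂ) else 0) := by
        rw [Finset.sum_congr rfl (fun t _ => Finset.sum_ite_eq J t (fun _ => (1:ℂ)))]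
        rw [Finset.sum_boole, Finset.filter_mem_eq_inter]
    _ = (1 / n) * ∑ t ∈ S, ∑ u ∈ J, ∑ k ∈ range n, chiC n ((k : ZMod n) * (t - u)) := by
        rw [Finset.mul_sum]
        refine Finset.sum_congr rfl fun t _ => ?_
        rw [Finset.mul_sum]
        refine Finset.sum_congr rfl fun u _ => ?_
        rw [key t u]
        by_cases h : t = u <;> simp [h, hn0]
    _ = (1 / n) * ∑ k ∈ range n,
      (∑ t ∈ S, chiC n ((k : ZMod n) * t)) * (∑ u ∈ J, (starRingEnd ℂ) (chiC n ((k : ZMod n) * u))) := by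
        congr 1
        calc ∑ t ∈ S, ∑ u ∈ J, ∑ k ∈ range n, chiC n ((k : ZMod n) * (t - u))
            = ∑ t ∈ S, ∑ k ∈ range n, ∑ u ∈ J, chiC n ((k : ZMod n) * (t - u)) :=
              Finset.sum_congr rfl fun t _ => Finset.sum_comm
          _ = ∑ k ∈ range n, ∑ t ∈ S, ∑ u ∈ J, chiC n ((k : ZMod n) * (t - u)) :=
              Finset.sum_comm
          _ = ∑ k ∈ range n, (∑ t ∈ S, chiC n ((k : ZMod n) * t)) *
                (∑ u ∈ J, (starRingEnd ℂ) (chiC n ((k : ZMod n) * u))) := by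
              refine Finset.sum_congr rfl fun k _ => ?_
              rw [Finset.sum_mul_sum]
              exact Finset.sum_congr rfl fun t _ => Finset.sum_congr rfl fun u _ =>
                (chiC_pair (by omega) k t u).symm

lemma e_eq_chiC {n : ℕ} (hn : 1 < n) (k : ℕ) (t : ZMod n) :
    e ((k : ℝ) * ((t.val : ℝ)) / n) = chiC n ((k : ZMod n) * t) := by
  haveI : NeZero n := ⟨by omega⟩
  have hn0 : (n : ℂ) ≠ 0 := by exact_mod_cast (by omega : n ≠ 0)
  rw [chiC_mul (by omega), ← pow_mul, zetaC]
  rw [e, ← Complex.exp_nat_mul]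
  congr 1
  push_cast
  field_simp

lemma sum_univ_chiC_zero {n : ℕ} [NeZero n] (hn : 1 < n) {k : ℕ} (hk1 : 1 ≤ k) (hk2 : k < n)
    (τ : Equiv.Perm (ZMod n)) (c : ZMod n) :
    ∑ v : ZMod n, chiC n ((k : ZMod n) * τ (c + v)) = 0 := by
  have hkz : (k : ZMod n) ≠ 0 := by
    rw [Ne, ZMod.natCast_eq_zero_iff]
    intro hdvd; exact absurd (Nat.le_of_dvd (by omega) hdvd) (by omega)
  calc ∑ v : ZMod n, chiC n ((k : ZMod n) * τ (c + v))
      = ∑ w : ZMod n, chiC n ((k : ZMod n) * τ w) :=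
        Fintype.sum_equiv (Equiv.addLeft c) _ _ (fun v => rfl)
    _ = ∑ w : ZMod n, chiC n ((k : ZMod n) * w) :=
        Fintype.sum_equiv τ _ _ (fun v => rfl)
    _ = ∑ i ∈ range n, chiC n ((k : ZMod n) * (i : ZMod n)) :=
        (sum_range_natCast _).symm
    _ = 0 := by
        rw [Finset.sum_congr rfl (fun i _ => by rw [mul_comm])]
        exact sum_chiC hn hkz

lemma prefix_bound {n : ℕ} (hn : 1 < n) (σ : Equiv.Perm (ZMod n)) {α : ℝ} (hα : 1 ≤ α)
    (hyp : ∀ m : ℕ, 1 ≤ m → m ≤ n → ∀ k : ℕ, 0 < k → ¬ (n ∣ k) →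
        ‖∑ s ∈ Finset.range m, e ((k : ℝ) * (((σ (s : ZMod n)).val : ℝ)) / n)‖ ≤ α)
    {k : ℕ} (hk1 : 1 ≤ k) (hk2 : k < n) :
    ∀ m : ℕ, ‖∑ i ∈ range m, chiC n ((k : ZMod n) * σ (i : ZMod n))‖ ≤ α := by
  haveI : NeZero n := ⟨by omega⟩
  intro m
  induction m using Nat.strong_induction_on with
  | _ m ih =>
    by_cases hm : m ≤ n
    · rcases Nat.eq_zero_or_pos m with rfl | hm1
      · simpa using (by linarith : (0:ℝ) ≤ α)
      · have := hyp m hm1 hm k (by omega) (fun hdvd => absurd (Nat.le_of_dvd (by omega) hdvd) (by omega))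
        have heq : ∑ i ∈ range m, chiC n ((k : ZMod n) * σ (i : ZMod n))
            = ∑ s ∈ range m, e ((k : ℝ) * (((σ (s : ZMod n)).val : ℝ)) / n) :=
          Finset.sum_congr rfl fun s _ => (e_eq_chiC hn k (σ (s : ZMod n))).symm
        rw [heq]; exact this
    · push_neg at hm
      have hsplit : ∑ i ∈ range m, chiC n ((k : ZMod n) * σ (i : ZMod n))
          = ∑ i ∈ range (m - n), chiC n ((k : ZMod n) * σ (i : ZMod n))
            + ∑ i ∈ Finset.Ico (m - n) m, chiC n ((k : ZMod n) * σ (i : ZMod n)) := by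
        rw [Finset.range_eq_Ico, ← Finset.sum_Ico_consecutive _ (Nat.zero_le _) (by omega : m - n ≤ m)]
        rw [Finset.range_eq_Ico]
      have hblock : ∑ i ∈ Finset.Ico (m - n) m, chiC n ((k : ZMod n) * σ (i : ZMod n)) = 0 := by
        rw [Finset.sum_Ico_eq_sum_range]
        have hmn : m - (m - n) = n := by omega
        rw [hmn]
        have : ∀ i ∈ range n, chiC n ((k : ZMod n) * σ ((m - n + i : ℕ) : ZMod n))
            = chiC n ((k : ZMod n) * σ (((m - n : ℕ) : ZMod n) + (i : ZMod n))) := by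
          intro i _; push_cast; rfl
        rw [Finset.sum_congr rfl this]
        exact (sum_range_natCast (fun v => chiC n ((k : ZMod n) * σ (((m - n : ℕ) : ZMod n) + v)))).trans
          (sum_univ_chiC_zero hn hk1 hk2 σ _)
      rw [hsplit, hblock, add_zero]
      exact ih (m - n) (by omega)

lemma interval_sum {n : ℕ} [NeZero n] {I : Finset (ZMod n)} (hI : IsInterval I) (F : ZMod n → ℂ) :
    ∃ a len : ℕ, len ≤ n ∧ ∑ t ∈ I, F t = ∑ i ∈ range len, F ((a + i : ℕ) : ZMod n) := by
  obtain ⟨a, len, rfl⟩ := hI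
  refine ⟨a, min len n, min_le_right _ _, ?_⟩
  have himg : (range len).image (fun i : ℕ => ((a + i : ℕ) : ZMod n))
      = (range (min len n)).image (fun i : ℕ => ((a + i : ℕ) : ZMod n)) := by
    apply Finset.Subset.antisymm
    · intro x hx
      obtain ⟨i, hi, rfl⟩ := Finset.mem_image.mp hx
      refine Finset.mem_image.mpr ⟨i % n, ?_, ?_⟩
      · exact Finset.mem_range.mpr (lt_min (lt_of_le_of_lt (Nat.mod_le i n) (Finset.mem_range.mp hi))
          (Nat.mod_lt _ (Nat.pos_of_ne_zero (NeZero.ne n))))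
      · push_cast [ZMod.natCast_mod]
        rfl
    · exact Finset.image_subset_image (Finset.range_subset_range.mpr (min_le_left _ _))
  rw [himg]
  refine Finset.sum_image ?_
  intro i hi j hj hij
  have hi' : i < n := lt_of_lt_of_le (Finset.mem_range.mp hi) (min_le_right _ _)
  have hj' : j < n := lt_of_lt_of_le (Finset.mem_range.mp hj) (min_le_right _ _)
  have : (i : ZMod n) = (j : ZMod n) := by
    have := hij
    push_cast at this
    exact add_left_cancel this
  have := congrArg ZMod.val this
  rwa [ZMod.val_cast_of_lt hi', ZMod.val_cast_of_lt hj'] at this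

lemma norm_exp_theta_sub_one (θ : ℝ) :
    ‖Complex.exp ((θ : ℂ) * Complex.I) - 1‖ = 2 * |Real.sin (θ / 2)| := by
  have h1 : Complex.exp ((θ : ℂ) * Complex.I) - 1
      = ((Real.cos θ - 1 : ℝ) : ℂ) + ((Real.sin θ : ℝ) : ℂ) * Complex.I := by
    rw [Complex.exp_mul_I]
    rw [← Complex.ofReal_cos, ← Complex.ofReal_sin]; push_cast
    ring
  have h2 : ‖Complex.exp ((θ : ℂ) * Complex.I) - 1‖ ^ 2
      = (Real.cos θ - 1) ^ 2 + (Real.sin θ) ^ 2 := by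
    rw [h1, Complex.sq_norm, Complex.normSq_add_mul_I]
  have h3 : (Real.cos θ - 1) ^ 2 + (Real.sin θ) ^ 2 = (2 * |Real.sin (θ / 2)|) ^ 2 := by
    have hs : Real.sin (θ / 2) ^ 2 = 1 / 2 - Real.cos θ / 2 := by
      have := Real.sin_sq_eq_half_sub (θ / 2)
      rwa [mul_div_cancel₀ θ (two_ne_zero)] at this
    have hp : Real.sin θ ^ 2 + Real.cos θ ^ 2 = 1 := Real.sin_sq_add_cos_sq θ
    have habs : |Real.sin (θ / 2)| ^ 2 = Real.sin (θ / 2) ^ 2 := sq_abs _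
    nlinarith [habs, hs, hp]
  have h4 := h2.trans h3
  have := congrArg Real.sqrt h4
  rwa [Real.sqrt_sq (norm_nonneg _), Real.sqrt_sq (by positivity)] at this

lemma zetaC_pow_eq_exp {n : ℕ} (hn : 1 < n) (k : ℕ) :
    zetaC n ^ k = Complex.exp (((2 * Real.pi * k / n : ℝ) : ℂ) * Complex.I) := by
  rw [zetaC_eq, ← Complex.exp_nat_mul]
  congr 1
  have hn0 : (n : ℂ) ≠ 0 := by exact_mod_cast (by omega : n ≠ 0)
  push_cast
  field_simp

lemma norm_zetaC_pow_sub_one {n : ℕ} (hn : 1 < n) {k : ℕ} (hk1 : 1 ≤ k) (hk2 : k < n) :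
    ‖zetaC n ^ k - 1‖ = 2 * Real.sin (Real.pi * k / n) := by
  rw [zetaC_pow_eq_exp hn, norm_exp_theta_sub_one]
  have harg : 2 * Real.pi * k / n / 2 = Real.pi * k / n := by ring
  rw [harg, abs_of_nonneg]
  apply Real.sin_nonneg_of_nonneg_of_le_pi
  · positivity
  · rw [div_le_iff₀ (by positivity : (0:ℝ) < n)]
    have : (k : ℝ) ≤ n := by exact_mod_cast hk2.le
    nlinarith [Real.pi_pos]

lemma sin_lower {n : ℕ} (hn : 1 < n) {k : ℕ} (hk1 : 1 ≤ k) (hk2 : k < n) :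
    2 * ((min k (n - k) : ℕ) : ℝ) / n ≤ Real.sin (Real.pi * k / n) := by
  have hn0 : (0:ℝ) < n := by positivity
  by_cases h : 2 * k ≤ n
  · have hmin : (min k (n - k) : ℕ) = k := by omega
    rw [hmin]
    have h1 : Real.pi * k / n ≤ Real.pi / 2 := by
      rw [div_le_div_iff₀ hn0 two_pos]
      have : (2 : ℝ) * k ≤ n := by exact_mod_cast h
      nlinarith [Real.pi_pos]
    have h2 : (0:ℝ) ≤ Real.pi * k / n := by positivity
    have := Real.mul_le_sin h2 h1
    calc 2 * (k:ℝ) / n = 2 / Real.pi * (Real.pi * k / n) := by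
          field_simp
      _ ≤ Real.sin (Real.pi * k / n) := this
  · push_neg at h
    have hmin : (min k (n - k) : ℕ) = n - k := by omega
    rw [hmin]
    have hflip : Real.sin (Real.pi * k / n) = Real.sin (Real.pi * (n - k : ℕ) / n) := by
      rw [← Real.sin_pi_sub]
      congr 1
      have : ((n - k : ℕ) : ℝ) = (n : ℝ) - k := by
        push_cast [Nat.cast_sub hk2.le]; ring
      rw [this]
      field_simp
    rw [hflip]
    have hk1' : 1 ≤ n - k := by omega
    have hk2' : n - k < n := by omega
    have h1 : Real.pi * (n - k : ℕ) / n ≤ Real.pi / 2 := by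
      rw [div_le_div_iff₀ hn0 two_pos]
      have : (2 : ℝ) * ((n - k : ℕ) : ℝ) ≤ n := by
        have : 2 * (n - k) ≤ n := by omega
        exact_mod_cast this
      nlinarith [Real.pi_pos]
    have h2 : (0:ℝ) ≤ Real.pi * (n - k : ℕ) / n := by positivity
    have := Real.mul_le_sin h2 h1
    calc 2 * ((n - k : ℕ):ℝ) / n = 2 / Real.pi * (Real.pi * (n - k : ℕ) / n) := by
          field_simp
      _ ≤ Real.sin (Real.pi * (n - k : ℕ) / n) := this

lemma geom_bound {n : ℕ} (hn : 1 < n) {k : ℕ} (hk1 : 1 ≤ k) (hk2 : k < n) (L : ℕ) :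
    ‖∑ j ∈ range L, (zetaC n ^ k) ^ j‖ ≤ (n : ℝ) / (2 * ((min k (n - k) : ℕ) : ℝ)) := by
  have hmin1 : (1:ℝ) ≤ (min k (n - k) : ℕ) := by
    have : 1 ≤ min k (n - k) := by omega
    exact_mod_cast this
  have hminpos : (0:ℝ) < (min k (n - k) : ℕ) := by linarith
  have hn0 : (0:ℝ) < n := by positivity
  have hw : zetaC n ^ k ≠ 1 := zetaC_pow_ne_one hn (by omega) hk2
  rw [geom_sum_eq hw]
  have habs1 : ‖zetaC n ^ k‖ = 1 := by rw [norm_pow, abs_zetaC, one_pow]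
  have hnum : ‖(zetaC n ^ k) ^ L - 1‖ ≤ 2 := by
    calc ‖(zetaC n ^ k) ^ L - 1‖ ≤ ‖(zetaC n ^ k) ^ L‖ + ‖(1:ℂ)‖ := norm_sub_le _ _
      _ = 2 := by
          rw [norm_pow]
          show ‖zetaC n ^ k‖ ^ L + ‖(1:ℂ)‖ = 2
          rw [habs1, one_pow, norm_one]; norm_num
  have hden : 4 * ((min k (n - k) : ℕ) : ℝ) / n ≤ ‖zetaC n ^ k - 1‖ := by
    show _ ≤ ‖_‖
    rw [norm_zetaC_pow_sub_one hn hk1 hk2]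
    have := sin_lower hn hk1 hk2
    calc 4 * ((min k (n - k) : ℕ) : ℝ) / n = 2 * (2 * ((min k (n - k) : ℕ) : ℝ) / n) := by ring
      _ ≤ 2 * Real.sin (Real.pi * k / n) := by linarith
  have hdenpos : (0:ℝ) < ‖zetaC n ^ k - 1‖ := by
    have : (0:ℝ) < 4 * ((min k (n - k) : ℕ) : ℝ) / n := by positivity
    linarith
  rw [norm_div]
  calc ‖(zetaC n ^ k) ^ L - 1‖ / ‖zetaC n ^ k - 1‖ ≤ 2 / (4 * ((min k (n - k) : ℕ) : ℝ) / n) :=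
        div_le_div₀ (by norm_num) hnum (by positivity) hden
    _ = (n : ℝ) / (2 * ((min k (n - k) : ℕ) : ℝ)) := by
        field_simp
        ring

lemma S_bound {n : ℕ} (hn : 1 < n) (σ : Equiv.Perm (ZMod n)) {α : ℝ} (hα : 1 ≤ α)
    (hyp : ∀ m : ℕ, 1 ≤ m → m ≤ n → ∀ k : ℕ, 0 < k → ¬ (n ∣ k) →
        ‖∑ s ∈ Finset.range m, e ((k : ℝ) * (((σ (s : ZMod n)).val : ℝ)) / n)‖ ≤ α)
    {I : Finset (ZMod n)} (hI : IsInterval I) {k : ℕ} (hk1 : 1 ≤ k) (hk2 : k < n) :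
    ‖∑ t ∈ I.image σ, chiC n ((k : ZMod n) * t)‖ ≤ 2 * α := by
  haveI : NeZero n := ⟨by omega⟩
  have himg : ∑ t ∈ I.image σ, chiC n ((k : ZMod n) * t)
      = ∑ s ∈ I, chiC n ((k : ZMod n) * σ s) :=
    Finset.sum_image (fun x _ y _ h => σ.injective h)
  obtain ⟨a, len, hlen, hsum⟩ := interval_sum hI (fun s => chiC n ((k : ZMod n) * σ s))
  rw [himg, hsum]
  have hP := prefix_bound hn σ hα hyp hk1 hk2
  have hsplit : ∑ i ∈ range (a + len), chiC n ((k : ZMod n) * σ (i : ZMod n))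
      = ∑ i ∈ range a, chiC n ((k : ZMod n) * σ (i : ZMod n))
        + ∑ i ∈ range len, chiC n ((k : ZMod n) * σ ((a + i : ℕ) : ZMod n)) := by
    rw [Finset.sum_range_add]
  have : ∑ i ∈ range len, chiC n ((k : ZMod n) * σ ((a + i : ℕ) : ZMod n))
      = ∑ i ∈ range (a + len), chiC n ((k : ZMod n) * σ (i : ZMod n))
        - ∑ i ∈ range a, chiC n ((k : ZMod n) * σ (i : ZMod n)) := by
    rw [hsplit]; ring
  rw [this]
  calc ‖_ - _‖ ≤ ‖∑ i ∈ range (a + len), chiC n ((k : ZMod n) * σ (i : ZMod n))‖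
      + ‖∑ i ∈ range a, chiC n ((k : ZMod n) * σ (i : ZMod n))‖ := norm_sub_le _ _
    _ ≤ α + α := add_le_add (hP _) (hP _)
    _ = 2 * α := by ring

lemma J_bound {n : ℕ} (hn : 1 < n) {J : Finset (ZMod n)} (hJ : IsInterval J)
    {k : ℕ} (hk1 : 1 ≤ k) (hk2 : k < n) :
    ‖∑ u ∈ J, (starRingEnd ℂ) (chiC n ((k : ZMod n) * u))‖
      ≤ (n : ℝ) / (2 * ((min k (n - k) : ℕ) : ℝ)) := by
  haveI : NeZero n := ⟨by omega⟩
  rw [← map_sum, RCLike.norm_conj]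
  obtain ⟨b, L, hL, hsum⟩ := interval_sum hJ (fun u => chiC n ((k : ZMod n) * u))
  rw [hsum]
  have hterm : ∀ j : ℕ, chiC n ((k : ZMod n) * ((b + j : ℕ) : ZMod n))
      = chiC n ((k : ZMod n) * ((b : ℕ) : ZMod n)) * (zetaC n ^ k) ^ j := by
    intro j
    have h1 : (k : ZMod n) * ((b + j : ℕ) : ZMod n)
        = (k : ZMod n) * ((b : ℕ) : ZMod n) + (k : ZMod n) * ((j : ℕ) : ZMod n) := by
      push_cast; ring
    rw [h1, chiC_add (by omega)]
    congr 1
    have h2 : (k : ZMod n) * ((j : ℕ) : ZMod n) = ((k * j : ℕ) : ZMod n) := by push_cast; ring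
    rw [h2, chiC_natCast (by omega), pow_mul]
  rw [Finset.sum_congr rfl (fun j _ => hterm j), ← Finset.mul_sum]
  rw [norm_mul]
  have : ‖chiC n ((k : ZMod n) * ((b : ℕ) : ZMod n))‖ = 1 := abs_chiC _
  rw [this, one_mul]
  exact geom_bound hn hk1 hk2 L

lemma pair_bound {n : ℕ} (hn : 1 < n) (σ : Equiv.Perm (ZMod n)) {α : ℝ} (hα : 1 ≤ α)
    (hyp : ∀ m : ℕ, 1 ≤ m → m ≤ n → ∀ k : ℕ, 0 < k → ¬ (n ∣ k) →
        ‖∑ s ∈ Finset.range m, e ((k : ℝ) * (((σ (s : ZMod n)).val : ℝ)) / n)‖ ≤ α)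
    {I J : Finset (ZMod n)} (hI : IsInterval I) (hJ : IsInterval J) :
    discIn (I.image σ) J ≤ α * ∑ k ∈ Finset.Ico 1 n, 1 / ((min k (n - k) : ℕ) : ℝ) := by
  haveI : NeZero n := ⟨by omega⟩
  set S := I.image σ with hS
  have hn0 : (n : ℂ) ≠ 0 := by exact_mod_cast (by omega : n ≠ 0)
  have hg0 : (∑ t ∈ S, chiC n (((0:ℕ) : ZMod n) * t)) *
      (∑ u ∈ J, (starRingEnd ℂ) (chiC n (((0:ℕ) : ZMod n) * u))) = (S.card : ℂ) * J.card := by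
    have h1 : chiC n (0 : ZMod n) = 1 := by rw [chiC, ZMod.val_zero, pow_zero]
    simp [h1]
  have hsplit : ∑ k ∈ range n, (∑ t ∈ S, chiC n ((k : ZMod n) * t)) *
        (∑ u ∈ J, (starRingEnd ℂ) (chiC n ((k : ZMod n) * u)))
      = (S.card : ℂ) * J.card + ∑ k ∈ Finset.Ico 1 n, (∑ t ∈ S, chiC n ((k : ZMod n) * t)) *
        (∑ u ∈ J, (starRingEnd ℂ) (chiC n ((k : ZMod n) * u))) := by
    rw [Finset.range_eq_Ico, Finset.sum_eq_sum_Ico_succ_bot (by omega : 0 < n), hg0]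
  have hmain : (((S ∩ J).card : ℝ) - (S.card : ℝ) * (J.card : ℝ) / (n : ℝ) : ℝ) =
      ((1 / (n:ℂ)) * ∑ k ∈ Finset.Ico 1 n, (∑ t ∈ S, chiC n ((k : ZMod n) * t)) *
        (∑ u ∈ J, (starRingEnd ℂ) (chiC n ((k : ZMod n) * u)))).re := by
    have := card_inter_eq hn S J
    rw [hsplit] at this
    have h2 : (((S ∩ J).card : ℂ)) - (S.card : ℂ) * J.card / n
        = (1 / (n:ℂ)) * ∑ k ∈ Finset.Ico 1 n, (∑ t ∈ S, chiC n ((k : ZMod n) * t)) *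
          (∑ u ∈ J, (starRingEnd ℂ) (chiC n ((k : ZMod n) * u))) := by
      rw [this]; field_simp; ring
    have h3 : ((((S ∩ J).card : ℝ) - (S.card : ℝ) * (J.card : ℝ) / (n : ℝ) : ℝ) : ℂ)
        = (((S ∩ J).card : ℂ)) - (S.card : ℂ) * J.card / n := by push_cast; ring
    rw [← h2, ← h3, Complex.ofReal_re]
  have hnorm : discIn S J ≤ ‖(1 / (n:ℂ)) * ∑ k ∈ Finset.Ico 1 n,
      (∑ t ∈ S, chiC n ((k : ZMod n) * t)) *
        (∑ u ∈ J, (starRingEnd ℂ) (chiC n ((k : ZMod n) * u)))‖ := by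
    rw [discIn, hmain]
    exact Complex.abs_re_le_norm _
  refine hnorm.trans ?_
  rw [norm_mul]
  have h1n : ‖(1 / (n:ℂ))‖ = 1 / (n:ℝ) := by
    rw [norm_div, norm_one, Complex.norm_natCast]
  rw [h1n]
  calc (1 / (n:ℝ)) * ‖∑ k ∈ Finset.Ico 1 n, (∑ t ∈ S, chiC n ((k : ZMod n) * t)) *
        (∑ u ∈ J, (starRingEnd ℂ) (chiC n ((k : ZMod n) * u)))‖
      ≤ (1 / (n:ℝ)) * ∑ k ∈ Finset.Ico 1 n, ‖(∑ t ∈ S, chiC n ((k : ZMod n) * t)) *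
        (∑ u ∈ J, (starRingEnd ℂ) (chiC n ((k : ZMod n) * u)))‖ := by
        apply mul_le_mul_of_nonneg_left (norm_sum_le _ _) (by positivity)
    _ ≤ (1 / (n:ℝ)) * ∑ k ∈ Finset.Ico 1 n, (2 * α) * ((n : ℝ) / (2 * ((min k (n - k) : ℕ) : ℝ))) := by
        apply mul_le_mul_of_nonneg_left ?_ (by positivity)
        apply Finset.sum_le_sum
        intro k hk
        obtain ⟨hk1, hk2⟩ := Finset.mem_Ico.mp hk
        rw [norm_mul]
        exact mul_le_mul (S_bound hn σ hα hyp hI hk1 hk2) (J_bound hn hJ hk1 hk2)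
          (norm_nonneg _) (by linarith)
    _ = α * ∑ k ∈ Finset.Ico 1 n, 1 / ((min k (n - k) : ℕ) : ℝ) := by
        rw [Finset.mul_sum, Finset.mul_sum]
        refine Finset.sum_congr rfl fun k hk => ?_
        obtain ⟨hk1, hk2⟩ := Finset.mem_Ico.mp hk
        have hmpos : (0:ℝ) < ((min k (n - k) : ℕ) : ℝ) := by
          have : 1 ≤ min k (n - k) := by omega
          exact_mod_cast Nat.lt_of_lt_of_le Nat.zero_lt_one this
        have hnpos : (0:ℝ) < (n:ℝ) := by positivity
        field_simp

lemma sum_inv_min_le {n : ℕ} (hn : 1 < n) :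
    ∑ k ∈ Finset.Ico 1 n, 1 / ((min k (n - k) : ℕ) : ℝ) ≤ 2 * (1 + Real.log n) := by
  have step1 : ∑ k ∈ Finset.Ico 1 n, 1 / ((min k (n - k) : ℕ) : ℝ)
      ≤ ∑ k ∈ Finset.Ico 1 n, (1 / (k : ℝ) + 1 / ((n - k : ℕ) : ℝ)) := by
    apply Finset.sum_le_sum
    intro k hk
    obtain ⟨hk1, hk2⟩ := Finset.mem_Ico.mp hk
    have hkpos : (0:ℝ) < (k:ℝ) := by exact_mod_cast hk1
    have hnkpos : (0:ℝ) < ((n - k : ℕ):ℝ) := by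
      have : 0 < n - k := by omega
      exact_mod_cast this
    rcases min_choice k (n - k) with h | h <;> rw [h]
    · have : (0:ℝ) ≤ 1 / ((n - k : ℕ):ℝ) := by positivity
      linarith
    · have : (0:ℝ) ≤ 1 / (k:ℝ) := by positivity
      linarith
  have step2 : ∑ k ∈ Finset.Ico 1 n, 1 / ((n - k : ℕ) : ℝ)
      = ∑ k ∈ Finset.Ico 1 n, 1 / (k : ℝ) := by
    refine Finset.sum_nbij' (fun k => n - k) (fun k => n - k) ?_ ?_ ?_ ?_ ?_
    · intro k hk; obtain ⟨h1, h2⟩ := Finset.mem_Ico.mp hk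
      show n - k ∈ Finset.Ico 1 n
      exact Finset.mem_Ico.mpr ⟨by omega, by omega⟩
    · intro k hk; obtain ⟨h1, h2⟩ := Finset.mem_Ico.mp hk
      show n - k ∈ Finset.Ico 1 n
      exact Finset.mem_Ico.mpr ⟨by omega, by omega⟩
    · intro k hk; obtain ⟨h1, h2⟩ := Finset.mem_Ico.mp hk
      show n - (n - k) = k
      omega
    · intro k hk; obtain ⟨h1, h2⟩ := Finset.mem_Ico.mp hk
      show n - (n - k) = k
      omega
    · intro k hk; rfl
  have step3 : ∑ k ∈ Finset.Ico 1 n, 1 / (k : ℝ) ≤ 1 + Real.log n := by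
    have hIco : Finset.Ico 1 n = Finset.Icc 1 (n - 1) := by
      rw [← Finset.Ico_add_one_right_eq_Icc]
      congr 1
      omega
    have hharm : ∑ k ∈ Finset.Ico 1 n, 1 / (k : ℝ) = ((harmonic (n-1) : ℚ) : ℝ) := by
      rw [hIco, harmonic_eq_sum_Icc]
      push_cast
      exact Finset.sum_congr rfl fun k _ => (one_div _)
    rw [hharm]
    refine (harmonic_le_one_add_log (n-1)).trans ?_
    have : Real.log ((n-1 : ℕ) : ℝ) ≤ Real.log n := by
      apply Real.log_le_log (by exact_mod_cast (by omega : 0 < n - 1))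
      exact_mod_cast (by omega : n - 1 ≤ n)
    linarith
  calc ∑ k ∈ Finset.Ico 1 n, 1 / ((min k (n - k) : ℕ) : ℝ)
      ≤ ∑ k ∈ Finset.Ico 1 n, (1 / (k : ℝ) + 1 / ((n - k : ℕ) : ℝ)) := step1
    _ = ∑ k ∈ Finset.Ico 1 n, 1 / (k : ℝ) + ∑ k ∈ Finset.Ico 1 n, 1 / ((n - k : ℕ) : ℝ) :=
        Finset.sum_add_distrib
    _ = 2 * ∑ k ∈ Finset.Ico 1 n, 1 / (k : ℝ) := by rw [step2]; ring
    _ ≤ 2 * (1 + Real.log n) := by linarith [step3]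

/-- Erdős–Turán for permutations, first form: if all the incomplete exponential
sums `Σ_{s=0}^{m-1} e(k σ(s)/n)` are bounded by `α`, then `D(σ) ≤ C₀ α log n`. -/
theorem stmt_4 :
    ∃ C₀ : ℝ, ∀ (n : ℕ), 1 < n → ∀ (σ : Equiv.Perm (ZMod n)) (α : ℝ), 1 ≤ α →
      (∀ m : ℕ, 1 ≤ m → m ≤ n → ∀ k : ℕ, 0 < k → ¬ (n ∣ k) →
        ‖∑ s ∈ Finset.range m, e ((k : ℝ) * (((σ (s : ZMod n)).val : ℝ)) / n)‖ ≤ α) →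
      disc σ ≤ C₀ * α * Real.log n := by
  refine ⟨6, ?_⟩
  intro n hn σ α hα hyp
  have hlog2 : (0.6931471803 : ℝ) < Real.log 2 := Real.log_two_gt_d9
  have hlogn : Real.log 2 ≤ Real.log n := by
    apply Real.log_le_log (by norm_num)
    exact_mod_cast (by omega : 2 ≤ n)
  have hlogpos : (0:ℝ) < Real.log n := by linarith
  apply Real.sSup_le
  · rintro d ⟨I, J, hI, hJ, rfl⟩
    calc discIn (I.image σ) J
        ≤ α * ∑ k ∈ Finset.Ico 1 n, 1 / ((min k (n - k) : ℕ) : ℝ) :=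
          pair_bound hn σ hα hyp hI hJ
      _ ≤ α * (2 * (1 + Real.log n)) :=
          mul_le_mul_of_nonneg_left (sum_inv_min_le hn) (by linarith)
      _ ≤ 6 * α * Real.log n := by
          have h1 : (0:ℝ) ≤ α * (4 * Real.log n - 2) :=
            mul_nonneg (by linarith) (by linarith)
          nlinarith
  · have : (0:ℝ) ≤ 6 * α := by linarith
    exact mul_nonneg this hlogpos.le
end

section
/- There is an absolute constant C₁ with the following property. Let n > 1, let σ be a permutation of Z_n (identified with {0,1,…,n−1}), and let β ≥ 1 be a real number such that |Σ_{s=0}^{n−1} e((k·σ(s) + a·s)/n)| ≤ β for every integer a and every positive integer k not divisible by n. Then D(σ) ≤ C₁ · β · (log n)². -/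
open Finset

section AuxET
open Complex

noncomputable def om (n : ℕ) : ℂ := Complex.exp (2 * Real.pi * Complex.I / n)

lemma om_ne_zero (n : ℕ) : om n ≠ 0 := Complex.exp_ne_zero _

lemma om_eq (n : ℕ) : om n = Complex.exp (((2*Real.pi/n : ℝ) : ℂ) * Complex.I) := by
  rw [om]; congr 1; push_cast; ring

lemma norm_om (n : ℕ) : ‖om n‖ = 1 := by
  rw [om_eq, Complex.norm_exp_ofReal_mul_I]

lemma norm_om_zpow (n : ℕ) (m : ℤ) : ‖om n ^ m‖ = 1 := by
  rw [norm_zpow, norm_om, one_zpow]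

lemma om_zpow_eq_one (n : ℕ) (hn : 1 < n) (d : ℤ) (h : (n:ℤ) ∣ d) : om n ^ d = 1 :=
  ((Complex.isPrimitiveRoot_exp n (by omega)).zpow_eq_one_iff_dvd d).2 h

lemma om_zpow_ne_one (n : ℕ) (hn : 1 < n) (d : ℤ) (h : ¬ (n:ℤ) ∣ d) : om n ^ d ≠ 1 := by
  intro hc; exact h (((Complex.isPrimitiveRoot_exp n (by omega)).zpow_eq_one_iff_dvd d).1 (by rw [← hc]; rfl))

lemma psi_congr (n : ℕ) (hn : 1 < n) {a b : ℤ} (h : (a : ZMod n) = (b : ZMod n)) :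
    om n ^ a = om n ^ b := by
  have hd : (n:ℤ) ∣ a - b := by
    rwa [← ZMod.intCast_zmod_eq_zero_iff_dvd, Int.cast_sub, sub_eq_zero]
  have h1 : om n ^ (a - b) = 1 := om_zpow_eq_one n hn _ hd
  calc om n ^ a = om n ^ (b + (a - b)) := by ring_nf
    _ = om n ^ b * om n ^ (a - b) := zpow_add₀ (om_ne_zero n) _ _
    _ = om n ^ b := by rw [h1, mul_one]

lemma orth (n : ℕ) (hn : 1 < n) (d : ℤ) :
    ∑ a ∈ range n, om n ^ ((a : ℤ) * d) = if (d : ZMod n) = 0 then (n : ℂ) else 0 := by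
  have hrw : ∀ a : ℕ, om n ^ ((a:ℤ) * d) = (om n ^ d) ^ a := fun a => by
    rw [mul_comm, zpow_mul, zpow_natCast]
  simp only [hrw]
  split_ifs with hd
  · have : om n ^ d = 1 := om_zpow_eq_one n hn d (by rwa [← ZMod.intCast_zmod_eq_zero_iff_dvd])
    simp [this]
  · have h1 : om n ^ d ≠ 1 := om_zpow_ne_one n hn d (fun hc => hd ((ZMod.intCast_zmod_eq_zero_iff_dvd d n).2 hc))
    rw [geom_sum_eq h1]
    have : (om n ^ d) ^ n = 1 := by
      rw [← zpow_natCast, ← zpow_mul, mul_comm]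
      exact om_zpow_eq_one n hn _ ⟨d, rfl⟩
    rw [this, sub_self, zero_div]

lemma core (n : ℕ) (hn : 1 < n) (x u : ZMod n) :
    ∑ a ∈ range n, om n ^ ((a:ℤ) * (x.val:ℤ)) * om n ^ (-((a:ℤ) * (u.val:ℤ)))
      = if x = u then (n:ℂ) else 0 := by
  haveI : NeZero n := ⟨by omega⟩
  have hrw : ∀ a : ℕ, om n ^ ((a:ℤ) * (x.val:ℤ)) * om n ^ (-((a:ℤ) * (u.val:ℤ)))
      = om n ^ ((a:ℤ) * ((x.val:ℤ) - (u.val:ℤ))) := fun a => by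
    rw [← zpow_add₀ (om_ne_zero n)]; ring_nf
  simp only [hrw]
  rw [orth n hn]
  congr 1
  rw [eq_iff_iff]
  constructor
  · intro h
    have : ((x.val:ℤ) : ZMod n) = ((u.val:ℤ) : ZMod n) := by
      rwa [← sub_eq_zero, ← Int.cast_sub]
    simpa [ZMod.natCast_val, ZMod.intCast_cast] using this
  · rintro rfl; simp

lemma exp_two_sub_one (φ : ℂ) : Complex.exp (2*φ*Complex.I) - 1
    = Complex.exp (φ*Complex.I) * (2*Complex.I*Complex.sin φ) := by
  rw [Complex.sin]
  have h2 : Complex.exp (2*φ*I) = Complex.exp (φ*I) * Complex.exp (φ*I) := by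
    rw [← Complex.exp_add]; ring_nf
  have h3 : Complex.exp (φ*I) * Complex.exp (-φ*I) = 1 := by
    rw [← Complex.exp_add]; ring_nf; exact Complex.exp_zero
  have hI : (I:ℂ)^2 = -1 := Complex.I_sq
  linear_combination h2 + h3 - Complex.exp (φ*I) * (Complex.exp (-φ*I) - Complex.exp (φ*I)) * hI

lemma norm_om_pow_sub_one (n : ℕ) (hn : 1 < n) (h : ℕ) (h1 : 1 ≤ h) (h2 : h < n) :
    4 * min (h:ℝ) ((n:ℝ) - (h:ℝ)) / n ≤ ‖om n ^ (h:ℤ) - 1‖ := by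
  have hn0 : (0:ℝ) < n := by positivity
  have key : om n ^ (h:ℤ) = Complex.exp (2 * ((Real.pi * h / n : ℝ):ℂ) * Complex.I) := by
    rw [om, ← Complex.exp_int_mul]
    congr 1
    push_cast
    field_simp
  set φ : ℝ := Real.pi * h / n with hφ
  have hnorm : ‖om n ^ (h:ℤ) - 1‖ = 2 * |Real.sin φ| := by
    rw [key, exp_two_sub_one]
    rw [norm_mul]
    have e1 : ‖Complex.exp ((φ:ℂ) * I)‖ = 1 := by
      rw [Complex.norm_exp_ofReal_mul_I]
    rw [e1, one_mul, ← Complex.ofReal_sin]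
    rw [show (2*I*((Real.sin φ : ℝ):ℂ)) = ((2 * Real.sin φ : ℝ):ℂ) * I by push_cast; ring]
    rw [norm_mul, Complex.norm_I, mul_one,
      Complex.norm_real, Real.norm_eq_abs, abs_mul]
    simp
  rw [hnorm]
  have hsin : 2 * min (h:ℝ) ((n:ℝ) - (h:ℝ)) / n ≤ Real.sin φ := by
    rcases le_total (h:ℝ) ((n:ℝ) - h) with hc | hc
    · have hm : min (h:ℝ) ((n:ℝ) - (h:ℝ)) = (h:ℝ) := min_eq_left hc
      have hφ2 : φ ≤ Real.pi / 2 := by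
        rw [hφ, div_le_div_iff₀ hn0 two_pos]
        nlinarith [Real.pi_pos]
      have hφ0 : 0 ≤ φ := by positivity
      have := Real.mul_le_sin hφ0 hφ2
      calc 2 * min (h:ℝ) ((n:ℝ) - (h:ℝ)) / n = 2 / Real.pi * φ := by
            rw [hm, hφ]; field_simp
        _ ≤ Real.sin φ := this
    · have hm : min (h:ℝ) ((n:ℝ) - (h:ℝ)) = (n:ℝ) - h := min_eq_right hc
      have h2h : (n:ℝ) ≤ 2*h := by linarith
      have hφ2 : Real.pi - φ ≤ Real.pi / 2 := by
        have : Real.pi / 2 ≤ φ := by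
          rw [hφ, div_le_div_iff₀ two_pos hn0]
          nlinarith [Real.pi_pos]
        linarith
      have hφ0 : 0 ≤ Real.pi - φ := by
        have hhn : (h:ℝ) ≤ n := by exact_mod_cast h2.le
        have : φ ≤ Real.pi := by
          rw [hφ, div_le_iff₀ hn0]
          nlinarith [Real.pi_pos]
        linarith
      have := Real.mul_le_sin hφ0 hφ2
      calc 2 * min (h:ℝ) ((n:ℝ) - (h:ℝ)) / n = 2 / Real.pi * (Real.pi - φ) := by
            rw [hm, hφ]; field_simp
        _ ≤ Real.sin (Real.pi - φ) := this
        _ = Real.sin φ := Real.sin_pi_sub φ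
  have habs : 2 * min (h:ℝ) ((n:ℝ) - (h:ℝ)) / n ≤ |Real.sin φ| := hsin.trans (le_abs_self _)
  calc 4 * min (h:ℝ) ((n:ℝ) - (h:ℝ)) / n = 2 * (2 * min (h:ℝ) ((n:ℝ) - (h:ℝ)) / n) := by ring
    _ ≤ 2 * |Real.sin φ| := by linarith

lemma geom_bound_s5 {z : ℂ} (hz : ‖z‖ = 1) (h1 : z ≠ 1) (L : ℕ) :
    ‖∑ i ∈ range L, z ^ i‖ ≤ 2 / ‖z - 1‖ := by
  rw [geom_sum_eq h1, norm_div]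
  have hpos : 0 < ‖z - 1‖ := norm_pos_iff.2 (sub_ne_zero.2 h1)
  gcongr
  calc ‖z^L - 1‖ ≤ ‖z^L‖ + ‖(1:ℂ)‖ := norm_sub_le _ _
    _ = 2 := by rw [norm_pow, hz, one_pow, norm_one]; norm_num

lemma interval_inj (n : ℕ) (hn : 1 < n) (b len : ℕ) (hlen : len ≤ n) :
    Set.InjOn (fun i : ℕ => ((b + i : ℕ) : ZMod n)) (range len) := by
  haveI : NeZero n := ⟨by omega⟩
  intro i hi j hj hij
  simp only [mem_coe, mem_range] at hi hj
  simp only [Nat.cast_add] at hij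
  have : (i : ZMod n) = (j : ZMod n) := by
    have := add_left_cancel hij
    exact this
  have hv := congrArg ZMod.val this
  rwa [ZMod.val_natCast, ZMod.val_natCast, Nat.mod_eq_of_lt (lt_of_lt_of_le hi hlen),
    Nat.mod_eq_of_lt (lt_of_lt_of_le hj hlen)] at hv

lemma interval_normalize {n : ℕ} (hn : 1 < n) {I : Finset (ZMod n)} (hI : IsInterval I) :
    ∃ b len : ℕ, len ≤ n ∧ I = (range len).image (fun i : ℕ => ((b + i : ℕ) : ZMod n)) := by
  obtain ⟨b, len, rfl⟩ := hI
  rcases le_or_gt len n with hle | hlt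
  · exact ⟨b, len, hle, rfl⟩
  refine ⟨b, n, le_rfl, ?_⟩
  apply Finset.Subset.antisymm
  · intro x hx
    simp only [mem_image, mem_range] at hx ⊢
    obtain ⟨i, hi, rfl⟩ := hx
    refine ⟨i % n, Nat.mod_lt _ (by omega), ?_⟩
    push_cast [Nat.cast_add]
    rw [ZMod.natCast_mod]
  · intro x hx
    simp only [mem_image, mem_range] at hx ⊢
    obtain ⟨i, hi, rfl⟩ := hx
    exact ⟨i, by omega, rfl⟩

lemma interval_sum_eq (n : ℕ) (hn : 1 < n) (b len : ℕ) (hlen : len ≤ n) (c : ℤ) :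
    ∑ u ∈ (range len).image (fun i : ℕ => ((b + i : ℕ) : ZMod n)), om n ^ (c * (u.val:ℤ))
      = om n ^ (c * b) * ∑ i ∈ range len, (om n ^ c) ^ i := by
  haveI : NeZero n := ⟨by omega⟩
  rw [Finset.sum_image (interval_inj n hn b len hlen)]
  rw [mul_sum]
  refine Finset.sum_congr rfl fun i hi => ?_
  have hcongr : om n ^ (c * ((((b + i : ℕ) : ZMod n)).val : ℤ)) = om n ^ (c * ((b:ℤ) + i)) := by
    apply psi_congr n hn
    push_cast [ZMod.natCast_val]
    ring
  rw [hcongr]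
  rw [show c * ((b:ℤ) + i) = c * b + c * i by ring, zpow_add₀ (om_ne_zero n)]
  congr 1
  rw [zpow_mul, zpow_natCast]

lemma harm_bound (m : ℕ) (hm : 1 ≤ m) : ∑ h ∈ Icc 1 m, (1 / (h:ℝ)) ≤ 1 + Real.log m := by
  have h1 : (harmonic m : ℝ) ≤ 1 + Real.log m := harmonic_le_one_add_log m
  have h2 : (harmonic m : ℝ) = ∑ h ∈ Icc 1 m, (1 / (h:ℝ)) := by
    rw [harmonic_eq_sum_Icc]
    push_cast
    simp [one_div]
  linarith

lemma completion_identity (n : ℕ) [NeZero n] (hn : 1 < n) (I : Finset (ZMod n)) (f : ZMod n → ℂ) :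
    (n:ℂ) * ∑ u ∈ I, f u
      = ∑ a ∈ range n, (∑ x : ZMod n, f x * om n ^ ((a:ℤ) * ((x.val:ℕ):ℤ)))
          * (∑ u ∈ I, om n ^ (-((a:ℤ) * ((u.val:ℕ):ℤ)))) := by
  haveI : NeZero n := ⟨by omega⟩
  have step1 : ∀ a : ℕ, (∑ x : ZMod n, f x * om n ^ ((a:ℤ) * ((x.val:ℕ):ℤ)))
      * (∑ u ∈ I, om n ^ (-((a:ℤ) * ((u.val:ℕ):ℤ))))
      = ∑ x : ZMod n, ∑ u ∈ I, f x * (om n ^ ((a:ℤ) * ((x.val:ℕ):ℤ)) * om n ^ (-((a:ℤ) * ((u.val:ℕ):ℤ)))) := by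
    intro a
    rw [Finset.sum_mul_sum]
    refine Finset.sum_congr rfl fun x _ => Finset.sum_congr rfl fun u _ => by ring
  calc (n:ℂ) * ∑ u ∈ I, f u = ∑ u ∈ I, f u * (n:ℂ) := by rw [← Finset.sum_mul]; ring
    _ = ∑ u ∈ I, ∑ x : ZMod n, f x * (if x = u then (n:ℂ) else 0) := by
        refine Finset.sum_congr rfl fun u _ => ?_
        rw [Finset.sum_congr rfl (fun x _ => by rw [mul_ite, mul_zero])]
        rw [Finset.sum_ite_eq' Finset.univ u (fun x => f x * (n:ℂ))]
        simp
    _ = ∑ x : ZMod n, ∑ u ∈ I, f x * (if x = u then (n:ℂ) else 0) := Finset.sum_comm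
    _ = ∑ x : ZMod n, ∑ u ∈ I, f x * ∑ a ∈ range n,
          om n ^ ((a:ℤ) * ((x.val:ℕ):ℤ)) * om n ^ (-((a:ℤ) * ((u.val:ℕ):ℤ))) := by
        refine Finset.sum_congr rfl fun x _ => Finset.sum_congr rfl fun u _ => by
          rw [core n hn x u]
    _ = ∑ x : ZMod n, ∑ u ∈ I, ∑ a ∈ range n,
          f x * (om n ^ ((a:ℤ) * ((x.val:ℕ):ℤ)) * om n ^ (-((a:ℤ) * ((u.val:ℕ):ℤ)))) := by
        refine Finset.sum_congr rfl fun x _ => Finset.sum_congr rfl fun u _ => ?_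
        rw [Finset.mul_sum]
    _ = ∑ x : ZMod n, ∑ a ∈ range n, ∑ u ∈ I,
          f x * (om n ^ ((a:ℤ) * ((x.val:ℕ):ℤ)) * om n ^ (-((a:ℤ) * ((u.val:ℕ):ℤ)))) := by
        refine Finset.sum_congr rfl fun x _ => Finset.sum_comm
    _ = ∑ a ∈ range n, ∑ x : ZMod n, ∑ u ∈ I,
          f x * (om n ^ ((a:ℤ) * ((x.val:ℕ):ℤ)) * om n ^ (-((a:ℤ) * ((u.val:ℕ):ℤ)))) := Finset.sum_comm
    _ = _ := by
        refine Finset.sum_congr rfl fun a _ => (step1 a).symm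

lemma inter_identity (n : ℕ) (hn : 1 < n) (S T : Finset (ZMod n)) :
    ∑ a ∈ range n, (∑ x ∈ S, om n ^ ((a:ℤ) * ((x.val:ℕ):ℤ)))
        * (∑ y ∈ T, om n ^ (-((a:ℤ) * ((y.val:ℕ):ℤ))))
      = (n:ℂ) * ((S ∩ T).card : ℂ) := by
  haveI : NeZero n := ⟨by omega⟩
  have : ∀ a : ℕ, (∑ x ∈ S, om n ^ ((a:ℤ) * ((x.val:ℕ):ℤ)))
      * (∑ y ∈ T, om n ^ (-((a:ℤ) * ((y.val:ℕ):ℤ))))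
      = ∑ x ∈ S, ∑ y ∈ T, om n ^ ((a:ℤ) * ((x.val:ℕ):ℤ)) * om n ^ (-((a:ℤ) * ((y.val:ℕ):ℤ))) :=
    fun a => Finset.sum_mul_sum _ _ _ _
  rw [Finset.sum_congr rfl fun a _ => this a]
  rw [Finset.sum_comm]
  rw [Finset.sum_congr rfl fun x _ => Finset.sum_comm]
  have : ∀ x ∈ S, ∀ y ∈ T, ∑ a ∈ range n,
      om n ^ ((a:ℤ) * ((x.val:ℕ):ℤ)) * om n ^ (-((a:ℤ) * ((y.val:ℕ):ℤ)))
      = if x = y then (n:ℂ) else 0 := fun x _ y _ => core n hn x y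
  rw [Finset.sum_congr rfl fun x hx => Finset.sum_congr rfl fun y hy => this x hx y hy]
  have : ∀ x ∈ S, (∑ y ∈ T, if x = y then (n:ℂ) else 0) = if x ∈ T then (n:ℂ) else 0 :=
    fun x _ => Finset.sum_ite_eq T x (fun _ => (n:ℂ))
  rw [Finset.sum_congr rfl this, Finset.sum_ite_mem]
  simp [mul_comm]

lemma norm_om_neg_sub_one (n : ℕ) (c : ℤ) : ‖om n ^ (-c) - 1‖ = ‖om n ^ c - 1‖ := by
  have h1 : om n ^ (-c) - 1 = om n ^ (-c) * (1 - om n ^ c) := by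
    rw [mul_sub, mul_one, ← zpow_add₀ (om_ne_zero n), neg_add_cancel, zpow_zero]
  rw [h1, norm_mul, norm_om_zpow, one_mul, norm_sub_rev]

lemma interval_norm_bound (n : ℕ) (hn : 1 < n) (b len : ℕ) (hlen : len ≤ n)
    (a : ℕ) (ha1 : 1 ≤ a) (ha2 : a < n) (c : ℤ) (hc : c = (a:ℤ) ∨ c = -(a:ℤ)) :
    ‖∑ u ∈ (range len).image (fun i : ℕ => ((b + i : ℕ) : ZMod n)), om n ^ (c * ((u.val:ℕ):ℤ))‖
      ≤ (n:ℝ) / (2 * min (a:ℝ) ((n:ℝ) - (a:ℝ))) := by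
  have hnd : ¬ (n:ℤ) ∣ c := by
    rcases hc with rfl | rfl
    · intro hd
      have := Int.le_of_dvd (by exact_mod_cast ha1) hd
      omega
    · rw [Int.dvd_neg]
      intro hd
      have := Int.le_of_dvd (by exact_mod_cast ha1) hd
      omega
  have hne : om n ^ c ≠ 1 := om_zpow_ne_one n hn c hnd
  have hmin0 : (0:ℝ) < min (a:ℝ) ((n:ℝ) - (a:ℝ)) := by
    have h1 : (1:ℝ) ≤ (a:ℝ) := by exact_mod_cast ha1
    have h2 : (a:ℝ) + 1 ≤ (n:ℝ) := by exact_mod_cast ha2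
    simp only [lt_min_iff]; constructor <;> linarith
  have hlow : 4 * min (a:ℝ) ((n:ℝ) - (a:ℝ)) / n ≤ ‖om n ^ c - 1‖ := by
    rcases hc with rfl | rfl
    · exact norm_om_pow_sub_one n hn a ha1 ha2
    · rw [norm_om_neg_sub_one]; exact norm_om_pow_sub_one n hn a ha1 ha2
  rw [interval_sum_eq n hn b len hlen c, norm_mul, norm_om_zpow, one_mul]
  calc ‖∑ i ∈ range len, (om n ^ c) ^ i‖ ≤ 2 / ‖om n ^ c - 1‖ :=
        geom_bound_s5 (norm_om_zpow n c) hne len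
    _ ≤ 2 / (4 * min (a:ℝ) ((n:ℝ) - (a:ℝ)) / n) := by
        apply div_le_div_of_nonneg_left (by norm_num) (by positivity) hlow
    _ = (n:ℝ) / (2 * min (a:ℝ) ((n:ℝ) - (a:ℝ))) := by
        field_simp
        ring

lemma min_sum (n : ℕ) (hn : 1 < n) :
    ∑ a ∈ Icc 1 (n-1), (1 / min (a:ℝ) ((n:ℝ) - (a:ℝ))) ≤ 2 * (1 + Real.log n) := by
  have hterm : ∀ a ∈ Icc 1 (n-1), (1 / min (a:ℝ) ((n:ℝ) - (a:ℝ))) ≤ 1/(a:ℝ) + 1/((n:ℝ)-(a:ℝ)) := by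
    intro a ha
    simp only [mem_Icc] at ha
    have h1 : (1:ℝ) ≤ (a:ℝ) := by exact_mod_cast ha.1
    have h2 : (a:ℝ) + 1 ≤ (n:ℝ) := by
      have : a + 1 ≤ n := by omega
      exact_mod_cast this
    rcases min_cases (a:ℝ) ((n:ℝ) - (a:ℝ)) with ⟨hm, _⟩ | ⟨hm, _⟩ <;> rw [hm]
    · have hp : (0:ℝ) < (n:ℝ)-(a:ℝ) := by linarith
      have : 0 ≤ 1/((n:ℝ)-(a:ℝ)) := by positivity
      linarith
    · have : 0 ≤ 1/(a:ℝ) := by positivity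
      linarith
  calc ∑ a ∈ Icc 1 (n-1), (1 / min (a:ℝ) ((n:ℝ) - (a:ℝ)))
      ≤ ∑ a ∈ Icc 1 (n-1), (1/(a:ℝ) + 1/((n:ℝ)-(a:ℝ))) := Finset.sum_le_sum hterm
    _ = ∑ a ∈ Icc 1 (n-1), 1/(a:ℝ) + ∑ a ∈ Icc 1 (n-1), 1/((n:ℝ)-(a:ℝ)) := Finset.sum_add_distrib
    _ = ∑ a ∈ Icc 1 (n-1), 1/(a:ℝ) + ∑ a ∈ Icc 1 (n-1), 1/(a:ℝ) := by
        congr 1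
        apply Finset.sum_nbij' (fun a => n - a) (fun a => n - a)
        · intro a ha; simp only [mem_Icc] at ha ⊢; omega
        · intro a ha; simp only [mem_Icc] at ha ⊢; omega
        · intro a ha; simp only [mem_Icc] at ha; omega
        · intro a ha; simp only [mem_Icc] at ha; omega
        · intro a ha
          simp only [mem_Icc] at ha
          congr 1
          have : ((n - a : ℕ):ℝ) = (n:ℝ) - (a:ℝ) := by
            have : a ≤ n := by omega
            push_cast [this]
            ring
          rw [this]
    _ = 2 * ∑ a ∈ Icc 1 (n-1), 1/(a:ℝ) := by ring
    _ ≤ 2 * (1 + Real.log (n-1:ℕ)) := by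
        have := harm_bound (n-1) (by omega)
        linarith
    _ ≤ 2 * (1 + Real.log n) := by
        have h1 : ((n-1:ℕ):ℝ) ≤ (n:ℝ) := by
          have : (n-1:ℕ) ≤ n := by omega
          exact_mod_cast this
        have h0 : (0:ℝ) < ((n-1:ℕ):ℝ) := by
          have : 1 ≤ n - 1 := by omega
          exact_mod_cast lt_of_lt_of_le zero_lt_one (by exact_mod_cast this)
        have := Real.log_le_log h0 h1
        linarith

lemma complete_eq (n : ℕ) [NeZero n] (hn : 1 < n) (σ : Equiv.Perm (ZMod n)) (k : ℕ) (a : ℤ) :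
    ∑ x : ZMod n, om n ^ ((k:ℤ) * (((σ x).val:ℕ):ℤ)) * om n ^ (a * ((x.val:ℕ):ℤ))
      = ∑ s ∈ range n, e (((k : ℝ) * (((σ (s : ZMod n)).val : ℝ)) + (a : ℝ) * (s : ℝ)) / n) := by
  rw [← Finset.sum_nbij' (i := fun (x : ZMod n) => x.val) (j := fun (s : ℕ) => (s : ZMod n))
    (hi := fun x _ => by simp [mem_range, ZMod.val_lt])
    (hj := fun s _ => Finset.mem_univ _)
    (left_neg := fun x _ => by simp [ZMod.natCast_val, ZMod.cast_id])
    (right_neg := fun s hs => by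
      simp only [mem_range] at hs
      exact ZMod.val_cast_of_lt hs)
    (h := ?_)]
  intro x _
  rw [← zpow_add₀ (om_ne_zero n)]
  have hxv : ((x.val : ℕ) : ZMod n) = x := by simp [ZMod.natCast_val, ZMod.cast_id]
  rw [hxv]
  rw [om, ← Complex.exp_int_mul, e]
  congr 1
  push_cast
  have hn0 : (n:ℂ) ≠ 0 := by
    exact_mod_cast Nat.cast_ne_zero.mpr (by omega)
  field_simp

lemma range_split (n : ℕ) (hn : 1 < n) : range n = insert 0 (Icc 1 (n-1)) := by
  ext x; simp only [mem_range, mem_insert, mem_Icc]; omega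

lemma complete_bound (n : ℕ) [NeZero n] (hn : 1 < n) (σ : Equiv.Perm (ZMod n)) (β : ℝ)
    (hβ : 1 ≤ β)
    (hyp : ∀ (a : ℤ) (k : ℕ), 0 < k → ¬ (n ∣ k) →
      ‖∑ s ∈ range n, e (((k : ℝ) * (((σ (s : ZMod n)).val : ℝ)) + (a : ℝ) * (s : ℝ)) / n)‖ ≤ β)
    (b len : ℕ) (hlen : len ≤ n) (k : ℕ) (hk1 : 1 ≤ k) (hk2 : k < n) :
    ‖∑ u ∈ (range len).image (fun i : ℕ => ((b + i : ℕ) : ZMod n)),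
        om n ^ ((k:ℤ) * (((σ u).val:ℕ):ℤ))‖ ≤ β * (2 + Real.log n) := by
  set I := (range len).image (fun i : ℕ => ((b + i : ℕ) : ZMod n)) with hI
  set f : ZMod n → ℂ := fun x => om n ^ ((k:ℤ) * (((σ x).val:ℕ):ℤ)) with hf
  have hid := completion_identity n hn I f
  have hn0 : (0:ℝ) < n := by positivity
  -- norm of each complete sum ≤ β
  have hC : ∀ a : ℕ, ‖∑ x : ZMod n, f x * om n ^ ((a:ℤ) * ((x.val:ℕ):ℤ))‖ ≤ β := by
    intro a
    rw [hf]
    simp only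
    rw [complete_eq n hn σ k (a:ℤ)]
    exact hyp (a:ℤ) k (by omega) (fun hd => absurd (Nat.le_of_dvd (by omega) hd) (by omega))
  -- norms of the interval sums
  have hF0 : ‖∑ u ∈ I, om n ^ (-((0:ℤ) * ((u.val:ℕ):ℤ)))‖ ≤ (n:ℝ) := by
    simp only [zero_mul, neg_zero, zpow_zero]
    rw [Finset.sum_const, nsmul_eq_mul, mul_one]
    rw [Complex.norm_natCast]
    calc (I.card : ℝ) ≤ ((range len).card : ℝ) := by
          exact_mod_cast Finset.card_image_le
      _ = len := by rw [card_range]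
      _ ≤ n := by exact_mod_cast hlen
  have hFa : ∀ a ∈ Icc 1 (n-1), ‖∑ u ∈ I, om n ^ (-((a:ℤ) * ((u.val:ℕ):ℤ)))‖
      ≤ (n:ℝ) / (2 * min (a:ℝ) ((n:ℝ) - (a:ℝ))) := by
    intro a ha
    simp only [mem_Icc] at ha
    have := interval_norm_bound n hn b len hlen a ha.1 (by omega) (-(a:ℤ)) (Or.inr rfl)
    simpa only [neg_mul] using this
  -- assemble
  have key : (n:ℝ) * ‖∑ u ∈ I, f u‖ ≤ β * ((n:ℝ) * (2 + Real.log n)) := by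
    have h1 : (n:ℝ) * ‖∑ u ∈ I, f u‖ = ‖(n:ℂ) * ∑ u ∈ I, f u‖ := by
      rw [norm_mul, Complex.norm_natCast]
    rw [h1, hid]
    calc ‖∑ a ∈ range n, (∑ x : ZMod n, f x * om n ^ ((a:ℤ) * ((x.val:ℕ):ℤ)))
            * (∑ u ∈ I, om n ^ (-((a:ℤ) * ((u.val:ℕ):ℤ))))‖
        ≤ ∑ a ∈ range n, ‖(∑ x : ZMod n, f x * om n ^ ((a:ℤ) * ((x.val:ℕ):ℤ)))
            * (∑ u ∈ I, om n ^ (-((a:ℤ) * ((u.val:ℕ):ℤ))))‖ := norm_sum_le _ _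
      _ ≤ ∑ a ∈ range n, β * ‖∑ u ∈ I, om n ^ (-((a:ℤ) * ((u.val:ℕ):ℤ)))‖ := by
          apply Finset.sum_le_sum
          intro a _
          rw [norm_mul]
          exact mul_le_mul_of_nonneg_right (hC a) (norm_nonneg _)
      _ = β * ∑ a ∈ range n, ‖∑ u ∈ I, om n ^ (-((a:ℤ) * ((u.val:ℕ):ℤ)))‖ := by
          rw [Finset.mul_sum]
      _ ≤ β * ((n:ℝ) * (2 + Real.log n)) := by
          apply mul_le_mul_of_nonneg_left _ (by linarith)
          rw [range_split n hn, Finset.sum_insert (by simp)]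
          calc ‖∑ u ∈ I, om n ^ (-(((0:ℕ):ℤ) * ((u.val:ℕ):ℤ)))‖
                + ∑ a ∈ Icc 1 (n-1), ‖∑ u ∈ I, om n ^ (-((a:ℤ) * ((u.val:ℕ):ℤ)))‖
              ≤ (n:ℝ) + ∑ a ∈ Icc 1 (n-1), (n:ℝ) / (2 * min (a:ℝ) ((n:ℝ) - (a:ℝ))) := by
                apply add_le_add
                · simpa using hF0
                · exact Finset.sum_le_sum hFa
            _ = (n:ℝ) + ((n:ℝ)/2) * ∑ a ∈ Icc 1 (n-1), (1 / min (a:ℝ) ((n:ℝ) - (a:ℝ))) := by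
                rw [Finset.mul_sum]
                congr 1
                refine Finset.sum_congr rfl fun a _ => ?_
                rw [div_mul_eq_mul_div, mul_one_div]
                rw [div_div]
                ring_nf
            _ ≤ (n:ℝ) + ((n:ℝ)/2) * (2 * (1 + Real.log n)) := by
                have := min_sum n hn
                have h2 : (0:ℝ) ≤ (n:ℝ)/2 := by positivity
                nlinarith
            _ = (n:ℝ) * (2 + Real.log n) := by ring
  have := (mul_le_mul_iff_right₀ hn0).mp (by linarith [key] : (n:ℝ) * ‖∑ u ∈ I, f u‖ ≤ (n:ℝ) * (β * (2 + Real.log n)))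
  exact this

lemma main_bound (n : ℕ) (hn : 1 < n) (σ : Equiv.Perm (ZMod n)) (β : ℝ) (hβ : 1 ≤ β)
    (hyp : ∀ (a : ℤ) (k : ℕ), 0 < k → ¬ (n ∣ k) →
      ‖∑ s ∈ range n, e (((k : ℝ) * (((σ (s : ZMod n)).val : ℝ)) + (a : ℝ) * (s : ℝ)) / n)‖ ≤ β)
    (I J : Finset (ZMod n)) (hI : IsInterval I) (hJ : IsInterval J) :
    discIn (I.image σ) J ≤ 12 * β * (Real.log n) ^ 2 := by
  haveI : NeZero n := ⟨by omega⟩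
  obtain ⟨bI, lI, hlI, hIeq⟩ := interval_normalize hn hI
  obtain ⟨bJ, lJ, hlJ, hJeq⟩ := interval_normalize hn hJ
  set S := I.image σ with hS
  set T := J with hT
  have hn0 : (0:ℝ) < n := by positivity
  have hL : Real.log 2 ≤ Real.log n := by
    apply Real.log_le_log (by norm_num)
    exact_mod_cast hn
  have hL2 : (0.6931471803 : ℝ) < Real.log 2 := Real.log_two_gt_d9
  -- the identity, with the a = 0 term separated
  have hid := inter_identity n hn S T
  rw [range_split n hn, Finset.sum_insert (by simp)] at hid
  have hA0 : (∑ x ∈ S, om n ^ (((0:ℕ):ℤ) * ((x.val:ℕ):ℤ))) = (S.card : ℂ) := by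
    simp
  have hB0 : (∑ y ∈ T, om n ^ (-(((0:ℕ):ℤ) * ((y.val:ℕ):ℤ)))) = (T.card : ℂ) := by
    simp
  rw [hA0, hB0] at hid
  have hkey : (((n:ℝ) * ((S ∩ T).card : ℝ) - (S.card : ℝ) * (T.card : ℝ) : ℝ) : ℂ)
      = ∑ a ∈ Icc 1 (n-1), (∑ x ∈ S, om n ^ ((a:ℤ) * ((x.val:ℕ):ℤ)))
          * (∑ y ∈ T, om n ^ (-((a:ℤ) * ((y.val:ℕ):ℤ)))) := by
    push_cast
    rw [← hid]
    ring
  -- bound each term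
  have hAa : ∀ a ∈ Icc 1 (n-1), ‖∑ x ∈ S, om n ^ ((a:ℤ) * ((x.val:ℕ):ℤ))‖
      ≤ β * (2 + Real.log n) := by
    intro a ha
    simp only [mem_Icc] at ha
    have hsum : (∑ x ∈ S, om n ^ ((a:ℤ) * ((x.val:ℕ):ℤ)))
        = ∑ u ∈ I, om n ^ ((a:ℤ) * ((((σ u).val:ℕ)):ℤ)) := by
      rw [hS, Finset.sum_image (fun u _ v _ h => σ.injective h)]
    rw [hsum, hIeq]
    exact complete_bound n hn σ β hβ hyp bI lI hlI a ha.1 (by omega)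
  have hBa : ∀ a ∈ Icc 1 (n-1), ‖∑ y ∈ T, om n ^ (-((a:ℤ) * ((y.val:ℕ):ℤ)))‖
      ≤ (n:ℝ) / (2 * min (a:ℝ) ((n:ℝ) - (a:ℝ))) := by
    intro a ha
    simp only [mem_Icc] at ha
    have := interval_norm_bound n hn bJ lJ hlJ a ha.1 (by omega) (-(a:ℤ)) (Or.inr rfl)
    rw [hJeq]
    simpa only [neg_mul] using this
  -- total bound
  have htot : |(n:ℝ) * ((S ∩ T).card : ℝ) - (S.card : ℝ) * (T.card : ℝ)|
      ≤ β * (2 + Real.log n) * ((n:ℝ) * (1 + Real.log n)) := by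
    have h1 : |(n:ℝ) * ((S ∩ T).card : ℝ) - (S.card : ℝ) * (T.card : ℝ)|
        = ‖(((n:ℝ) * ((S ∩ T).card : ℝ) - (S.card : ℝ) * (T.card : ℝ) : ℝ) : ℂ)‖ := by
      rw [Complex.norm_real, Real.norm_eq_abs]
    rw [h1, hkey]
    calc ‖∑ a ∈ Icc 1 (n-1), (∑ x ∈ S, om n ^ ((a:ℤ) * ((x.val:ℕ):ℤ)))
            * (∑ y ∈ T, om n ^ (-((a:ℤ) * ((y.val:ℕ):ℤ))))‖
        ≤ ∑ a ∈ Icc 1 (n-1), ‖(∑ x ∈ S, om n ^ ((a:ℤ) * ((x.val:ℕ):ℤ)))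
            * (∑ y ∈ T, om n ^ (-((a:ℤ) * ((y.val:ℕ):ℤ))))‖ := norm_sum_le _ _
      _ ≤ ∑ a ∈ Icc 1 (n-1), β * (2 + Real.log n) * ((n:ℝ) / (2 * min (a:ℝ) ((n:ℝ) - (a:ℝ)))) := by
          apply Finset.sum_le_sum
          intro a ha
          rw [norm_mul]
          apply mul_le_mul (hAa a ha) (hBa a ha) (norm_nonneg _)
          have : (0:ℝ) ≤ 2 + Real.log n := by
            have : (0:ℝ) ≤ Real.log n := Real.log_natCast_nonneg n
            linarith
          positivity
      _ = β * (2 + Real.log n) * (((n:ℝ)/2) * ∑ a ∈ Icc 1 (n-1), (1 / min (a:ℝ) ((n:ℝ) - (a:ℝ)))) := by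
          rw [Finset.mul_sum, Finset.mul_sum]
          refine Finset.sum_congr rfl fun a _ => ?_
          rw [div_mul_eq_mul_div, mul_one_div, div_div]
          ring_nf
      _ ≤ β * (2 + Real.log n) * ((n:ℝ) * (1 + Real.log n)) := by
          have hms := min_sum n hn
          have h2 : (0:ℝ) ≤ β * (2 + Real.log n) := by
            have : (0:ℝ) ≤ Real.log n := Real.log_natCast_nonneg n
            nlinarith
          have h3 : ((n:ℝ)/2) * ∑ a ∈ Icc 1 (n-1), (1 / min (a:ℝ) ((n:ℝ) - (a:ℝ)))
              ≤ (n:ℝ) * (1 + Real.log n) := by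
            have hsum_nonneg : (0:ℝ) ≤ ∑ a ∈ Icc 1 (n-1), (1 / min (a:ℝ) ((n:ℝ) - (a:ℝ))) := by
              apply Finset.sum_nonneg
              intro a ha
              simp only [mem_Icc] at ha
              have h1 : (1:ℝ) ≤ (a:ℝ) := by exact_mod_cast ha.1
              have h2 : (a:ℝ) + 1 ≤ (n:ℝ) := by
                have : a + 1 ≤ n := by omega
                exact_mod_cast this
              have hm : (0:ℝ) < min (a:ℝ) ((n:ℝ) - (a:ℝ)) := by
                simp only [lt_min_iff]; constructor <;> linarith
              positivity
            nlinarith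
          nlinarith [mul_le_mul_of_nonneg_left h3 h2]
  -- convert to discIn
  have hdisc : discIn S T = |(n:ℝ) * ((S ∩ T).card : ℝ) - (S.card : ℝ) * (T.card : ℝ)| / n := by
    rw [discIn, ← abs_of_pos hn0, ← abs_div]
    congr 1
    field_simp
    rw [abs_of_pos hn0]; ring
  rw [hdisc]
  rw [div_le_iff₀ hn0]
  have hLn : (0.69:ℝ) ≤ Real.log n := by linarith
  have hβ0 : (0:ℝ) ≤ β := by linarith
  have hq : (2 + Real.log n) * (1 + Real.log n) ≤ 12 * (Real.log n)^2 := by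
    nlinarith [sq_nonneg (Real.log n - 0.69), hLn]
  have h5 : (0:ℝ) ≤ β * n := by positivity
  calc |(n:ℝ) * ((S ∩ T).card : ℝ) - (S.card : ℝ) * (T.card : ℝ)|
      ≤ β * (2 + Real.log n) * ((n:ℝ) * (1 + Real.log n)) := htot
    _ = (β * n) * ((2 + Real.log n) * (1 + Real.log n)) := by ring
    _ ≤ (β * n) * (12 * (Real.log n)^2) := mul_le_mul_of_nonneg_left hq h5
    _ = 12 * β * (Real.log n) ^ 2 * n := by ring

end AuxET

/-- Erdős–Turán for permutations, second form: if all the complete exponential sums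
`Σ_{s=0}^{n-1} e((k σ(s) + a s)/n)` are bounded by `β`, then `D(σ) ≤ C₁ β (log n)²`. -/
theorem stmt_5 :
    ∃ C₁ : ℝ, ∀ (n : ℕ), 1 < n → ∀ (σ : Equiv.Perm (ZMod n)) (β : ℝ), 1 ≤ β →
      (∀ (a : ℤ) (k : ℕ), 0 < k → ¬ (n ∣ k) →
        ‖∑ s ∈ Finset.range n,
          e (((k : ℝ) * (((σ (s : ZMod n)).val : ℝ)) + (a : ℝ) * (s : ℝ)) / n)‖ ≤ β) →
      disc σ ≤ C₁ * β * (Real.log n) ^ 2 := by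
  refine ⟨12, ?_⟩
  intro n hn σ β hβ hyp
  rw [disc]
  apply Real.sSup_le
  · rintro d ⟨I, J, hI, hJ, rfl⟩
    exact main_bound n hn σ β hβ hyp I J hI hJ
  · have hL : (0:ℝ) ≤ Real.log n := Real.log_natCast_nonneg n
    have hβ0 : (0:ℝ) ≤ β := le_trans zero_le_one hβ
    positivity
end

section
/- There is an absolute constant C such that for every prime p ≥ 3, every primitive root τ modulo p, and every a ∈ Z_p^×, the permutation ρ_{a,τ} satisfies D(ρ_{a,τ}) ≤ C · p^{1/2} · (log p)². -/
open Finset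

namespace PV
open Finset AddChar Complex

section basic
variable {N : ℕ} [NeZero N]

lemma norm_std (x : ZMod N) : ‖ZMod.stdAddChar x‖ = 1 := by
  rw [ZMod.stdAddChar_apply]; exact Circle.norm_coe _

lemma sum_std (t : ZMod N) :
    ∑ n : ZMod N, ZMod.stdAddChar (n * t) = if t = 0 then (N : ℂ) else 0 := by
  split_ifs with h
  · simp [h]
  · have h1 : (ZMod.stdAddChar (N := N)).mulShift t ≠ 1 :=
      ZMod.isPrimitive_stdAddChar N h
    have := AddChar.sum_eq_zero_of_ne_one h1
    simpa [AddChar.mulShift_apply, mul_comm] using this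

lemma std_inv (x : ZMod N) : ZMod.stdAddChar (-x) = (starRingEnd ℂ) (ZMod.stdAddChar x) := by
  have h1 : ZMod.stdAddChar x * ZMod.stdAddChar (-x) = 1 := by
    rw [← AddChar.map_add_eq_mul]; simp
  have h2 : ZMod.stdAddChar (-x) = (ZMod.stdAddChar x)⁻¹ := eq_inv_of_mul_eq_one_left (by linear_combination h1)
  rw [h2, Complex.inv_eq_conj (by simpa using norm_std x)]


end basic

section lb
variable {N : ℕ} [NeZero N]
/-- lower bound on ‖stdAddChar m - 1‖ -/
lemma std_sub_one_lb (m : ZMod N) (hm : m ≠ 0) :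
    2 * min (m.val : ℝ) ((N : ℝ) - m.val) / N ≤ ‖ZMod.stdAddChar m - 1‖ := by
  have hN : 0 < (N : ℝ) := by exact_mod_cast Nat.pos_of_ne_zero (NeZero.ne N)
  set v : ℕ := m.val with hv
  have hv1 : 1 ≤ v := Nat.one_le_iff_ne_zero.mpr (fun h => hm (by rwa [← ZMod.val_eq_zero]))
  have hvN : v < N := ZMod.val_lt m
  set x : ℝ := (v : ℝ) / N with hx
  have hx0 : 0 < x := by positivity
  have hx1 : x < 1 := (div_lt_one hN).mpr (by exact_mod_cast hvN)
  set θ : ℝ := 2 * Real.pi * x with hθ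
  have hz : ZMod.stdAddChar m = Complex.exp ((θ : ℝ) * I) := by
    rw [ZMod.stdAddChar_apply, ZMod.toCircle_apply]
    congr 1
    rw [hθ, hx]
    push_cast [-ZMod.natCast_val]
    ring
  have hre : (ZMod.stdAddChar m - 1).re = Real.cos θ - 1 := by
    rw [hz]; simp [Complex.exp_ofReal_mul_I_re]
  have him : (ZMod.stdAddChar m - 1).im = Real.sin θ := by
    rw [hz]; simp [Complex.exp_ofReal_mul_I_im]
  have hgoal : 2 * min x (1 - x) ≤ ‖ZMod.stdAddChar m - 1‖ := by
    have hpi : (0:ℝ) < Real.pi := Real.pi_pos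
    rcases le_or_gt x (1/4) with hc | hc
    · -- small x : use imaginary part
      have h1 : |((ZMod.stdAddChar m - 1).im)| ≤ ‖ZMod.stdAddChar m - 1‖ :=
        Complex.abs_im_le_norm _
      have h2 : 2 / Real.pi * θ ≤ Real.sin θ := by
        apply Real.mul_le_sin (by positivity)
        rw [hθ]
        nlinarith [Real.pi_pos]
      have h3 : (4:ℝ) * x ≤ Real.sin θ := by
        rw [hθ] at h2 ⊢
        have : 2 / Real.pi * (2 * Real.pi * x) = 4 * x := by field_simp; ring
        linarith [this ▸ h2]
      have h4 : 2 * min x (1-x) ≤ 4 * x := by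
        have := min_le_left x (1-x); nlinarith
      calc 2 * min x (1-x) ≤ 4 * x := h4
        _ ≤ Real.sin θ := h3
        _ ≤ |Real.sin θ| := le_abs_self _
        _ ≤ ‖ZMod.stdAddChar m - 1‖ := by rw [← him]; exact h1
    · rcases le_or_gt x (3/4) with hc2 | hc2
      · -- middle: use real part
        have h1 : |((ZMod.stdAddChar m - 1).re)| ≤ ‖ZMod.stdAddChar m - 1‖ :=
          Complex.abs_re_le_norm _
        have hcos : Real.cos θ ≤ 0 := by
          apply Real.cos_nonpos_of_pi_div_two_le_of_le
          · rw [hθ]; nlinarith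
          · rw [hθ]; nlinarith
        have h2 : (1:ℝ) ≤ |Real.cos θ - 1| := by
          rw [abs_sub_comm]
          calc (1:ℝ) ≤ 1 - Real.cos θ := by linarith
            _ ≤ |1 - Real.cos θ| := le_abs_self _
        have h3 : 2 * min x (1-x) ≤ 1 := by
          have := min_le_right x (1-x); nlinarith [min_le_left x (1-x)]
        calc 2 * min x (1-x) ≤ 1 := h3
          _ ≤ |Real.cos θ - 1| := h2
          _ ≤ ‖ZMod.stdAddChar m - 1‖ := by rw [← hre]; exact h1
      · -- large x : imaginary part, reflected
        have h1 : |((ZMod.stdAddChar m - 1).im)| ≤ ‖ZMod.stdAddChar m - 1‖ :=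
          Complex.abs_im_le_norm _
        have hsin : Real.sin θ = - Real.sin (2 * Real.pi - θ) := by
          rw [Real.sin_sub]; simp [Real.sin_two_pi, Real.cos_two_pi]
        have h2 : 2 / Real.pi * (2 * Real.pi - θ) ≤ Real.sin (2 * Real.pi - θ) := by
          apply Real.mul_le_sin
          · rw [hθ]; nlinarith
          · rw [hθ]; nlinarith
        have h3 : (4:ℝ) * (1 - x) ≤ Real.sin (2 * Real.pi - θ) := by
          have he : 2 / Real.pi * (2 * Real.pi - θ) = 4 * (1 - x) := by
            rw [hθ]; field_simp; ring
          linarith [he ▸ h2]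
        have h4 : 2 * min x (1-x) ≤ 4 * (1 - x) := by
          have := min_le_right x (1-x); nlinarith
        calc 2 * min x (1-x) ≤ 4 * (1-x) := h4
          _ ≤ Real.sin (2*Real.pi - θ) := h3
          _ = |Real.sin θ| := by
              have h0 : 0 ≤ Real.sin (2*Real.pi - θ) := le_trans (by nlinarith) h3
              rw [hsin, abs_neg, _root_.abs_of_nonneg h0]
          _ ≤ ‖ZMod.stdAddChar m - 1‖ := by rw [← him]; exact h1
  -- convert min form
  have h1x : 1 - x = ((N:ℝ) - v)/N := by rw [hx]; field_simp
  have key : min (x) (1-x) = min ((v:ℝ)) ((N:ℝ)-(v:ℝ)) / N := by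
    rw [hx, h1x, min_div_div_right hN.le]
  calc 2 * min ((m.val:ℕ):ℝ) ((N:ℝ) - (m.val:ℕ)) / N = 2 * min x (1-x) := by
        rw [mul_div_assoc, ← key]
    _ ≤ ‖ZMod.stdAddChar m - 1‖ := hgoal

end lb

section geo
variable {N : ℕ} [NeZero N]

lemma min_pos (m : ZMod N) (hm : m ≠ 0) : (0:ℝ) < min (m.val : ℝ) ((N : ℝ) - m.val) := by
  have hv1 : 1 ≤ m.val := Nat.one_le_iff_ne_zero.mpr (fun h => hm (by rwa [← ZMod.val_eq_zero]))
  have hvN : m.val < N := ZMod.val_lt m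
  have : (m.val : ℝ) < N := by exact_mod_cast hvN
  apply lt_min <;> [exact_mod_cast hv1; linarith]

lemma geom_bound (m : ZMod N) (hm : m ≠ 0) (w : ZMod N) (L : ℕ) :
    ‖∑ i ∈ Finset.range L, ZMod.stdAddChar (w + m * (i:ZMod N))‖ ≤
      (N : ℝ) / min (m.val : ℝ) ((N : ℝ) - m.val) := by
  have hterm : ∀ i : ℕ,
      ZMod.stdAddChar (w + m * (i:ZMod N)) = ZMod.stdAddChar w * (ZMod.stdAddChar m) ^ i := by
    intro i
    rw [AddChar.map_add_eq_mul]
    congr 1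
    rw [show m * (i : ZMod N) = i • m by rw [nsmul_eq_mul]; ring, AddChar.map_nsmul_eq_pow]
  simp_rw [hterm, ← Finset.mul_sum]
  rw [norm_mul, norm_std, one_mul]
  set z := ZMod.stdAddChar m with hzdef
  have hz1 : z ≠ 1 := by
    intro h
    apply hm
    apply ZMod.injective_stdAddChar (N := N)
    rw [← hzdef, h, AddChar.map_zero_eq_one]
  rw [geom_sum_eq hz1, norm_div]
  have hnum : ‖z ^ L - 1‖ ≤ 2 := by
    calc ‖z ^ L - 1‖ ≤ ‖z ^ L‖ + ‖(1 : ℂ)‖ := norm_sub_le _ _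
      _ = 2 := by rw [norm_pow, norm_std]; norm_num
  have hden := std_sub_one_lb m hm
  have hminpos := min_pos m hm
  have hN : (0:ℝ) < N := by
    have := Nat.pos_of_ne_zero (NeZero.ne N); exact_mod_cast this
  have h2 : (0:ℝ) < 2 * min (m.val : ℝ) ((N : ℝ) - m.val) / N := by positivity
  calc ‖z ^ L - 1‖ / ‖z - 1‖ ≤ 2 / (2 * min (m.val : ℝ) ((N : ℝ) - m.val) / N) :=
        div_le_div₀ (by norm_num) hnum h2 hden
    _ = (N : ℝ) / min (m.val : ℝ) ((N : ℝ) - m.val) := by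
        field_simp
lemma sum_erase_zero_val (f : ℕ → ℝ) :
    ∑ m ∈ Finset.univ.erase (0 : ZMod N), f m.val = ∑ v ∈ Finset.Ico 1 N, f v := by
  apply Finset.sum_nbij' (i := fun m : ZMod N => m.val) (j := fun v : ℕ => (v : ZMod N))
  · intro m hm
    simp only [Finset.mem_erase, Finset.mem_univ, and_true] at hm
    simp only [Finset.mem_Ico]
    exact ⟨Nat.one_le_iff_ne_zero.mpr (fun h => hm (by rwa [← ZMod.val_eq_zero])), ZMod.val_lt m⟩
  · intro v hv
    simp only [Finset.mem_Ico] at hv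
    simp only [Finset.mem_erase, Finset.mem_univ, and_true]
    intro h
    have := ZMod.val_cast_of_lt hv.2
    rw [h, ZMod.val_zero] at this
    omega
  · intro m _; exact ZMod.natCast_zmod_val m
  · intro v hv
    simp only [Finset.mem_Ico] at hv
    exact ZMod.val_cast_of_lt hv.2
  · intro m _; rfl

lemma reflect_sum (g : ℕ → ℝ) :
    ∑ v ∈ Finset.Ico 1 N, g (N - v) = ∑ v ∈ Finset.Ico 1 N, g v := by
  apply Finset.sum_nbij' (i := fun v => N - v) (j := fun v => N - v) <;>
    intro v hv <;> simp only [Finset.mem_Ico] at * <;> omega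

lemma harmonic_bound : ∑ v ∈ Finset.Ico 1 N, (1 / v : ℝ) ≤ 1 + Real.log N := by
  have h1 : ∑ v ∈ Finset.Ico 1 N, (1 / v : ℝ) = (harmonic (N - 1) : ℝ) := by
    rw [Finset.sum_Ico_eq_sum_range]
    simp only [harmonic, Rat.cast_sum, Rat.cast_inv, Rat.cast_natCast]
    apply Finset.sum_congr rfl
    intro i _
    simp [add_comm 1 i]
  rw [h1]
  rcases Nat.lt_or_ge N 2 with hN2 | hN2
  · interval_cases N
    · simp
    · simp [harmonic]
  · calc (harmonic (N-1) : ℝ) ≤ 1 + Real.log (N - 1 : ℕ) := harmonic_le_one_add_log _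
      _ ≤ 1 + Real.log N := by
          have h0 : (0:ℝ) < ((N-1 : ℕ):ℝ) := by
            have : 1 ≤ N - 1 := by omega
            exact_mod_cast Nat.lt_of_lt_of_le Nat.zero_lt_one this
          have hle : ((N-1:ℕ):ℝ) ≤ (N:ℝ) := Nat.cast_le.mpr (Nat.sub_le N 1)
          have := Real.log_le_log h0 hle
          linarith

lemma coef_total :
    ∑ m ∈ Finset.univ.erase (0 : ZMod N), (N : ℝ) / min (m.val : ℝ) ((N : ℝ) - m.val)
      ≤ 2 * N * (1 + Real.log N) := by
  have hN : (0:ℝ) < N := by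
    have := Nat.pos_of_ne_zero (NeZero.ne N); exact_mod_cast this
  have step1 : ∑ m ∈ Finset.univ.erase (0 : ZMod N), (N : ℝ) / min (m.val : ℝ) ((N : ℝ) - m.val)
      = ∑ v ∈ Finset.Ico 1 N, (N : ℝ) / min (v : ℝ) ((N : ℝ) - v) :=
    sum_erase_zero_val (fun v => (N : ℝ) / min (v : ℝ) ((N : ℝ) - v))
  rw [step1]
  have step2 : ∀ v ∈ Finset.Ico 1 N,
      (N : ℝ) / min (v : ℝ) ((N : ℝ) - v) ≤ (N : ℝ) * (1 / v) + (N : ℝ) * (1 / (N - v : ℕ)) := by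
    intro v hv
    simp only [Finset.mem_Ico] at hv
    have hv0 : (0:ℝ) < v := by exact_mod_cast hv.1
    have hvN : (v:ℝ) < N := by exact_mod_cast hv.2
    have hc : ((N - v : ℕ) : ℝ) = (N:ℝ) - v := by
      have : v ≤ N := le_of_lt hv.2
      push_cast [this]; ring
    rw [hc]
    rcases min_cases ((v:ℝ)) ((N:ℝ) - v) with ⟨hmin, _⟩ | ⟨hmin, _⟩ <;> rw [hmin] <;>
      [skip; skip] <;>
    · have : (0:ℝ) < (N:ℝ) - v := by linarith
      rw [mul_one_div, mul_one_div]
      have h1 : (0:ℝ) ≤ (N:ℝ)/v := by positivity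
      have h2 : (0:ℝ) ≤ (N:ℝ)/((N:ℝ)-v) := by positivity
      linarith
  calc ∑ v ∈ Finset.Ico 1 N, (N : ℝ) / min (v : ℝ) ((N : ℝ) - v)
      ≤ ∑ v ∈ Finset.Ico 1 N, ((N : ℝ) * (1 / v) + (N : ℝ) * (1 / (N - v : ℕ))) :=
        Finset.sum_le_sum step2
    _ = (N:ℝ) * (∑ v ∈ Finset.Ico 1 N, (1/v : ℝ)) + (N:ℝ) * ∑ v ∈ Finset.Ico 1 N, (1/(N-v : ℕ) : ℝ) := by
        rw [Finset.sum_add_distrib, Finset.mul_sum, Finset.mul_sum]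
    _ = (N:ℝ) * (∑ v ∈ Finset.Ico 1 N, (1/v : ℝ)) + (N:ℝ) * ∑ v ∈ Finset.Ico 1 N, (1/v : ℝ) := by
        rw [reflect_sum (fun v => (1/v : ℝ))]
    _ ≤ (N:ℝ) * (1 + Real.log N) + (N:ℝ) * (1 + Real.log N) := by
        have hb := harmonic_bound (N := N)
        gcongr
    _ = 2 * N * (1 + Real.log N) := by ring

end geo

section comp
variable {N : ℕ} [NeZero N]

lemma min_neg_val (m : ZMod N) (hm : m ≠ 0) :
    min (((-m).val : ℝ)) ((N:ℝ) - (-m).val) = min ((m.val : ℕ) : ℝ) ((N:ℝ) - m.val) := by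
  have h1 : (-m).val = N - m.val := by
    rw [ZMod.neg_val]; simp [hm]
  have h2 : m.val ≤ N := le_of_lt (ZMod.val_lt m)
  rw [h1]
  have h3 : ((N - m.val : ℕ) : ℝ) = (N:ℝ) - m.val := by push_cast [h2]; ring
  rw [h3]
  have : (N:ℝ) - ((N:ℝ) - m.val) = m.val := by ring
  rw [this, min_comm]

lemma completion (g : ZMod N → ℂ) {G : ℝ}
    (hG : ∀ m : ZMod N, ‖∑ t : ZMod N, ZMod.stdAddChar (m * t) * g t‖ ≤ G)
    (b : ZMod N) {L : ℕ} (hL : L ≤ N) :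
    ‖∑ i ∈ Finset.range L, g (b + (i : ZMod N))‖ ≤ (3 + 2 * Real.log N) * G := by
  have hG0 : 0 ≤ G := le_trans (norm_nonneg _) (hG 0)
  have hNR : (0:ℝ) < N := by
    have := Nat.pos_of_ne_zero (NeZero.ne N); exact_mod_cast this
  have hNC : (N : ℂ) ≠ 0 := by exact_mod_cast ne_of_gt hNR
  set ψ := ZMod.stdAddChar (N := N) with hψ
  -- the completed identity
  have ident : ∑ i ∈ Finset.range L, g (b + (i : ZMod N))
      = (N:ℂ)⁻¹ * ∑ m : ZMod N,
          (∑ i ∈ Finset.range L, ψ (-(m * (b + (i:ZMod N)))))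
            * (∑ t : ZMod N, ψ (m * t) * g t) := by
    have expand : (N:ℂ)⁻¹ * ∑ m : ZMod N,
          (∑ i ∈ Finset.range L, ψ (-(m * (b + (i:ZMod N)))))
            * (∑ t : ZMod N, ψ (m * t) * g t)
        = ∑ i ∈ Finset.range L, ∑ t : ZMod N,
            ((N:ℂ)⁻¹ * ∑ m : ZMod N, ψ (m * (t - (b + (i:ZMod N))))) * g t := by
      simp_rw [Finset.sum_mul, Finset.mul_sum]
      rw [Finset.sum_comm]
      refine Finset.sum_congr rfl fun i _ => ?_
      rw [Finset.sum_comm]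
      refine Finset.sum_congr rfl fun t _ => ?_
      rw [Finset.sum_mul]
      refine Finset.sum_congr rfl fun m _ => ?_
      have hmul : ψ (-(m * (b + (i:ZMod N)))) * ψ (m * t)
          = ψ (m * (t - (b + (i:ZMod N)))) := by
        rw [← AddChar.map_add_eq_mul]
        congr 1
        ring
      linear_combination ((N:ℂ)⁻¹ * g t) * hmul
    rw [expand]
    refine Finset.sum_congr rfl fun i _ => ?_
    have collapse : ∀ t : ZMod N,
        ((N:ℂ)⁻¹ * ∑ m : ZMod N, ψ (m * (t - (b + (i:ZMod N))))) * g t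
          = (if t = b + (i:ZMod N) then (1:ℂ) else 0) * g t := by
      intro t
      rw [sum_std]
      by_cases h : t = b + (i:ZMod N)
      · simp [h, sub_eq_zero, inv_mul_cancel₀ hNC]
      · have : ¬ (t - (b + (i:ZMod N)) = 0) := by
          rwa [sub_eq_zero, ne_eq] at *
        simp [this, h]
    simp_rw [collapse, ite_mul, one_mul, zero_mul, Finset.sum_ite_eq']
    simp
  rw [ident]
  -- norm bound
  calc ‖(N:ℂ)⁻¹ * ∑ m : ZMod N,
          (∑ i ∈ Finset.range L, ψ (-(m * (b + (i:ZMod N)))))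
            * (∑ t : ZMod N, ψ (m * t) * g t)‖
      ≤ (N:ℝ)⁻¹ * ∑ m : ZMod N,
          ‖∑ i ∈ Finset.range L, ψ (-(m * (b + (i:ZMod N))))‖ * G := by
        rw [norm_mul]
        have : ‖((N:ℂ))⁻¹‖ = (N:ℝ)⁻¹ := by
          rw [norm_inv]; congr 1; exact_mod_cast Complex.norm_natCast N
        rw [this]
        gcongr
        calc ‖∑ m : ZMod N, (∑ i ∈ Finset.range L, ψ (-(m * (b + (i:ZMod N)))))
                * (∑ t : ZMod N, ψ (m * t) * g t)‖
            ≤ ∑ m : ZMod N, ‖(∑ i ∈ Finset.range L, ψ (-(m * (b + (i:ZMod N)))))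
                * (∑ t : ZMod N, ψ (m * t) * g t)‖ := norm_sum_le _ _
          _ ≤ ∑ m : ZMod N, ‖∑ i ∈ Finset.range L, ψ (-(m * (b + (i:ZMod N))))‖ * G := by
              refine Finset.sum_le_sum fun m _ => ?_
              rw [norm_mul]
              exact mul_le_mul_of_nonneg_left (hG m) (norm_nonneg _)
    _ ≤ (N:ℝ)⁻¹ * (((N:ℝ) + 2 * N * (1 + Real.log N)) * G) := by
        gcongr (N:ℝ)⁻¹ * ?_
        rw [← Finset.sum_mul]
        gcongr
        -- main coefficient sum bound
        rw [← Finset.add_sum_erase _ _ (Finset.mem_univ (0 : ZMod N))]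
        have h0 : ‖∑ i ∈ Finset.range L, ψ (-((0:ZMod N) * (b + (i:ZMod N))))‖ ≤ (N:ℝ) := by
          simp only [zero_mul, neg_zero, AddChar.map_zero_eq_one]
          rw [Finset.sum_const, Finset.card_range, nsmul_eq_mul, mul_one]
          rw [Complex.norm_natCast]
          exact_mod_cast hL
        have hrest : ∑ m ∈ Finset.univ.erase (0:ZMod N),
            ‖∑ i ∈ Finset.range L, ψ (-(m * (b + (i:ZMod N))))‖
            ≤ 2 * N * (1 + Real.log N) := by
          refine le_trans (Finset.sum_le_sum ?_) (coef_total (N := N))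
          intro m hm
          have hm0 : m ≠ 0 := by
            simp only [Finset.mem_erase, Finset.mem_univ, and_true] at hm; exact hm
          have harg : ∀ i : ℕ, -(m * (b + (i:ZMod N))) = (-(m*b)) + (-m) * (i:ZMod N) := by
            intro i; ring
          simp_rw [harg]
          have := geom_bound (N := N) (-m) (neg_ne_zero.mpr hm0) (-(m*b)) L
          rw [min_neg_val m hm0] at this
          exact_mod_cast this
        exact add_le_add h0 hrest
    _ = (N:ℝ)⁻¹ * ((N:ℝ) * ((3 + 2 * Real.log N) * G)) := by ring
    _ = (3 + 2 * Real.log N) * G := by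
        rw [← mul_assoc, inv_mul_cancel₀ (ne_of_gt hNR), one_mul]

end comp

section prime
variable {p : ℕ} [hp : Fact p.Prime]

lemma sum_units (f : ZMod p → ℂ) :
    ∑ x : (ZMod p)ˣ, f ↑x = (∑ x : ZMod p, f x) - f 0 := by
  classical
  have hinj : ∀ x ∈ (Finset.univ : Finset (ZMod p)ˣ), ∀ y ∈ (Finset.univ : Finset (ZMod p)ˣ),
      (x : ZMod p) = (y : ZMod p) → x = y := fun x _ y _ h => Units.ext h
  rw [← Finset.sum_image (g := fun x : (ZMod p)ˣ => (x : ZMod p)) hinj]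
  have himg : Finset.univ.image (fun x : (ZMod p)ˣ => (x : ZMod p))
      = Finset.univ.erase (0 : ZMod p) := by
    ext y
    simp only [Finset.mem_image, Finset.mem_univ, true_and, Finset.mem_erase, and_true]
    constructor
    · rintro ⟨x, rfl⟩; exact x.ne_zero
    · intro hy
      obtain ⟨x, hx⟩ := (isUnit_iff_ne_zero.mpr hy)
      exact ⟨x, hx⟩
  rw [himg, Finset.sum_erase_eq_sub (Finset.mem_univ 0)]

lemma gauss_norm (χ : MulChar (ZMod p) ℂ) (hχ : χ ≠ 1) :
    ‖gaussSum χ (ZMod.stdAddChar (N := p))‖ = Real.sqrt p := by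
  set ψ := ZMod.stdAddChar (N := p) with hψ
  have hconj : (starRingEnd ℂ) (gaussSum χ ψ) = gaussSum χ⁻¹ ψ⁻¹ := by
    rw [gaussSum, gaussSum, map_sum]
    refine Finset.sum_congr rfl fun x _ => ?_
    rw [map_mul]
    congr 1
    · exact (MulChar.star_apply' χ x)
    · rw [AddChar.inv_apply, std_inv]
  have hmul := gaussSum_mul_gaussSum_eq_card hχ (ZMod.isPrimitive_stdAddChar p)
  rw [← hconj] at hmul
  rw [Complex.mul_conj] at hmul
  have hcard : (Fintype.card (ZMod p) : ℂ) = ((p : ℝ) : ℂ) := by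
    rw [ZMod.card]; norm_num
  rw [hcard] at hmul
  have : Complex.normSq (gaussSum χ ψ) = (p : ℝ) := by exact_mod_cast hmul
  rw [Complex.norm_def, this]

-- the unit τ
lemma tau_unit_spec {τ : ZMod p} (hτ : IsPrimitiveRoot τ (p - 1)) :
    ∃ uτ : (ZMod p)ˣ, (uτ : ZMod p) = τ ∧
    (∀ x : (ZMod p)ˣ, x ∈ Subgroup.zpowers uτ) := by
  have hpos : p - 1 ≠ 0 := by have := hp.out.two_le; omega
  refine ⟨(hτ.isUnit hpos).unit, (hτ.isUnit hpos).unit_spec, ?_⟩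
  have h1 : IsPrimitiveRoot (hτ.isUnit hpos).unit (p - 1) := hτ.isUnit_unit hpos
  have horder : orderOf (hτ.isUnit hpos).unit = p - 1 := h1.eq_orderOf.symm
  have hcard : Nat.card (ZMod p)ˣ = p - 1 := by
    rw [Nat.card_eq_fintype_card, ZMod.card_units_eq_totient, Nat.totient_prime hp.out]
  have : Subgroup.zpowers (hτ.isUnit hpos).unit = ⊤ := by
    apply Subgroup.eq_top_of_card_eq
    rw [Nat.card_zpowers, horder, hcard]
  intro x
  rw [this]
  exact Subgroup.mem_top x

end prime

section prime2
variable {p : ℕ} [hp : Fact p.Prime]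

lemma norm_chi_unit (χ : MulChar (ZMod p) ℂ) (x : (ZMod p)ˣ) : ‖χ ↑x‖ = 1 := by
  haveI : NeZero (Fintype.card (ZMod p)ˣ) := ⟨Fintype.card_ne_zero⟩
  have h := MulChar.apply_mem_rootsOfUnity (χ := χ) x
  have h2 := Complex.norm_eq_one_of_mem_rootsOfUnity h
  rwa [MulChar.coe_equivToUnitHom] at h2

lemma S_bound [NeZero (p-1)] {τ : ZMod p}
    (hτ : IsPrimitiveRoot τ (p - 1)) {u : ZMod p} (hu : u ≠ 0) (m : ZMod (p - 1)) :
    ‖∑ t : ZMod (p - 1), ZMod.stdAddChar (m * t) * ZMod.stdAddChar (u * τ ^ t.val)‖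
      ≤ Real.sqrt p := by
  obtain ⟨uτ, huτ, hg⟩ := tau_unit_spec hτ
  have hordτ : orderOf uτ = p - 1 := by
    rw [← orderOf_units, huτ, ← hτ.eq_orderOf]
  have hpsqrt : (1:ℝ) ≤ Real.sqrt p := by
    rw [show (1:ℝ) = Real.sqrt 1 by simp]
    exact Real.sqrt_le_sqrt (by exact_mod_cast hp.out.one_lt.le)
  have hcardu : Fintype.card (ZMod p)ˣ = p - 1 := by
    rw [ZMod.card_units_eq_totient, Nat.totient_prime hp.out]
  have hbij : Function.Bijective (fun t : ZMod (p-1) => uτ ^ t.val) := by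
    rw [Fintype.bijective_iff_injective_and_card]
    constructor
    · intro t₁ t₂ h
      simp only at h
      rw [pow_eq_pow_iff_modEq, hordτ, Nat.ModEq,
        Nat.mod_eq_of_lt (ZMod.val_lt t₁), Nat.mod_eq_of_lt (ZMod.val_lt t₂)] at h
      exact ZMod.val_injective _ h
    · rw [ZMod.card, hcardu]
  have hvalpow : ∀ t : ZMod (p-1), ((uτ ^ t.val : (ZMod p)ˣ) : ZMod p) = τ ^ t.val := by
    intro t; rw [Units.val_pow_eq_pow_val, huτ]
  by_cases hm : m = 0
  · subst hm
    simp only [zero_mul, AddChar.map_zero_eq_one, one_mul]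
    have h1 : ∑ t : ZMod (p-1), ZMod.stdAddChar (u * τ ^ t.val)
        = ∑ x : (ZMod p)ˣ, ZMod.stdAddChar (u * (x : ZMod p)) :=
      Fintype.sum_bijective _ hbij _ _ (fun t =>
        show ZMod.stdAddChar (u * τ ^ t.val)
            = ZMod.stdAddChar (u * ((uτ ^ t.val : (ZMod p)ˣ) : ZMod p)) by rw [hvalpow t])
    rw [h1, sum_units (p := p) (fun y => ZMod.stdAddChar (u * y))]
    have h2 : ∑ x : ZMod p, ZMod.stdAddChar (u * x) = 0 := by
      have h3 := sum_std (N := p) u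
      rw [if_neg hu] at h3
      rw [← h3]
      exact Finset.sum_congr rfl fun x _ => by rw [mul_comm]
    rw [h2, mul_zero, AddChar.map_zero_eq_one]
    simp only [zero_sub, norm_neg, norm_one]
    exact hpsqrt
  · -- construct the multiplicative character
    have hζ0 : (ZMod.stdAddChar m : ℂ) ≠ 0 := by
      intro h
      have := norm_std m
      rw [h, norm_zero] at this; norm_num at this
    have hζunit : IsUnit (ZMod.stdAddChar m : ℂ) := isUnit_iff_ne_zero.mpr hζ0
    have hζmem : hζunit.unit ∈ rootsOfUnity (Fintype.card (ZMod p)ˣ) ℂ := by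
      rw [_root_.mem_rootsOfUnity, Units.ext_iff]
      push_cast
      rw [IsUnit.unit_spec, hcardu]
      rw [← AddChar.map_nsmul_eq_pow]
      have : (p - 1) • m = 0 := by
        rw [nsmul_eq_mul, ZMod.natCast_self, zero_mul]
      rw [this, AddChar.map_zero_eq_one]
    set χ := MulChar.ofRootOfUnity hζmem hg with hχdef
    have hχτ : χ τ = ZMod.stdAddChar m := by
      rw [← huτ, hχdef]
      rw [MulChar.ofRootOfUnity_spec]
      exact IsUnit.unit_spec hζunit
    have heval : ∀ t : ZMod (p-1), χ (τ ^ t.val) = ZMod.stdAddChar (m * t) := by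
      intro t
      rw [map_pow, hχτ, ← AddChar.map_nsmul_eq_pow]
      congr 1
      rw [nsmul_eq_mul, ZMod.natCast_zmod_val]
      ring
    have hχ1 : χ ≠ 1 := by
      intro h
      apply hm
      have h1 : χ τ = 1 := by rw [h, ← huτ]; exact MulChar.one_apply_coe uτ
      rw [hχτ] at h1
      apply ZMod.injective_stdAddChar (N := p-1)
      rw [h1, AddChar.map_zero_eq_one]
    have hrw : ∑ t : ZMod (p-1), ZMod.stdAddChar (m * t) * ZMod.stdAddChar (u * τ ^ t.val)
        = ∑ x : (ZMod p)ˣ, χ (x : ZMod p) * ZMod.stdAddChar (u * (x : ZMod p)) :=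
      Fintype.sum_bijective _ hbij _ _ (fun t =>
        show ZMod.stdAddChar (m * t) * ZMod.stdAddChar (u * τ ^ t.val)
            = χ ((uτ ^ t.val : (ZMod p)ˣ) : ZMod p)
              * ZMod.stdAddChar (u * ((uτ ^ t.val : (ZMod p)ˣ) : ZMod p)) by
          rw [hvalpow t, heval t])
    rw [hrw, sum_units (p := p) (fun y => χ y * ZMod.stdAddChar (u * y))]
    have hzero : χ (0 : ZMod p) * ZMod.stdAddChar (u * 0) = 0 := by
      rw [MulChar.map_nonunit χ not_isUnit_zero, zero_mul]
    rw [hzero, sub_zero]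
    have hgs : ∑ x : ZMod p, χ x * ZMod.stdAddChar (u * x)
        = gaussSum χ (AddChar.mulShift (ZMod.stdAddChar (N := p)) u) := by
      rw [gaussSum]
      exact Finset.sum_congr rfl fun x _ => by rw [AddChar.mulShift_apply]
    rw [hgs]
    have hshift := gaussSum_mulShift χ (ZMod.stdAddChar (N := p)) (Units.mk0 u hu)
    have hval : ((Units.mk0 u hu : (ZMod p)ˣ) : ZMod p) = u := rfl
    have hns := congrArg norm hshift
    rw [norm_mul, norm_chi_unit χ (Units.mk0 u hu), one_mul, hval, gauss_norm χ hχ1] at hns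
    exact le_of_eq hns

end prime2


lemma cast_nat_inj {N : ℕ} [NeZero N] {i j : ℕ} (hi : i < N) (hj : j < N)
    (h : (i : ZMod N) = j) : i = j := by
  have := congrArg ZMod.val h
  rwa [ZMod.val_cast_of_lt hi, ZMod.val_cast_of_lt hj] at this

lemma interval_canon {N : ℕ} [NeZero N] {I : Finset (ZMod N)} (h : IsInterval I) :
    ∃ a len : ℕ, a < N ∧ len ≤ N ∧
      I = (Finset.range len).image (fun i : ℕ => ((a + i : ℕ) : ZMod N)) ∧
      (∀ x ∈ Finset.range len, ∀ y ∈ Finset.range len,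
        ((a + x : ℕ) : ZMod N) = ((a + y : ℕ) : ZMod N) → x = y) ∧
      I.card = len := by
  have hN : 0 < N := Nat.pos_of_ne_zero (NeZero.ne N)
  obtain ⟨a₀, len₀, hI⟩ := h
  have hinj : ∀ (a len : ℕ), len ≤ N → ∀ x ∈ Finset.range len, ∀ y ∈ Finset.range len,
      ((a + x : ℕ) : ZMod N) = ((a + y : ℕ) : ZMod N) → x = y := by
    intro a len hlen x hx y hy hxy
    simp only [Finset.mem_range] at hx hy
    have h1 : (x : ZMod N) = (y : ZMod N) := by
      have : ((a:ZMod N) + x) = ((a:ZMod N) + y) := by push_cast at hxy ⊢; exact hxy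
      exact add_left_cancel this
    exact cast_nat_inj (lt_of_lt_of_le hx hlen) (lt_of_lt_of_le hy hlen) h1
  have hcard : ∀ (a len : ℕ), len ≤ N →
      ((Finset.range len).image (fun i : ℕ => ((a + i : ℕ) : ZMod N))).card = len := by
    intro a len hlen
    rw [Finset.card_image_of_injOn, Finset.card_range]
    intro x hx y hy hxy
    simp only [Finset.coe_range, Set.mem_Iio] at hx hy
    exact hinj a len hlen x (Finset.mem_range.mpr hx) y (Finset.mem_range.mpr hy) hxy
  have hshift : ∀ (a : ℕ) (len : ℕ),
      (Finset.range len).image (fun i : ℕ => ((a + i : ℕ) : ZMod N))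
      = (Finset.range len).image (fun i : ℕ => ((a % N + i : ℕ) : ZMod N)) := by
    intro a len
    apply Finset.image_congr
    intro i _
    simp only
    push_cast
    rw [ZMod.natCast_mod]
  rcases le_or_gt len₀ N with hle | hlt
  · refine ⟨a₀ % N, len₀, Nat.mod_lt _ hN, hle, ?_, hinj _ _ hle, ?_⟩
    · rw [hI, hshift]
    · rw [hI, hshift]; exact hcard _ _ hle
  · -- I is everything
    have huniv : I = Finset.univ := by
      rw [hI]
      apply Finset.eq_univ_of_forall
      intro x
      simp only [Finset.mem_image, Finset.mem_range]
      refine ⟨(x - (a₀ : ZMod N)).val, lt_of_lt_of_le (ZMod.val_lt _) (le_of_lt hlt), ?_⟩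
      push_cast
      rw [ZMod.natCast_zmod_val]
      ring
    have huniv2 : (Finset.univ : Finset (ZMod N))
        = (Finset.range N).image (fun i : ℕ => ((0 + i : ℕ) : ZMod N)) := by
      apply (Finset.eq_univ_of_forall ?_).symm
      intro x
      simp only [Finset.mem_image, Finset.mem_range]
      exact ⟨x.val, ZMod.val_lt x, by rw [Nat.zero_add, ZMod.natCast_zmod_val]⟩
    refine ⟨0, N, hN, le_refl N, by rw [huniv, huniv2], hinj _ _ (le_refl N), ?_⟩
    rw [huniv, Finset.card_univ, ZMod.card]

section main
variable {p : ℕ} [hp : Fact p.Prime] [NeZero (p-1)] [NeZero p]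

lemma nowrap {τ : ZMod p} (hτ : IsPrimitiveRoot τ (p - 1)) {u : ZMod p} (hu : u ≠ 0)
    (b : ℕ) {len : ℕ} (hlen : len ≤ p - 1) :
    ‖∑ i ∈ Finset.range len, ZMod.stdAddChar (u * τ ^ (b + i))‖
      ≤ (3 + 2 * Real.log ((p-1 : ℕ) : ℝ)) * Real.sqrt p := by
  have hterm : ∀ i ∈ Finset.range len, ZMod.stdAddChar (u * τ ^ (b + i))
      = (fun t : ZMod (p-1) => ZMod.stdAddChar (u * τ ^ t.val))
          ((b : ZMod (p-1)) + (i : ZMod (p-1))) := by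
    intro i _
    simp only
    have h1 : ((b:ZMod (p-1)) + (i:ZMod (p-1))) = ((b + i : ℕ) : ZMod (p-1)) := by
      push_cast; ring
    rw [h1, ZMod.val_natCast]
    congr 2
    conv_lhs => rw [show b + i = (p-1) * ((b+i)/(p-1)) + (b+i) % (p-1) from
      (Nat.div_add_mod _ _).symm]
    rw [pow_add, pow_mul, hτ.pow_eq_one, one_pow, one_mul]
  rw [Finset.sum_congr rfl hterm]
  exact completion _ (fun m => S_bound hτ hu m) (b : ZMod (p-1)) hlen

lemma sigma_term {τ aσ : ZMod p} (σ : Equiv.Perm (ZMod p))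
    (hσs : ∀ s : ZMod p, s ≠ 0 → σ s = aσ * τ ^ s.val)
    {n : ZMod p} (k : ℕ) (hk0 : 0 < k) (hkp : k < p) :
    ZMod.stdAddChar (n * σ ((k : ℕ) : ZMod p)) = ZMod.stdAddChar ((n * aσ) * τ ^ k) := by
  have hne : ((k:ℕ):ZMod p) ≠ 0 := by
    intro h
    have := congrArg ZMod.val h
    rw [ZMod.val_cast_of_lt hkp, ZMod.val_zero] at this
    omega
  rw [hσs _ hne, ZMod.val_cast_of_lt hkp]
  congr 1
  ring

variable {τ aσ : ZMod p} (hτ : IsPrimitiveRoot τ (p - 1)) (ha : aσ ≠ 0)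
  (σ : Equiv.Perm (ZMod p)) (hσ0 : σ 0 = 0)
  (hσs : ∀ s : ZMod p, s ≠ 0 → σ s = aσ * τ ^ s.val)

include hτ ha hσ0 hσs in
lemma zero_start {n : ZMod p} (hn : n ≠ 0) {len : ℕ} (hlen : len ≤ p) :
    ‖∑ j ∈ Finset.range len, ZMod.stdAddChar (n * σ ((j :ℕ) : ZMod p))‖
      ≤ 1 + (3 + 2 * Real.log ((p-1 : ℕ) : ℝ)) * Real.sqrt p := by
  have hu : n * aσ ≠ 0 := mul_ne_zero hn ha
  have hB0 : 0 ≤ (3 + 2 * Real.log ((p-1 : ℕ) : ℝ)) * Real.sqrt p := by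
    have : (0:ℝ) ≤ Real.log ((p-1 : ℕ) : ℝ) := Real.log_natCast_nonneg _
    positivity
  rcases Nat.eq_zero_or_pos len with rfl | hpos
  · simp only [Finset.range_zero, Finset.sum_empty, norm_zero]
    linarith
  obtain ⟨l, rfl⟩ : ∃ l, len = l + 1 := ⟨len - 1, by omega⟩
  rw [Finset.sum_range_succ']
  have h0 : ZMod.stdAddChar (n * σ ((0:ℕ) : ZMod p)) = 1 := by
    rw [Nat.cast_zero, hσ0, mul_zero, AddChar.map_zero_eq_one]
  rw [h0]
  calc ‖∑ i ∈ Finset.range l, ZMod.stdAddChar (n * σ (((i+1:ℕ)) : ZMod p)) + 1‖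
      ≤ ‖∑ i ∈ Finset.range l, ZMod.stdAddChar (n * σ (((i+1:ℕ)) : ZMod p))‖ + ‖(1:ℂ)‖ :=
        norm_add_le _ _
    _ ≤ (3 + 2 * Real.log ((p-1 : ℕ) : ℝ)) * Real.sqrt p + 1 := by
        gcongr
        · have hrw : ∀ i ∈ Finset.range l, ZMod.stdAddChar (n * σ (((i+1:ℕ)) : ZMod p))
              = ZMod.stdAddChar ((n * aσ) * τ ^ (1 + i)) := by
            intro i hi
            simp only [Finset.mem_range] at hi
            rw [sigma_term σ hσs (i+1) (by omega) (by omega), add_comm 1 i]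
          rw [Finset.sum_congr rfl hrw]
          exact nowrap hτ hu 1 (by omega)
        · rw [norm_one]
    _ = 1 + (3 + 2 * Real.log ((p-1 : ℕ) : ℝ)) * Real.sqrt p := by ring

include hτ ha hσ0 hσs in
lemma W_bound {n : ZMod p} (hn : n ≠ 0) {a len : ℕ} (haN : a < p) (hlen : len ≤ p) :
    ‖∑ i ∈ Finset.range len, ZMod.stdAddChar (n * σ (((a + i :ℕ)) : ZMod p))‖
      ≤ 1 + 2 * ((3 + 2 * Real.log ((p-1 : ℕ) : ℝ)) * Real.sqrt p) := by
  have hu : n * aσ ≠ 0 := mul_ne_zero hn ha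
  set B := (3 + 2 * Real.log ((p-1 : ℕ) : ℝ)) * Real.sqrt p with hB
  have hB0 : 0 ≤ B := by
    have : (0:ℝ) ≤ Real.log ((p-1 : ℕ) : ℝ) := Real.log_natCast_nonneg _
    positivity
  rcases le_or_gt (a + len) p with hcase | hcase
  · -- no wraparound
    rcases Nat.eq_zero_or_pos a with rfl | hapos
    · -- starts at 0
      have := zero_start hτ ha σ hσ0 hσs hn (len := len) (by omega)
      simp only [Nat.zero_add] at this ⊢
      linarith
    · have hrw : ∀ i ∈ Finset.range len, ZMod.stdAddChar (n * σ (((a + i :ℕ)) : ZMod p))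
          = ZMod.stdAddChar ((n * aσ) * τ ^ (a + i)) := by
        intro i hi
        simp only [Finset.mem_range] at hi
        exact sigma_term σ hσs (a+i) (by omega) (by omega)
      rw [Finset.sum_congr rfl hrw]
      have := nowrap hτ hu a (len := len) (by omega)
      linarith
  · -- wraparound; a ≥ 1
    have hapos : 1 ≤ a := by omega
    have hsplit : ∑ i ∈ Finset.range len, ZMod.stdAddChar (n * σ (((a + i :ℕ)) : ZMod p))
        = (∑ i ∈ Finset.range (p - a), ZMod.stdAddChar (n * σ (((a + i :ℕ)) : ZMod p)))
          + ∑ i ∈ Finset.Ico (p - a) len, ZMod.stdAddChar (n * σ (((a + i :ℕ)) : ZMod p)) := by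
      rw [Finset.range_eq_Ico, ← Finset.sum_Ico_consecutive _ (Nat.zero_le (p-a)) (by omega),
        ← Finset.range_eq_Ico]
    rw [hsplit]
    have h2 : ∑ i ∈ Finset.Ico (p - a) len, ZMod.stdAddChar (n * σ (((a + i :ℕ)) : ZMod p))
        = ∑ j ∈ Finset.range (len - (p - a)),
            ZMod.stdAddChar (n * σ (((j :ℕ)) : ZMod p)) := by
      rw [Finset.sum_Ico_eq_sum_range]
      refine Finset.sum_congr rfl fun j hj => ?_
      congr 2
      have : (a + (p - a + j) : ℕ) = p + j := by omega
      rw [this]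
      push_cast [ZMod.natCast_self]
      ring
    rw [h2]
    have hfirst : ‖∑ i ∈ Finset.range (p - a),
        ZMod.stdAddChar (n * σ (((a + i :ℕ)) : ZMod p))‖ ≤ B := by
      have hrw : ∀ i ∈ Finset.range (p - a),
          ZMod.stdAddChar (n * σ (((a + i :ℕ)) : ZMod p))
          = ZMod.stdAddChar ((n * aσ) * τ ^ (a + i)) := by
        intro i hi
        simp only [Finset.mem_range] at hi
        exact sigma_term σ hσs (a+i) (by omega) (by omega)
      rw [Finset.sum_congr rfl hrw]
      exact nowrap hτ hu a (by omega)
    have hsecond := zero_start hτ ha σ hσ0 hσs hn (len := len - (p - a)) (by omega)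
    calc ‖_ + _‖ ≤ B + (1 + B) := le_trans (norm_add_le _ _) (add_le_add hfirst hsecond)
      _ = 1 + 2 * B := by ring

end main

lemma indicator_fourier {N : ℕ} [NeZero N] (J : Finset (ZMod N)) (x : ZMod N) :
    (if x ∈ J then (1:ℂ) else 0)
      = ∑ n : ZMod N, ((N:ℂ)⁻¹ * ∑ y ∈ J, ZMod.stdAddChar (-(n * y)))
          * ZMod.stdAddChar (n * x) := by
  have hNC : ((N:ℕ) : ℂ) ≠ 0 := by
    exact_mod_cast Nat.cast_ne_zero.mpr (NeZero.ne N)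
  have key : ∀ y : ZMod N,
      ∑ n : ZMod N, ZMod.stdAddChar (-(n*y)) * ZMod.stdAddChar (n*x)
        = if x = y then (N:ℂ) else 0 := by
    intro y
    have h1 : ∀ n : ZMod N, ZMod.stdAddChar (-(n*y)) * ZMod.stdAddChar (n*x)
        = ZMod.stdAddChar (n * (x - y)) := by
      intro n
      rw [← AddChar.map_add_eq_mul]
      congr 1
      ring
    rw [Finset.sum_congr rfl (fun n _ => h1 n), sum_std]
    congr 1
    simp [sub_eq_zero, eq_comm]
  calc (if x ∈ J then (1:ℂ) else 0)
      = (N:ℂ)⁻¹ * ∑ y ∈ J, (if x = y then (N:ℂ) else 0) := by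
        rw [Finset.sum_ite_eq]
        split_ifs <;> simp [inv_mul_cancel₀ hNC]
    _ = (N:ℂ)⁻¹ * ∑ y ∈ J, ∑ n : ZMod N,
          ZMod.stdAddChar (-(n*y)) * ZMod.stdAddChar (n*x) := by
        rw [Finset.sum_congr rfl (fun y _ => (key y).symm)]
    _ = (N:ℂ)⁻¹ * ∑ n : ZMod N, ∑ y ∈ J,
          ZMod.stdAddChar (-(n*y)) * ZMod.stdAddChar (n*x) := by
        rw [Finset.sum_comm]
    _ = ∑ n : ZMod N, ((N:ℂ)⁻¹ * ∑ y ∈ J, ZMod.stdAddChar (-(n * y)))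
          * ZMod.stdAddChar (n * x) := by
        rw [Finset.mul_sum]
        refine Finset.sum_congr rfl fun n _ => ?_
        rw [mul_assoc, Finset.sum_mul]

section final
variable {p : ℕ} [hp : Fact p.Prime] [NeZero (p-1)] [NeZero p]
variable {τ aσ : ZMod p} (hτ : IsPrimitiveRoot τ (p - 1)) (ha : aσ ≠ 0)
  (σ : Equiv.Perm (ZMod p)) (hσ0 : σ 0 = 0)
  (hσs : ∀ s : ZMod p, s ≠ 0 → σ s = aσ * τ ^ s.val)

include hτ ha hσ0 hσs in
lemma disc_bound {I J : Finset (ZMod p)} (hI : IsInterval I) (hJ : IsInterval J) :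
    discIn (I.image σ) J ≤
      2 * (1 + Real.log p) * (1 + 2 * ((3 + 2 * Real.log ((p-1 : ℕ) : ℝ)) * Real.sqrt p)) := by
  obtain ⟨aI, lenI, haI, hlenI, hIeq, hIinj, hIcard⟩ := interval_canon hI
  obtain ⟨bJ, lenJ, hbJ, hlenJ, hJeq, hJinj, hJcard⟩ := interval_canon hJ
  set B := (3 + 2 * Real.log ((p-1 : ℕ) : ℝ)) * Real.sqrt p with hBdef
  have hB0 : 0 ≤ B := by
    have := Real.log_natCast_nonneg (p-1); positivity
  set Wb : ℝ := 1 + 2 * B with hWbdef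
  have hWb0 : (0:ℝ) ≤ Wb := by rw [hWbdef]; linarith
  set c : ZMod p → ℂ := fun n => ((p:ℂ))⁻¹ * ∑ y ∈ J, ZMod.stdAddChar (-(n * y)) with hc
  set W : ZMod p → ℂ := fun n => ∑ s ∈ I, ZMod.stdAddChar (n * σ s) with hW
  have hfilter : ((I.image σ) ∩ J) = (I.filter (fun s => σ s ∈ J)).image σ := by
    ext x
    simp only [Finset.mem_inter, Finset.mem_image, Finset.mem_filter]
    constructor
    · rintro ⟨⟨s, hs, rfl⟩, hx⟩; exact ⟨s, ⟨hs, hx⟩, rfl⟩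
    · rintro ⟨s, ⟨hs, hsx⟩, rfl⟩; exact ⟨⟨s, hs, rfl⟩, hsx⟩
  have hcount : (((I.image σ) ∩ J).card : ℂ) = ∑ s ∈ I, (if σ s ∈ J then (1:ℂ) else 0) := by
    rw [hfilter, Finset.card_image_of_injective _ σ.injective, Finset.card_filter,
      Nat.cast_sum]
    exact Finset.sum_congr rfl fun s _ => by split_ifs <;> simp
  have hexp : ∑ s ∈ I, (if σ s ∈ J then (1:ℂ) else 0) = ∑ n : ZMod p, c n * W n := by
    calc ∑ s ∈ I, (if σ s ∈ J then (1:ℂ) else 0)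
        = ∑ s ∈ I, ∑ n : ZMod p, c n * ZMod.stdAddChar (n * σ s) :=
          Finset.sum_congr rfl fun s _ => indicator_fourier J (σ s)
      _ = ∑ n : ZMod p, ∑ s ∈ I, c n * ZMod.stdAddChar (n * σ s) := Finset.sum_comm
      _ = ∑ n : ZMod p, c n * W n := by
          refine Finset.sum_congr rfl fun n _ => ?_
          simp only [hW]
          rw [Finset.mul_sum]
  have hc0 : c 0 = (J.card : ℂ) / p := by
    simp only [hc, zero_mul, neg_zero, AddChar.map_zero_eq_one]
    rw [Finset.sum_const, nsmul_eq_mul, mul_one]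
    ring
  have hW0 : W 0 = (I.card : ℂ) := by
    simp only [hW, zero_mul, AddChar.map_zero_eq_one]
    rw [Finset.sum_const, nsmul_eq_mul, mul_one]
  have hsplit : ∑ n : ZMod p, c n * W n
      = c 0 * W 0 + ∑ n ∈ Finset.univ.erase 0, c n * W n :=
    (Finset.add_sum_erase _ _ (Finset.mem_univ 0)).symm
  set R : ℝ := (((I.image σ) ∩ J).card : ℝ) - ((I.image σ).card : ℝ) * J.card / p with hR
  have hRC : (R : ℂ) = ∑ n ∈ Finset.univ.erase 0, c n * W n := by
    have hcardim : ((I.image σ).card : ℝ) = (I.card : ℝ) := by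
      rw [Finset.card_image_of_injective _ σ.injective]
    rw [hR, hcardim]
    push_cast
    rw [hcount, hexp, hsplit, hc0, hW0]
    ring
  have hdisc : discIn (I.image σ) J = |R| := rfl
  rw [hdisc]
  have hRnorm : |R| = ‖(R:ℂ)‖ := by rw [Complex.norm_real]; rfl
  rw [hRnorm, hRC]
  have hWbound : ∀ n ∈ Finset.univ.erase (0 : ZMod p), ‖W n‖ ≤ Wb := by
    intro n hn
    have hn0 : n ≠ 0 := (Finset.mem_erase.mp hn).1
    have hsum : W n
        = ∑ i ∈ Finset.range lenI, ZMod.stdAddChar (n * σ (((aI + i : ℕ)) : ZMod p)) := by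
      simp only [hW]
      rw [hIeq, Finset.sum_image hIinj]
    rw [hsum, hWbdef, hBdef]
    exact W_bound hτ ha σ hσ0 hσs hn0 haI hlenI
  have hcbound : ∀ n ∈ Finset.univ.erase (0 : ZMod p),
      ‖c n‖ ≤ (p:ℝ)⁻¹ * ((p:ℝ) / min (n.val : ℝ) ((p:ℝ) - n.val)) := by
    intro n hn
    have hn0 : n ≠ 0 := (Finset.mem_erase.mp hn).1
    simp only [hc]
    rw [norm_mul, norm_inv, Complex.norm_natCast]
    have h1 : ∑ y ∈ J, ZMod.stdAddChar (-(n * y))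
        = ∑ i ∈ Finset.range lenJ,
            ZMod.stdAddChar ((-(n * ((bJ:ℕ) : ZMod p))) + (-n) * (i : ZMod p)) := by
      rw [hJeq, Finset.sum_image hJinj]
      refine Finset.sum_congr rfl fun i _ => ?_
      congr 1
      push_cast
      ring
    rw [h1]
    have h2 := geom_bound (N := p) (-n) (neg_ne_zero.mpr hn0) (-(n * ((bJ:ℕ) : ZMod p))) lenJ
    rw [min_neg_val n hn0] at h2
    exact mul_le_mul_of_nonneg_left h2 (by positivity)
  calc ‖∑ n ∈ Finset.univ.erase (0:ZMod p), c n * W n‖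
      ≤ ∑ n ∈ Finset.univ.erase (0:ZMod p), ‖c n‖ * ‖W n‖ := by
        refine le_trans (norm_sum_le _ _) (Finset.sum_le_sum fun n _ => ?_)
        rw [norm_mul]
    _ ≤ ∑ n ∈ Finset.univ.erase (0:ZMod p), ‖c n‖ * Wb :=
        Finset.sum_le_sum fun n hn =>
          mul_le_mul_of_nonneg_left (hWbound n hn) (norm_nonneg _)
    _ = (∑ n ∈ Finset.univ.erase (0:ZMod p), ‖c n‖) * Wb := by rw [Finset.sum_mul]
    _ ≤ (2 * (1 + Real.log p)) * Wb := by
        refine mul_le_mul_of_nonneg_right ?_ hWb0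
        have hpR : (0:ℝ) < p := by exact_mod_cast hp.out.pos
        calc ∑ n ∈ Finset.univ.erase (0:ZMod p), ‖c n‖
            ≤ ∑ n ∈ Finset.univ.erase (0:ZMod p),
                (p:ℝ)⁻¹ * ((p:ℝ) / min (n.val : ℝ) ((p:ℝ) - n.val)) :=
              Finset.sum_le_sum hcbound
          _ = (p:ℝ)⁻¹ * ∑ n ∈ Finset.univ.erase (0:ZMod p),
                ((p:ℝ) / min (n.val : ℝ) ((p:ℝ) - n.val)) := by rw [Finset.mul_sum]
          _ ≤ (p:ℝ)⁻¹ * (2 * p * (1 + Real.log p)) :=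
              mul_le_mul_of_nonneg_left coef_total (by positivity)
          _ = 2 * (1 + Real.log p) := by field_simp
    _ = 2 * (1 + Real.log p) * (1 + 2 * B) := rfl

end final



end PV

/-- For `p ≥ 3` prime, `τ` a primitive root mod `p` and `a ∈ (ZMod p)ˣ`, the permutation
`ρ_{a,τ}` (with `ρ(0)=0` and `ρ(s)=a·τ^s` for `s ≠ 0`) has `D(ρ_{a,τ}) ≤ C √p (log p)²`. -/
theorem stmt_7 :
    ∃ C : ℝ, ∀ (p : ℕ), p.Prime → 3 ≤ p → ∀ (τ a : ZMod p),
      IsPrimitiveRoot τ (p - 1) → a ≠ 0 →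
      ∀ σ : Equiv.Perm (ZMod p),
        (σ 0 = 0 ∧ ∀ s : ZMod p, s ≠ 0 → σ s = a * τ ^ s.val) →
        disc σ ≤ C * Real.sqrt p * (Real.log p) ^ 2 := by
  use 44
  intro p hpp hp3 τ a hτ ha σ hσ
  obtain ⟨hσ0, hσs⟩ := hσ
  haveI : Fact p.Prime := ⟨hpp⟩
  haveI : NeZero p := ⟨by omega⟩
  haveI : NeZero (p-1) := ⟨by omega⟩
  have hlog3 : (1:ℝ) ≤ Real.log 3 := by
    rw [Real.le_log_iff_exp_le (by norm_num)]
    calc Real.exp 1 ≤ 2.7182818286 := le_of_lt Real.exp_one_lt_d9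
      _ ≤ 3 := by norm_num
  have hL : (1:ℝ) ≤ Real.log p :=
    le_trans hlog3 (Real.log_le_log (by norm_num) (by exact_mod_cast hp3))
  have hLq : Real.log ((p-1:ℕ):ℝ) ≤ Real.log p := by
    have h0 : (0:ℝ) < ((p-1:ℕ):ℝ) := by
      have h1 : 1 ≤ p - 1 := by omega
      exact_mod_cast Nat.lt_of_lt_of_le Nat.zero_lt_one h1
    exact Real.log_le_log h0 (by exact_mod_cast Nat.sub_le p 1)
  have hq0 : (0:ℝ) ≤ Real.log ((p-1:ℕ):ℝ) := Real.log_natCast_nonneg _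
  have hs1 : (1:ℝ) ≤ Real.sqrt p := by
    rw [show (1:ℝ) = Real.sqrt 1 by simp]
    exact Real.sqrt_le_sqrt (by exact_mod_cast hpp.one_lt.le)
  have hs0 : (0:ℝ) ≤ Real.sqrt p := Real.sqrt_nonneg _
  apply Real.sSup_le
  · rintro d ⟨I, J, hI, hJ, rfl⟩
    refine le_trans (PV.disc_bound hτ ha σ hσ0 hσs hI hJ) ?_
    set L := Real.log p with hLdef
    set Lq := Real.log ((p-1:ℕ):ℝ) with hLqdef
    set s := Real.sqrt p with hsdef
    have hLs : (1:ℝ) ≤ L * s := by nlinarith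
    have f1 : 2 * (1 + L) ≤ 4 * L := by linarith
    have f2 : 1 + 2 * ((3 + 2 * Lq) * s) ≤ 11 * (L * s) := by nlinarith
    have f3 : (0:ℝ) ≤ 1 + 2 * ((3 + 2 * Lq) * s) := by positivity
    have f4 : (0:ℝ) ≤ 4 * L := by linarith
    calc 2 * (1 + L) * (1 + 2 * ((3 + 2 * Lq) * s))
        ≤ (4 * L) * (11 * (L * s)) := mul_le_mul f1 f2 f3 f4
      _ = 44 * s * L ^ 2 := by ring
  · positivity
end

section
/- There is an absolute constant C such that for every prime p, every a ∈ Z_p^×, and every integer k with 2 ≤ k ≤ p−1 and gcd(k, p−1) = 1, the power permutation η_{a,k} satisfies D(η_{a,k}) ≤ C · k^{1/4} · p^{3/4} · (log p)². -/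
open Finset

noncomputable def Complex.abs : AbsoluteValue ℂ ℝ :=
  IsAbsoluteValue.toAbsoluteValue (norm : ℂ → ℝ)

theorem Complex.norm_eq_abs (z : ℂ) : ‖z‖ = Complex.abs z := rfl

theorem Complex.sq_abs (z : ℂ) : Complex.abs z ^ 2 = Complex.normSq z := Complex.sq_norm z

theorem Complex.abs_add_mul_I (x y : ℝ) :
    Complex.abs (x + y * Complex.I) = Real.sqrt (x ^ 2 + y ^ 2) := Complex.norm_add_mul_I x y

theorem Complex.abs_ofReal (r : ℝ) : Complex.abs (r : ℂ) = |r| := Complex.norm_real r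

namespace Stmt9Aux

set_option linter.unusedSectionVars false

noncomputable def pc (p : ℕ) (x : ZMod p) : ℂ :=
  Complex.exp (((2 * Real.pi * (x.val / p) : ℝ) : ℂ) * Complex.I)

lemma pc_abs (p : ℕ) (x : ZMod p) : Complex.abs (pc p x) = 1 :=
  Complex.norm_exp_ofReal_mul_I _

lemma pc_zero (p : ℕ) : pc p 0 = 1 := by
  simp [pc]

lemma pc_nat (p : ℕ) [NeZero p] (m : ℕ) :
    pc p (m : ZMod p) = Complex.exp (((2 * Real.pi * (m / p) : ℝ) : ℂ) * Complex.I) := by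
  have hv : ((m : ZMod p)).val = m % p := ZMod.val_natCast p m
  have hm : (m : ℂ) = ((m % p : ℕ) : ℂ) + (p : ℂ) * ((m / p : ℕ) : ℂ) := by
    exact_mod_cast (Nat.mod_add_div m p).symm
  have hp : (p : ℂ) ≠ 0 := Nat.cast_ne_zero.2 (NeZero.ne p)
  rw [pc, hv]
  rw [show ((2 * Real.pi * ((m:ℝ) / p) : ℝ) : ℂ) * Complex.I
      = ((2 * Real.pi * (((m % p : ℕ) : ℝ) / p) : ℝ) : ℂ) * Complex.I
        + ((m / p : ℕ) : ℂ) * (2 * Real.pi * Complex.I) by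
    push_cast
    rw [hm]
    field_simp]
  rw [Complex.exp_add, Complex.exp_nat_mul_two_pi_mul_I, mul_one]

lemma pc_add (p : ℕ) [NeZero p] (x y : ZMod p) : pc p (x + y) = pc p x * pc p y := by
  have hx : x = ((x.val : ℕ) : ZMod p) := by simp [ZMod.natCast_val, ZMod.cast_id]
  have hy : y = ((y.val : ℕ) : ZMod p) := by simp [ZMod.natCast_val, ZMod.cast_id]
  rw [hx, hy, ← Nat.cast_add, pc_nat, pc_nat, pc_nat, ← Complex.exp_add]
  congr 1
  push_cast
  ring


variable (p : ℕ) [NeZero p]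

lemma pc_natmul (n : ℕ) (x : ZMod p) : pc p ((n : ZMod p) * x) = pc p x ^ n := by
  induction n with
  | zero => simp [pc_zero]
  | succ n ih =>
      push_cast
      rw [add_mul, one_mul, pc_add, ih, pow_succ]

lemma pc_ne_zero (x : ZMod p) : pc p x ≠ 0 := by
  intro h
  have := pc_abs p x
  rw [h] at this
  simp at this

lemma pc_neg (x : ZMod p) : pc p (-x) = (pc p x)⁻¹ := by
  have h : pc p x * pc p (-x) = 1 := by
    rw [← pc_add, add_neg_cancel, pc_zero]
  exact eq_inv_of_mul_eq_one_left (by rwa [mul_comm] at h)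

lemma pc_conj (x : ZMod p) : (starRingEnd ℂ) (pc p x) = pc p (-x) := by
  rw [pc_neg]
  have h1 : pc p x * (starRingEnd ℂ) (pc p x) = 1 := by
    rw [Complex.mul_conj]
    norm_cast
    rw [← Complex.sq_abs, pc_abs]
    norm_num
  exact (eq_inv_of_mul_eq_one_right h1).symm ▸ rfl

lemma pc_eq_one_iff (x : ZMod p) : pc p x = 1 ↔ x = 0 := by
  constructor
  · intro h
    have hx : x = ((x.val : ℕ) : ZMod p) := by simp [ZMod.natCast_val, ZMod.cast_id]
    rw [hx, pc_nat, Complex.exp_eq_one_iff] at h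
    obtain ⟨n, hn⟩ := h
    have hre : 2 * Real.pi * ((x.val : ℝ) / p) = n * (2 * Real.pi) := by
      have := congrArg Complex.im hn
      simpa using this
    have hp0 : (0:ℝ) < (p : ℝ) := by
      exact_mod_cast Nat.pos_of_ne_zero (NeZero.ne p)
    have hfrac : ((x.val : ℝ) / p) = n := by
      have h2 : (2 * Real.pi) * ((x.val : ℝ) / p) = (2 * Real.pi) * n := by linarith [hre]
      exact mul_left_cancel₀ (by positivity) h2
    have h0 : (0:ℝ) ≤ (n:ℝ) := hfrac ▸ by positivity
    have h1 : (n:ℝ) < 1 := by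
      rw [← hfrac, div_lt_one hp0]
      exact_mod_cast ZMod.val_lt x
    have hn0 : n = 0 := by
      have : (0:ℤ) ≤ n ∧ n < 1 := by exact_mod_cast And.intro h0 h1
      omega
    have hv : (x.val : ℝ) = 0 := by
      rw [hn0] at hfrac
      field_simp at hfrac
      simpa using hfrac
    have : x.val = 0 := by exact_mod_cast hv
    rw [hx, this, Nat.cast_zero]

  · intro h; rw [h, pc_zero]

lemma sum_pc (hp : Fact p.Prime) (c : ZMod p) :
    ∑ x : ZMod p, pc p (c * x) = if c = 0 then (p : ℂ) else 0 := by
  split_ifs with hc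
  · subst hc
    simp only [zero_mul, pc_zero]
    simp [ZMod.card]
  · set S := ∑ x : ZMod p, pc p (c * x) with hS
    have key : pc p 1 * S = S := by
      rw [hS, Finset.mul_sum]
      calc ∑ x : ZMod p, pc p 1 * pc p (c * x)
          = ∑ x : ZMod p, pc p (c * (x + c⁻¹)) := by
            apply Finset.sum_congr rfl
            intro x _
            rw [mul_add, pc_add, mul_inv_cancel₀ hc, mul_comm]
        _ = S := Equiv.sum_comp (Equiv.addRight (c⁻¹ : ZMod p)) (fun x => pc p (c * x))
    have h1 : pc p 1 ≠ 1 := by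
      rw [Ne, pc_eq_one_iff]
      exact one_ne_zero
    have h2 : (pc p 1 - 1) * S = 0 := by
      rw [sub_mul, one_mul, key, sub_self]
    rcases mul_eq_zero.1 h2 with h | h
    · exact absurd (by linear_combination h) h1
    · exact h

-- indicator expansion
lemma sum_hat (hp : Fact p.Prime) (S : Finset (ZMod p)) (y : ZMod p) :
    ∑ t : ZMod p, (∑ j ∈ S, pc p (-(t * j))) * pc p (t * y)
      = if y ∈ S then (p : ℂ) else 0 := by
  have h1 : ∀ t : ZMod p, (∑ j ∈ S, pc p (-(t * j))) * pc p (t * y)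
      = ∑ j ∈ S, pc p ((y - j) * t) := by
    intro t
    rw [Finset.sum_mul]
    apply Finset.sum_congr rfl
    intro j _
    rw [← pc_add]
    congr 1
    ring
  simp only [h1]
  rw [Finset.sum_comm]
  have h2 : ∀ j : ZMod p, ∑ t : ZMod p, pc p ((y - j) * t) = if y = j then (p:ℂ) else 0 := by
    intro j
    rw [sum_pc p hp (y - j)]
    simp [sub_eq_zero]
  simp only [h2]
  rw [Finset.sum_ite_eq]

lemma pc_quad (m1 m2 m3 m4 : ZMod p) :
    pc p m1 * pc p m2 * (pc p (-m3) * pc p (-m4)) = pc p (m1 + m2 - m3 - m4) := by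
  rw [← pc_add, ← pc_add, ← pc_add]
  congr 1
  ring

lemma moment (hp : Fact p.Prime) (kk : ℕ) :
    ∑ c : ZMod p, ∑ u : ZMod p,
      ((∑ x : ZMod p, pc p (c * x ^ kk + u * x)) *
        (starRingEnd ℂ) (∑ x : ZMod p, pc p (c * x ^ kk + u * x))) ^ 2
    = (p : ℂ)^2 * ((Finset.univ.filter
        (fun q : ZMod p × ZMod p × ZMod p × ZMod p =>
          q.1 ^ kk + q.2.2.1 ^ kk - (q.2.1 ^ kk + q.2.2.2 ^ kk) = 0 ∧
          q.1 + q.2.2.1 - (q.2.1 + q.2.2.2) = 0)).card : ℂ) := by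
  set E1 : ZMod p × ZMod p × ZMod p × ZMod p → ZMod p :=
    fun q => q.1 ^ kk + q.2.2.1 ^ kk - (q.2.1 ^ kk + q.2.2.2 ^ kk) with hE1
  set E2 : ZMod p × ZMod p × ZMod p × ZMod p → ZMod p :=
    fun q => q.1 + q.2.2.1 - (q.2.1 + q.2.2.2) with hE2
  have expand : ∀ c u : ZMod p,
      ((∑ x : ZMod p, pc p (c * x ^ kk + u * x)) *
        (starRingEnd ℂ) (∑ x : ZMod p, pc p (c * x ^ kk + u * x))) ^ 2
      = ∑ q : ZMod p × ZMod p × ZMod p × ZMod p, pc p (c * E1 q + u * E2 q) := by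
    intro c u
    have hconj : (starRingEnd ℂ) (∑ x : ZMod p, pc p (c * x ^ kk + u * x))
        = ∑ x : ZMod p, pc p (-(c * x ^ kk + u * x)) := by
      rw [map_sum]
      exact Finset.sum_congr rfl fun x _ => pc_conj p _
    rw [hconj]
    rw [show ((∑ x : ZMod p, pc p (c * x ^ kk + u * x)) *
        (∑ x : ZMod p, pc p (-(c * x ^ kk + u * x)))) ^ 2
      = ((∑ x : ZMod p, pc p (c * x ^ kk + u * x)) * (∑ x : ZMod p, pc p (c * x ^ kk + u * x))) *
        ((∑ x : ZMod p, pc p (-(c * x ^ kk + u * x))) * (∑ x : ZMod p, pc p (-(c * x ^ kk + u * x))))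
      from by ring]
    rw [Finset.sum_mul_sum, Finset.sum_mul_sum, Finset.sum_mul_sum]
    rw [Fintype.sum_prod_type]
    refine Finset.sum_congr rfl fun x1 _ => ?_
    rw [Fintype.sum_prod_type]
    refine Finset.sum_congr rfl fun x3 _ => ?_
    rw [Finset.sum_mul_sum, Fintype.sum_prod_type]
    refine Finset.sum_congr rfl fun x2 _ => ?_
    refine Finset.sum_congr rfl fun x4 _ => ?_
    rw [pc_quad]
    congr 1
    simp only [hE1, hE2]
    ring
  calc ∑ c : ZMod p, ∑ u : ZMod p,
      ((∑ x : ZMod p, pc p (c * x ^ kk + u * x)) *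
        (starRingEnd ℂ) (∑ x : ZMod p, pc p (c * x ^ kk + u * x))) ^ 2
      = ∑ c : ZMod p, ∑ u : ZMod p, ∑ q : ZMod p × ZMod p × ZMod p × ZMod p,
          pc p (c * E1 q + u * E2 q) := by
        exact Finset.sum_congr rfl fun c _ => Finset.sum_congr rfl fun u _ => expand c u
    _ = ∑ cu : ZMod p × ZMod p, ∑ q : ZMod p × ZMod p × ZMod p × ZMod p,
          pc p (cu.1 * E1 q + cu.2 * E2 q) := by
        rw [Fintype.sum_prod_type]
    _ = ∑ q : ZMod p × ZMod p × ZMod p × ZMod p, ∑ cu : ZMod p × ZMod p,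
          pc p (cu.1 * E1 q + cu.2 * E2 q) := Finset.sum_comm
    _ = ∑ q : ZMod p × ZMod p × ZMod p × ZMod p,
          (∑ c : ZMod p, pc p (c * E1 q)) * (∑ u : ZMod p, pc p (u * E2 q)) := by
        refine Finset.sum_congr rfl fun q _ => ?_
        rw [Finset.sum_mul_sum, Fintype.sum_prod_type]
        exact Finset.sum_congr rfl fun c _ => Finset.sum_congr rfl fun u _ => (pc_add p _ _)
    _ = ∑ q : ZMod p × ZMod p × ZMod p × ZMod p,
          (if E1 q = 0 ∧ E2 q = 0 then (p:ℂ)^2 else 0) := by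
        refine Finset.sum_congr rfl fun q _ => ?_
        have hc : ∑ c : ZMod p, pc p (c * E1 q) = (if E1 q = 0 then (p:ℂ) else 0) := by
          rw [← sum_pc p hp (E1 q)]
          exact Finset.sum_congr rfl fun c _ => by rw [mul_comm]
        have hu : ∑ u : ZMod p, pc p (u * E2 q) = (if E2 q = 0 then (p:ℂ) else 0) := by
          rw [← sum_pc p hp (E2 q)]
          exact Finset.sum_congr rfl fun u _ => by rw [mul_comm]
        rw [hc, hu]
        by_cases h1 : E1 q = 0 <;> by_cases h2 : E2 q = 0 <;> simp [h1, h2] <;> ring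
    _ = (p : ℂ)^2 * ((Finset.univ.filter
          (fun q : ZMod p × ZMod p × ZMod p × ZMod p => E1 q = 0 ∧ E2 q = 0)).card : ℂ) := by
        rw [Finset.sum_ite, Finset.sum_const, Finset.sum_const_zero, add_zero, nsmul_eq_mul]
        ring

end Stmt9Aux

namespace Stmt9Aux
open Polynomial in
lemma roots_bound (p : ℕ) (hp : Fact p.Prime) (kk : ℕ) (hk2 : 2 ≤ kk) (hkp : kk ≤ p - 1)
    (hkodd : Odd kk) (s v : ZMod p) (hs : s ≠ 0) :
    (Finset.univ.filter fun x : ZMod p => x ^ kk + (s - x) ^ kk = v).card ≤ kk := by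
  haveI := hp
  have hppos : 0 < p := (Fact.out : p.Prime).pos
  set f : (ZMod p)[X] := X ^ kk + (C s - X) ^ kk - C v with hf
  have hsub : (C s - X : (ZMod p)[X]) = -(X + C (-s)) := by
    rw [map_neg]; ring
  have hco : f.coeff (kk - 1) = (kk : ZMod p) * s := by
    rw [hf, hsub, Odd.neg_pow hkodd]
    rw [Polynomial.coeff_sub, Polynomial.coeff_add, Polynomial.coeff_X_pow,
      Polynomial.coeff_neg, Polynomial.coeff_X_add_C_pow, Polynomial.coeff_C]
    have h1 : kk - 1 ≠ kk := by omega
    have h2 : kk - 1 ≠ 0 := by omega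
    have h3 : kk - (kk - 1) = 1 := by omega
    rw [if_neg h1, if_neg h2, h3, Nat.choose_symm (by omega : 1 ≤ kk), Nat.choose_one_right]
    ring
  have hkne : (kk : ZMod p) ≠ 0 := by
    rw [Ne, ZMod.natCast_eq_zero_iff]
    intro hdvd
    have := Nat.le_of_dvd (by omega) hdvd
    omega
  have hf0 : f ≠ 0 := by
    intro h
    rw [h, Polynomial.coeff_zero] at hco
    exact (mul_ne_zero hkne hs) hco.symm
  have hdeg : f.natDegree ≤ kk := by
    rw [hf]
    refine le_trans (Polynomial.natDegree_sub_le _ _) ?_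
    simp only [max_le_iff]
    constructor
    · refine le_trans (Polynomial.natDegree_add_le _ _) ?_
      simp only [max_le_iff, Polynomial.natDegree_X_pow, le_refl, true_and]
      rw [Polynomial.natDegree_pow]
      have h5 : (C s - X : (ZMod p)[X]).natDegree ≤ 1 :=
        le_trans (Polynomial.natDegree_sub_le _ _) (by simp)
      calc kk * (C s - X : (ZMod p)[X]).natDegree ≤ kk * 1 := Nat.mul_le_mul_left kk h5
        _ = kk := mul_one kk
    · simp [Polynomial.natDegree_C]
  have hsubset : (Finset.univ.filter fun x : ZMod p => x ^ kk + (s - x) ^ kk = v)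
      ⊆ f.roots.toFinset := by
    intro x hx
    rw [Finset.mem_filter] at hx
    rw [Multiset.mem_toFinset, Polynomial.mem_roots hf0]
    simp only [Polynomial.IsRoot, hf, Polynomial.eval_sub, Polynomial.eval_add,
      Polynomial.eval_pow, Polynomial.eval_X, Polynomial.eval_C]
    rw [hx.2]
    ring
  calc (Finset.univ.filter fun x : ZMod p => x ^ kk + (s - x) ^ kk = v).card
      ≤ f.roots.toFinset.card := Finset.card_le_card hsubset
    _ ≤ Multiset.card f.roots := Multiset.toFinset_card_le _
    _ ≤ f.natDegree := f.card_roots'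
    _ ≤ kk := hdeg


lemma count_bound (p : ℕ) (hp : Fact p.Prime) (kk : ℕ) (hk2 : 2 ≤ kk) (hkp : kk ≤ p - 1)
    (hkodd : Odd kk) :
    ((Finset.univ.filter
        (fun q : ZMod p × ZMod p × ZMod p × ZMod p =>
          q.1 ^ kk + q.2.2.1 ^ kk - (q.2.1 ^ kk + q.2.2.2 ^ kk) = 0 ∧
          q.1 + q.2.2.1 - (q.2.1 + q.2.2.2) = 0)).card : ℝ) ≤ (kk + 1) * (p:ℝ)^2 := by
  haveI := hp
  set P : ZMod p × ZMod p × ZMod p × ZMod p → Prop :=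
    fun q => q.1 ^ kk + q.2.2.1 ^ kk - (q.2.1 ^ kk + q.2.2.2 ^ kk) = 0 ∧
      q.1 + q.2.2.1 - (q.2.1 + q.2.2.2) = 0 with hP
  have key : (Finset.univ.filter (fun q => P q)).card ≤ (kk + 1) * p^2 := by
    rw [Finset.card_eq_sum_card_fiberwise
      (f := fun q : ZMod p × ZMod p × ZMod p × ZMod p => (q.2.1, q.2.2.2))
      (t := Finset.univ) (fun _ _ => Finset.mem_univ _)]
    have fiber_le : ∀ be : ZMod p × ZMod p,
        ((Finset.univ.filter (fun q => P q)).filter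
          (fun q : ZMod p × ZMod p × ZMod p × ZMod p => (q.2.1, q.2.2.2) = be)).card
        ≤ if be.1 + be.2 = 0 then p else kk := by
      intro be
      obtain ⟨b, e⟩ := be
      by_cases hbe : b + e = 0
      · rw [if_pos hbe]
        have : ((Finset.univ.filter (fun q => P q)).filter
            (fun q : ZMod p × ZMod p × ZMod p × ZMod p => (q.2.1, q.2.2.2) = (b, e))).card
            ≤ (Finset.univ : Finset (ZMod p)).card := by
          apply Finset.card_le_card_of_injOn (fun q => q.1) (fun _ _ => Finset.mem_univ _)
          intro q hq q' hq' hqq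
          have hqq : q.1 = q'.1 := hqq
          simp only [Finset.mem_coe, Finset.mem_filter, Finset.mem_univ, true_and, hP,
            Prod.mk.injEq] at hq hq'
          obtain ⟨⟨g1, g2⟩, g3, g4⟩ := hq
          obtain ⟨⟨g1', g2'⟩, g3', g4'⟩ := hq'
          have e2 : q.2.2.1 = q'.2.2.1 := by
            rw [g3, g4] at g2
            rw [g3', g4'] at g2'
            rw [sub_eq_zero] at g2 g2'
            have : q.1 + q.2.2.1 = q'.1 + q'.2.2.1 := by rw [g2, g2']
            rw [hqq] at this
            exact add_left_cancel this
          have e3 : q.2.1 = q'.2.1 := by rw [g3, g3']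
          have e4 : q.2.2.2 = q'.2.2.2 := by rw [g4, g4']
          exact Prod.ext hqq (Prod.ext e3 (Prod.ext e2 e4))
        simpa [ZMod.card] using this
      · rw [if_neg hbe]
        -- inject into root set
        have hinj : ∀ q ∈ (Finset.univ.filter (fun q => P q)).filter
            (fun q : ZMod p × ZMod p × ZMod p × ZMod p => (q.2.1, q.2.2.2) = (b, e)),
            q.1 ∈ Finset.univ.filter
              (fun x : ZMod p => x ^ kk + ((b + e) - x) ^ kk = b ^ kk + e ^ kk) := by
          intro q hq
          simp only [Finset.mem_filter, Finset.mem_univ, true_and, hP, Prod.mk.injEq] at hq ⊢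
          obtain ⟨⟨h1, h2⟩, h3, h4⟩ := hq
          rw [h3, h4] at h1 h2
          have hx2 : q.2.2.1 = (b + e) - q.1 := by linear_combination h2
          rw [← hx2]
          linear_combination h1
        calc ((Finset.univ.filter (fun q => P q)).filter
            (fun q : ZMod p × ZMod p × ZMod p × ZMod p => (q.2.1, q.2.2.2) = (b, e))).card
            ≤ (Finset.univ.filter
              (fun x : ZMod p => x ^ kk + ((b + e) - x) ^ kk = b ^ kk + e ^ kk)).card := by
              apply Finset.card_le_card_of_injOn (fun q => q.1) (fun q hq => hinj q hq)
              intro q hq q' hq' hqq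
              have hqq : q.1 = q'.1 := hqq
              simp only [Finset.mem_coe, Finset.mem_filter, Finset.mem_univ, true_and, hP,
                Prod.mk.injEq] at hq hq'
              obtain ⟨⟨g1, g2⟩, g3, g4⟩ := hq
              obtain ⟨⟨g1', g2'⟩, g3', g4'⟩ := hq'
              have e2 : q.2.2.1 = q'.2.2.1 := by
                rw [g3, g4] at g2
                rw [g3', g4'] at g2'
                rw [sub_eq_zero] at g2 g2'
                have : q.1 + q.2.2.1 = q'.1 + q'.2.2.1 := by rw [g2, g2']
                rw [hqq] at this
                exact add_left_cancel this
              have e3 : q.2.1 = q'.2.1 := by rw [g3, g3']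
              have e4 : q.2.2.2 = q'.2.2.2 := by rw [g4, g4']
              exact Prod.ext hqq (Prod.ext e3 (Prod.ext e2 e4))
          _ ≤ kk := roots_bound p hp kk hk2 hkp hkodd (b + e) (b ^ kk + e ^ kk) hbe
    calc ∑ be : ZMod p × ZMod p, ((Finset.univ.filter (fun q => P q)).filter
          (fun q : ZMod p × ZMod p × ZMod p × ZMod p => (q.2.1, q.2.2.2) = be)).card
        ≤ ∑ be : ZMod p × ZMod p, if be.1 + be.2 = 0 then p else kk :=
          Finset.sum_le_sum (fun be _ => fiber_le be)
      _ ≤ (kk + 1) * p ^ 2 := by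
          rw [Finset.sum_ite, Finset.sum_const, Finset.sum_const]
          have hc1 : (Finset.univ.filter (fun be : ZMod p × ZMod p => be.1 + be.2 = 0)).card ≤ p := by
            have : (Finset.univ.filter (fun be : ZMod p × ZMod p => be.1 + be.2 = 0)).card
                ≤ (Finset.univ : Finset (ZMod p)).card := by
              apply Finset.card_le_card_of_injOn (fun be => be.1) (fun _ _ => Finset.mem_univ _)
              intro x hx y hy hxy
              have hxy : x.1 = y.1 := hxy
              simp only [Finset.mem_coe, Finset.mem_filter, Finset.mem_univ, true_and] at hx hy
              have : x.2 = y.2 := by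
                have hx2 : x.2 = -x.1 := by linear_combination hx
                have hy2 : y.2 = -y.1 := by linear_combination hy
                rw [hx2, hy2, hxy]
              exact Prod.ext hxy this
            simpa [ZMod.card] using this
          have hc2 : (Finset.univ.filter
              (fun be : ZMod p × ZMod p => ¬ be.1 + be.2 = 0)).card ≤ p^2 := by
            calc _ ≤ (Finset.univ : Finset (ZMod p × ZMod p)).card := Finset.card_filter_le _ _
              _ = p ^ 2 := by rw [Finset.card_univ, Fintype.card_prod, ZMod.card]; ring
          calc (Finset.univ.filter (fun be : ZMod p × ZMod p => be.1 + be.2 = 0)).card * p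
              + (Finset.univ.filter
              (fun be : ZMod p × ZMod p => ¬ be.1 + be.2 = 0)).card * kk
              ≤ p * p + p^2 * kk :=
                Nat.add_le_add (Nat.mul_le_mul_right p hc1) (Nat.mul_le_mul_right kk hc2)
            _ ≤ (kk + 1) * p^2 := by nlinarith
  calc ((Finset.univ.filter (fun q => P q)).card : ℝ) ≤ ((kk + 1) * p^2 : ℕ) := by
        exact_mod_cast key
    _ = (kk + 1) * (p:ℝ)^2 := by push_cast; ring

variable (p : ℕ) [NeZero p]

lemma moment_real (hp : Fact p.Prime) (kk : ℕ) :
    ∑ c : ZMod p, ∑ u : ZMod p,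
      (Complex.abs (∑ x : ZMod p, pc p (c * x ^ kk + u * x))) ^ 4
    = (p : ℝ)^2 * ((Finset.univ.filter
        (fun q : ZMod p × ZMod p × ZMod p × ZMod p =>
          q.1 ^ kk + q.2.2.1 ^ kk - (q.2.1 ^ kk + q.2.2.2 ^ kk) = 0 ∧
          q.1 + q.2.2.1 - (q.2.1 + q.2.2.2) = 0)).card : ℝ) := by
  have h := moment p hp kk
  have habs : ∀ c u : ZMod p,
      ((∑ x : ZMod p, pc p (c * x ^ kk + u * x)) *
        (starRingEnd ℂ) (∑ x : ZMod p, pc p (c * x ^ kk + u * x))) ^ 2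
      = (((Complex.abs (∑ x : ZMod p, pc p (c * x ^ kk + u * x))) ^ 4 : ℝ) : ℂ) := by
    intro c u
    rw [Complex.mul_conj]
    push_cast
    rw [← Complex.sq_abs]
    norm_cast
    ring
  simp only [habs] at h
  exact_mod_cast h


lemma T_pow4_le (hp : Fact p.Prime) (kk : ℕ) (hk2 : 2 ≤ kk) (hkp : kk ≤ p - 1)
    (hkodd : Odd kk) (hinj : Function.Injective (fun s : ZMod p => s ^ kk))
    (c u : ZMod p) (hc : c ≠ 0) :
    (Complex.abs (∑ x : ZMod p, pc p (c * x ^ kk + u * x))) ^ 4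
      ≤ 2 * (kk + 1) * (p:ℝ)^3 := by
  have hp2 : (2:ℝ) ≤ (p:ℝ) := by exact_mod_cast hp.out.two_le
  set A : ZMod p → ZMod p → ℝ :=
    fun c u => (Complex.abs (∑ x : ZMod p, pc p (c * x ^ kk + u * x))) ^ 4 with hA
  have hAnn : ∀ c u, 0 ≤ A c u := fun c u => by positivity
  have hsub : ∀ lam : ZMod p, lam ≠ 0 → A (c * lam ^ kk) (u * lam) = A c u := by
    intro lam hlam
    have : (∑ x : ZMod p, pc p ((c * lam ^ kk) * x ^ kk + (u * lam) * x))
        = ∑ x : ZMod p, pc p (c * x ^ kk + u * x) := by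
      rw [← Equiv.sum_comp (Equiv.mulLeft₀ lam hlam)
        (fun x => pc p (c * x ^ kk + u * x))]
      refine Finset.sum_congr rfl fun y _ => ?_
      simp only [Equiv.mulLeft₀_apply]
      congr 1
      rw [mul_pow]
      ring
    rw [hA]
    simp only
    rw [this]
  have hginj : Function.Injective (fun lam : ZMod p => ((c * lam ^ kk, u * lam) : ZMod p × ZMod p)) := by
    intro l1 l2 hl
    have h1 : c * l1 ^ kk = c * l2 ^ kk := (Prod.mk.injEq _ _ _ _ ▸ hl).1
    have h2 : l1 ^ kk = l2 ^ kk := mul_left_cancel₀ hc h1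
    exact hinj h2
  have hcard : ((Finset.univ.erase (0 : ZMod p)).card : ℝ) = (p : ℝ) - 1 := by
    rw [Finset.card_erase_of_mem (Finset.mem_univ _), Finset.card_univ, ZMod.card]
    have : 1 ≤ p := hp.out.one_lt.le
    push_cast [Nat.cast_sub this]
    ring
  have key : ((p:ℝ) - 1) * A c u ≤ (kk + 1) * (p:ℝ)^2 * (p:ℝ)^2 := by
    have e1 : ∑ lam ∈ Finset.univ.erase (0 : ZMod p), A (c * lam ^ kk) (u * lam)
        = ((Finset.univ.erase (0 : ZMod p)).card : ℝ) * A c u := by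
      rw [Finset.sum_congr rfl (fun lam hlam => hsub lam (Finset.ne_of_mem_erase hlam))]
      rw [Finset.sum_const, nsmul_eq_mul]
    have e2 : ∑ lam ∈ Finset.univ.erase (0 : ZMod p), A (c * lam ^ kk) (u * lam)
        = ∑ cu ∈ (Finset.univ.erase (0 : ZMod p)).image
            (fun lam : ZMod p => ((c * lam ^ kk, u * lam) : ZMod p × ZMod p)),
          A cu.1 cu.2 := by
      rw [Finset.sum_image (fun x _ y _ h => hginj h)]
    have e3 : ∑ cu ∈ (Finset.univ.erase (0 : ZMod p)).image
            (fun lam : ZMod p => ((c * lam ^ kk, u * lam) : ZMod p × ZMod p)),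
          A cu.1 cu.2 ≤ ∑ cu : ZMod p × ZMod p, A cu.1 cu.2 :=
      Finset.sum_le_sum_of_subset_of_nonneg (Finset.subset_univ _)
        (fun cu _ _ => hAnn _ _)
    have e4 : ∑ cu : ZMod p × ZMod p, A cu.1 cu.2 ≤ (kk + 1) * (p:ℝ)^2 * (p:ℝ)^2 := by
      rw [Fintype.sum_prod_type]
      rw [hA]
      simp only
      rw [moment_real p hp kk]
      have := count_bound p hp kk hk2 hkp hkodd
      nlinarith [sq_nonneg ((p:ℝ))]
    rw [← hcard]
    calc ((Finset.univ.erase (0 : ZMod p)).card : ℝ) * A c u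
        = ∑ lam ∈ Finset.univ.erase (0 : ZMod p), A (c * lam ^ kk) (u * lam) := e1.symm
      _ = _ := e2
      _ ≤ _ := e3
      _ ≤ _ := e4
  have hApos := hAnn c u
  show A c u ≤ 2 * (kk + 1) * (p:ℝ)^3
  have hpm : (0:ℝ) < (p:ℝ) - 1 := by linarith
  have h1 : A c u ≤ (kk + 1) * (p:ℝ)^2 * (p:ℝ)^2 / ((p:ℝ) - 1) := by
    rw [le_div_iff₀ hpm]
    linarith [key]
  have h2 : (kk + 1) * (p:ℝ)^2 * (p:ℝ)^2 / ((p:ℝ) - 1) ≤ 2 * (kk + 1) * (p:ℝ)^3 := by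
    rw [div_le_iff₀ hpm]
    have hprod : (0:ℝ) ≤ ((kk:ℝ) + 1) * (p:ℝ)^3 * ((p:ℝ) - 2) :=
      mul_nonneg (mul_nonneg (by positivity) (by positivity)) (by linarith)
    nlinarith [hprod]
  linarith
-- distance from 1 lower bound
lemma pc_sub_one (hp : 1 < p) (t : ZMod p) :
    Complex.abs (pc p t - 1) = 2 * Real.sin (Real.pi * t.val / p) := by
  have hvp : (t.val : ℝ) < p := by exact_mod_cast ZMod.val_lt t
  have hp0 : (0:ℝ) < p := by positivity
  set θ : ℝ := 2 * Real.pi * (t.val / p) with hθ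
  have hθ0 : 0 ≤ θ := by
    have : (0:ℝ) ≤ (t.val : ℝ) / p := by positivity
    nlinarith [Real.pi_pos]
  have hθ2 : θ ≤ 2 * Real.pi := by
    have h1 : (t.val : ℝ) / p ≤ 1 := by
      rw [div_le_one hp0]
      linarith
    nlinarith [Real.pi_pos]
  have hpc : pc p t = Complex.exp ((θ : ℂ) * Complex.I) := by
    have ht : t = ((t.val : ℕ) : ZMod p) := by simp [ZMod.natCast_val, ZMod.cast_id]
    rw [ht, pc_nat]
  rw [hpc, Complex.exp_mul_I]
  have hcos : (Complex.cos (θ:ℂ)) = ((Real.cos θ : ℝ) : ℂ) := by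
    rw [Complex.ofReal_cos]
  have hsin : (Complex.sin (θ:ℂ)) = ((Real.sin θ : ℝ) : ℂ) := by
    rw [Complex.ofReal_sin]
  rw [hcos, hsin]
  have : ((Real.cos θ : ℝ) : ℂ) + ((Real.sin θ : ℝ) : ℂ) * Complex.I - 1
      = Complex.ofReal (Real.cos θ - 1) + Complex.ofReal (Real.sin θ) * Complex.I := by
    push_cast
    ring
  rw [this, Complex.abs_add_mul_I]
  have hid : (Real.cos θ - 1)^2 + (Real.sin θ)^2 = 2 - 2 * Real.cos θ := by
    nlinarith [Real.sin_sq_add_cos_sq θ]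
  rw [hid]
  have hhalf : Real.sin (θ/2) = Real.sqrt ((1 - Real.cos θ)/2) :=
    Real.sin_half_eq_sqrt hθ0 hθ2
  have hs0 : 0 ≤ Real.sin (θ/2) := by
    rw [hhalf]; positivity
  have hsq : 2 - 2*Real.cos θ = (2 * Real.sin (θ/2))^2 := by
    rw [hhalf]
    rw [mul_pow, Real.sq_sqrt (by nlinarith [Real.neg_one_le_cos θ] : (0:ℝ) ≤ (1 - Real.cos θ)/2)]
    ring
  rw [hsq, Real.sqrt_sq (by positivity)]
  congr 1
  rw [hθ]
  field_simp

lemma pc_sub_one_ge (hp : 1 < p) (t : ZMod p) (ht : t ≠ 0) :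
    4 * (min (t.val : ℝ) ((p : ℝ) - t.val)) / p ≤ Complex.abs (pc p t - 1) := by
  have hv1 : 1 ≤ t.val := by
    rcases Nat.pos_of_ne_zero (fun h => ht (by rwa [← ZMod.val_eq_zero])) with h
    omega
  have hvp : (t.val : ℝ) < p := by exact_mod_cast ZMod.val_lt t
  have hp0 : (0:ℝ) < p := by positivity
  rw [pc_sub_one p hp t]
  rcases le_total ((t.val:ℝ)) ((p:ℝ) - t.val) with hmin | hmin
  · rw [min_eq_left hmin]
    have hang : Real.pi * t.val / p ≤ Real.pi / 2 := by
      rw [div_le_div_iff₀ hp0 (by norm_num : (0:ℝ) < 2)]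
      nlinarith [Real.pi_pos]
    have := Real.mul_le_sin (x := Real.pi * t.val / p) (by positivity) hang
    calc 4 * (t.val:ℝ) / p = 2 * (2 / Real.pi * (Real.pi * t.val / p)) := by
          field_simp [Real.pi_ne_zero]
          ring
      _ ≤ 2 * Real.sin (Real.pi * t.val / p) := by linarith
  · rw [min_eq_right hmin]
    have hsymm : Real.sin (Real.pi * t.val / p) = Real.sin (Real.pi * ((p:ℝ) - t.val) / p) := by
      rw [show Real.pi * ((p:ℝ) - t.val) / p = Real.pi - Real.pi * t.val / p by
        field_simp]
      rw [Real.sin_pi_sub]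
    rw [hsymm]
    have hang : Real.pi * ((p:ℝ) - t.val) / p ≤ Real.pi / 2 := by
      rw [div_le_div_iff₀ hp0 (by norm_num : (0:ℝ) < 2)]
      nlinarith [Real.pi_pos]
    have := Real.mul_le_sin (x := Real.pi * ((p:ℝ) - t.val) / p)
      (div_nonneg (mul_nonneg Real.pi_pos.le (by linarith)) hp0.le) hang
    calc 4 * ((p:ℝ) - t.val) / p = 2 * (2 / Real.pi * (Real.pi * ((p:ℝ) - t.val) / p)) := by
          field_simp [Real.pi_ne_zero]
          ring
      _ ≤ 2 * Real.sin (Real.pi * ((p:ℝ) - t.val) / p) := by linarith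
-- sum over nonzero t of 2/|pc t - 1| bounded by p(1 + log p)
lemma inv_dist_sum (hp : 1 < p) :
    ∑ t ∈ Finset.univ.erase (0 : ZMod p), 2 / Complex.abs (pc p t - 1)
      ≤ p * (1 + Real.log p) := by
  have hp0 : (0:ℝ) < p := by positivity
  have step1 : ∀ t ∈ Finset.univ.erase (0 : ZMod p),
      2 / Complex.abs (pc p t - 1) ≤ (p:ℝ)/2 * (1/(t.val:ℝ) + 1/((p:ℝ) - t.val)) := by
    intro t ht
    have ht0 : t ≠ 0 := Finset.ne_of_mem_erase ht
    have hv1 : 1 ≤ t.val := Nat.pos_of_ne_zero (fun h => ht0 (by rwa [← ZMod.val_eq_zero]))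
    have hv1R : (1:ℝ) ≤ (t.val : ℝ) := by exact_mod_cast hv1
    have hvp : (t.val : ℝ) < p := by exact_mod_cast ZMod.val_lt t
    have hmin0 : (0:ℝ) < min (t.val : ℝ) ((p : ℝ) - t.val) := by
      rcases le_total ((t.val:ℝ)) ((p:ℝ) - t.val) with h | h
      · rw [min_eq_left h]; linarith
      · rw [min_eq_right h]; linarith
    have hlb := pc_sub_one_ge p hp t ht0
    have habs0 : (0:ℝ) < Complex.abs (pc p t - 1) := by
      calc (0:ℝ) < 4 * (min (t.val : ℝ) ((p : ℝ) - t.val)) / p := by positivity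
        _ ≤ _ := hlb
    have h1 : 2 / Complex.abs (pc p t - 1) ≤ 2 / (4 * (min (t.val : ℝ) ((p : ℝ) - t.val)) / p) :=
      div_le_div_of_nonneg_left (by norm_num) (by positivity) hlb
    have h2 : 2 / (4 * (min (t.val : ℝ) ((p : ℝ) - t.val)) / p)
        = (p:ℝ)/2 * (1 / (min (t.val : ℝ) ((p : ℝ) - t.val))) := by
      field_simp
      ring
    have h3 : 1 / (min (t.val : ℝ) ((p : ℝ) - t.val)) ≤ 1/(t.val:ℝ) + 1/((p:ℝ) - t.val) := by
      rcases le_total ((t.val:ℝ)) ((p:ℝ) - t.val) with h | h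
      · rw [min_eq_left h]
        have : (0:ℝ) ≤ 1/((p:ℝ) - t.val) := by
          apply one_div_nonneg.2; linarith
        linarith
      · rw [min_eq_right h]
        have : (0:ℝ) ≤ 1/(t.val:ℝ) := by positivity
        linarith
    calc 2 / Complex.abs (pc p t - 1) ≤ (p:ℝ)/2 * (1 / (min (t.val : ℝ) ((p : ℝ) - t.val))) := by
          rw [← h2]; exact h1
      _ ≤ (p:ℝ)/2 * (1/(t.val:ℝ) + 1/((p:ℝ) - t.val)) := by
          apply mul_le_mul_of_nonneg_left h3 (by positivity)
  have step2 : ∑ t ∈ Finset.univ.erase (0 : ZMod p),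
      ((p:ℝ)/2 * (1/(t.val:ℝ) + 1/((p:ℝ) - t.val)))
      = (p:ℝ)/2 * ∑ m ∈ Finset.Icc 1 (p-1), (1/(m:ℝ) + 1/((p:ℝ) - m)) := by
    rw [← Finset.mul_sum]
    congr 1
    refine Finset.sum_nbij' (i := fun t : ZMod p => t.val) (j := fun m : ℕ => (m : ZMod p)) ?_ ?_ ?_ ?_ ?_
    · intro t ht
      have ht0 : t ≠ 0 := Finset.ne_of_mem_erase ht
      have hv1 : 1 ≤ t.val := Nat.pos_of_ne_zero (fun h => ht0 (by rwa [← ZMod.val_eq_zero]))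
      have hvp : t.val < p := ZMod.val_lt t
      rw [Finset.mem_Icc]
      omega
    · intro m hm
      rw [Finset.mem_Icc] at hm
      apply Finset.mem_erase.2
      constructor
      · rw [Ne, ZMod.natCast_eq_zero_iff]
        intro hdvd
        have := Nat.le_of_dvd (by omega) hdvd
        omega
      · exact Finset.mem_univ _
    · intro t ht
      simp [ZMod.natCast_val, ZMod.cast_id]
    · intro m hm
      rw [Finset.mem_Icc] at hm
      rw [ZMod.val_natCast_of_lt (by omega)]
    · intro t ht
      rfl
  have step3 : ∑ m ∈ Finset.Icc 1 (p-1), (1/(m:ℝ) + 1/((p:ℝ) - m))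
      = 2 * ∑ m ∈ Finset.Icc 1 (p-1), 1/(m:ℝ) := by
    rw [Finset.sum_add_distrib, two_mul]
    congr 1
    refine Finset.sum_nbij' (i := fun m : ℕ => p - m) (j := fun m : ℕ => p - m) ?_ ?_ ?_ ?_ ?_
    · intro m hm; rw [Finset.mem_Icc] at *; omega
    · intro m hm; rw [Finset.mem_Icc] at *; omega
    · intro m hm; rw [Finset.mem_Icc] at hm; omega
    · intro m hm; rw [Finset.mem_Icc] at hm; omega
    · intro m hm
      rw [Finset.mem_Icc] at hm
      congr 1
      have : (↑(p - m) : ℝ) = (p:ℝ) - m := by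
        push_cast [Nat.cast_sub (by omega : m ≤ p)]
        ring
      rw [this]
  have step4 : ∑ m ∈ Finset.Icc 1 (p-1), 1/(m:ℝ) ≤ 1 + Real.log p := by
    have hh : ∑ m ∈ Finset.Icc 1 (p-1), 1/(m:ℝ) = (harmonic (p-1) : ℝ) := by
      rw [harmonic_eq_sum_Icc]
      push_cast
      simp [one_div]
    rw [hh]
    calc (harmonic (p-1) : ℝ) ≤ 1 + Real.log (p-1 : ℕ) := harmonic_le_one_add_log _
      _ ≤ 1 + Real.log p := by
          have h1 : ((p-1 : ℕ):ℝ) ≤ (p:ℝ) := by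
            push_cast [Nat.cast_sub (by omega : 1 ≤ p)]
            linarith
          have h2 : Real.log ((p-1 : ℕ):ℝ) ≤ Real.log p := by
            apply Real.log_le_log _ h1
            have : 1 ≤ p - 1 := by omega
            exact_mod_cast Nat.lt_of_lt_of_le Nat.zero_lt_one this
          linarith
  calc ∑ t ∈ Finset.univ.erase (0 : ZMod p), 2 / Complex.abs (pc p t - 1)
      ≤ ∑ t ∈ Finset.univ.erase (0 : ZMod p),
        ((p:ℝ)/2 * (1/(t.val:ℝ) + 1/((p:ℝ) - t.val))) := Finset.sum_le_sum step1
    _ = (p:ℝ)/2 * ∑ m ∈ Finset.Icc 1 (p-1), (1/(m:ℝ) + 1/((p:ℝ) - m)) := step2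
    _ = (p:ℝ) * ∑ m ∈ Finset.Icc 1 (p-1), 1/(m:ℝ) := by rw [step3]; ring
    _ ≤ p * (1 + Real.log p) := by
        apply mul_le_mul_of_nonneg_left step4 (by positivity)
lemma hat_interval_le (hp : Fact p.Prime) (J : Finset (ZMod p)) (hJ : IsInterval J)
    (t : ZMod p) (ht : t ≠ 0) :
    Complex.abs (∑ j ∈ J, pc p (-(t * j))) ≤ 2 / Complex.abs (pc p (-t) - 1) := by
  obtain ⟨b, len, rfl⟩ := hJ
  have hz1 : pc p (-t) ≠ 1 := by
    rw [Ne, pc_eq_one_iff, neg_eq_zero]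
    exact ht
  have hden : 0 < Complex.abs (pc p (-t) - 1) := by
    rw [AbsoluteValue.pos_iff]
    intro h
    exact hz1 (by linear_combination h)
  by_cases hlen : p ≤ len
  · -- the interval is everything
    have huniv : (Finset.range len).image (fun i : ℕ => ((b + i : ℕ) : ZMod p)) = Finset.univ := by
      apply Finset.eq_univ_of_forall
      intro y
      rw [Finset.mem_image]
      refine ⟨(y - (b:ZMod p)).val, Finset.mem_range.2 (lt_of_lt_of_le (ZMod.val_lt _) hlen), ?_⟩
      push_cast [ZMod.natCast_val, ZMod.cast_id]
      ring
    rw [huniv]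
    have : ∑ j : ZMod p, pc p (-(t * j)) = ∑ j : ZMod p, pc p ((-t) * j) := by
      apply Finset.sum_congr rfl
      intro j _
      congr 1
      ring
    rw [this, sum_pc p hp (-t), if_neg (by simpa using ht)]
    simp only [map_zero]
    positivity
  · push_neg at hlen
    have hinj : Set.InjOn (fun i : ℕ => ((b + i : ℕ) : ZMod p)) (Finset.range len) := by
      intro i hi j hj hij
      simp only [Finset.coe_range, Set.mem_Iio] at hi hj
      have : ((b + i : ℕ) : ZMod p) = ((b + j : ℕ) : ZMod p) := hij
      rw [ZMod.natCast_eq_natCast_iff] at this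
      have := Nat.ModEq.add_left_cancel' b this
      have h2 : i % p = j % p := this
      rwa [Nat.mod_eq_of_lt (by omega), Nat.mod_eq_of_lt (by omega)] at h2
    rw [Finset.sum_image (fun i hi j hj h => hinj hi hj h)]
    have hterm : ∀ i ∈ Finset.range len,
        pc p (-(t * ((b + i : ℕ) : ZMod p))) = pc p (-(t * (b:ZMod p))) * (pc p (-t))^i := by
      intro i _
      rw [← pc_natmul p i (-t), ← pc_add]
      congr 1
      push_cast
      ring
    rw [Finset.sum_congr rfl hterm, ← Finset.mul_sum, geom_sum_eq hz1]
    rw [map_mul, pc_abs, one_mul, map_div₀]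
    have hnum : Complex.abs ((pc p (-t))^len - 1) ≤ 2 := by
      have h2 := norm_sub_le ((pc p (-t))^len) 1
      rw [Complex.norm_eq_abs, Complex.norm_eq_abs, Complex.norm_eq_abs] at h2
      rw [map_pow, pc_abs] at h2
      simpa using h2.trans_eq (by norm_num)
    gcongr
-- sum of |hat J| over nonzero frequencies
lemma hat_sum_nonzero (hp : Fact p.Prime) (J : Finset (ZMod p)) (hJ : IsInterval J) :
    ∑ t ∈ Finset.univ.erase (0 : ZMod p), Complex.abs (∑ j ∈ J, pc p (-(t * j)))
      ≤ p * (1 + Real.log p) := by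
  have h1 : ∑ t ∈ Finset.univ.erase (0 : ZMod p), Complex.abs (∑ j ∈ J, pc p (-(t * j)))
      ≤ ∑ t ∈ Finset.univ.erase (0 : ZMod p), 2 / Complex.abs (pc p (-t) - 1) :=
    Finset.sum_le_sum (fun t ht =>
      hat_interval_le p hp J hJ t (Finset.ne_of_mem_erase ht))
  have h2 : ∑ t ∈ Finset.univ.erase (0 : ZMod p), 2 / Complex.abs (pc p (-t) - 1)
      = ∑ t ∈ Finset.univ.erase (0 : ZMod p), 2 / Complex.abs (pc p t - 1) := by
    refine Finset.sum_nbij' (i := fun t : ZMod p => -t) (j := fun t : ZMod p => -t)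
      ?_ ?_ ?_ ?_ ?_
    · intro t ht
      rw [Finset.mem_erase] at *
      exact ⟨neg_ne_zero.2 ht.1, Finset.mem_univ _⟩
    · intro t ht
      rw [Finset.mem_erase] at *
      exact ⟨neg_ne_zero.2 ht.1, Finset.mem_univ _⟩
    · intro t _; rw [neg_neg]
    · intro t _; rw [neg_neg]
    · intro t _; rfl
  calc _ ≤ _ := h1
    _ = _ := h2
    _ ≤ _ := inv_dist_sum p hp.out.one_lt

lemma hat_zero (S : Finset (ZMod p)) :
    (∑ j ∈ S, pc p (-((0:ZMod p) * j))) = (S.card : ℂ) := by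
  rw [Finset.sum_congr rfl (fun j _ => by rw [zero_mul, neg_zero, pc_zero])]
  simp

lemma hat_sum_all (hp : Fact p.Prime) (J : Finset (ZMod p)) (hJ : IsInterval J) :
    ∑ t : ZMod p, Complex.abs (∑ j ∈ J, pc p (-(t * j)))
      ≤ p * (2 + Real.log p) := by
  rw [← Finset.sum_erase_add Finset.univ _ (Finset.mem_univ (0 : ZMod p))]
  have h0 : Complex.abs (∑ j ∈ J, pc p (-((0:ZMod p) * j))) = (J.card : ℝ) := by
    rw [hat_zero]
    simp [← Complex.norm_eq_abs]
  have hcard : (J.card : ℝ) ≤ p := by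
    have := Finset.card_le_card (Finset.subset_univ J)
    rw [Finset.card_univ, ZMod.card] at this
    exact_mod_cast this
  have := hat_sum_nonzero p hp J hJ
  rw [h0]
  nlinarith [this]

theorem main_bound (hp : Fact p.Prime) (hp3 : 3 ≤ p) (a : ZMod p) (ha : a ≠ 0)
    (kk : ℕ) (hk2 : 2 ≤ kk) (hkp : kk ≤ p - 1) (hkodd : Odd kk)
    (hinj : Function.Injective (fun s : ZMod p => s ^ kk))
    (σ : Equiv.Perm (ZMod p)) (hσ : ∀ s : ZMod p, σ s = a * s ^ kk)
    (I J : Finset (ZMod p)) (hI : IsInterval I) (hJ : IsInterval J) :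
    discIn (I.image σ) J
      ≤ 12 * (kk : ℝ) ^ ((1:ℝ)/4) * (p : ℝ) ^ ((3:ℝ)/4) * (Real.log p)^2 := by
  have hp0 : (0:ℝ) < p := by positivity
  set hatI : ZMod p → ℂ := fun u => ∑ x ∈ I, pc p (-(u * x)) with hhatI
  set hatJ : ZMod p → ℂ := fun t => ∑ j ∈ J, pc p (-(t * j)) with hhatJ
  set T : ZMod p → ZMod p → ℂ := fun c u => ∑ x : ZMod p, pc p (c * x ^ kk + u * x) with hT
  set M : ℝ := (2 * ((kk:ℝ) + 1) * (p:ℝ)^3) ^ ((1:ℝ)/4) with hM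
  -- pointwise bound on complete sums
  have Tle : ∀ c u : ZMod p, c ≠ 0 → Complex.abs (T c u) ≤ M := by
    intro c u hc
    have h4 := T_pow4_le p hp kk hk2 hkp hkodd hinj c u hc
    have h0 : (0:ℝ) ≤ Complex.abs (T c u) := AbsoluteValue.nonneg _ _
    calc Complex.abs (T c u)
        = ((Complex.abs (T c u)) ^ (4:ℕ)) ^ ((1:ℝ)/4) := by
          rw [← Real.rpow_natCast (Complex.abs (T c u)) 4, ← Real.rpow_mul h0]
          norm_num
      _ ≤ M := by
          rw [hM]
          apply Real.rpow_le_rpow (by positivity) _ (by norm_num)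
          exact_mod_cast h4
  -- step A: the basic identity
  have inner : ∀ c : ZMod p, ∑ u : ZMod p, hatI u * T c u
      = p * ∑ x ∈ I, pc p (c * x ^ kk) := by
    intro c
    have e1 : ∀ u : ZMod p, hatI u * T c u
        = ∑ x : ZMod p, pc p (c * x ^ kk) * (hatI u * pc p (u * x)) := by
      intro u
      rw [hT]
      simp only
      rw [Finset.mul_sum]
      refine Finset.sum_congr rfl fun x _ => ?_
      rw [pc_add]
      ring
    rw [Finset.sum_congr rfl fun u _ => e1 u, Finset.sum_comm]
    have e2 : ∀ x : ZMod p, ∑ u : ZMod p, pc p (c * x ^ kk) * (hatI u * pc p (u * x))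
        = pc p (c * x ^ kk) * (if x ∈ I then (p:ℂ) else 0) := by
      intro x
      rw [← Finset.mul_sum, sum_hat p hp I x]
    rw [Finset.sum_congr rfl fun x _ => e2 x]
    have e3 : ∀ x : ZMod p, pc p (c * x ^ kk) * (if x ∈ I then (p:ℂ) else 0)
        = if x ∈ I then (p:ℂ) * pc p (c * x ^ kk) else 0 := by
      intro x
      split_ifs <;> ring
    rw [Finset.sum_congr rfl fun x _ => e3 x, Finset.sum_ite_mem, Finset.univ_inter,
      Finset.mul_sum]
  -- outer identity
  have keyid : (p:ℂ)^2 * (((I.filter (fun x => a * x ^ kk ∈ J)).card : ℕ) : ℂ)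
      = ∑ t : ZMod p, hatJ t * ∑ u : ZMod p, hatI u * T (t * a) u := by
    have step1 : ∀ t : ZMod p, hatJ t * ∑ u : ZMod p, hatI u * T (t * a) u
        = ∑ x ∈ I, (p:ℂ) * (hatJ t * pc p (t * (a * x ^ kk))) := by
      intro t
      rw [inner (t * a), Finset.mul_sum, Finset.mul_sum]
      refine Finset.sum_congr rfl fun x _ => ?_
      rw [show (t * a) * x ^ kk = t * (a * x ^ kk) from by ring]
      ring
    rw [Finset.sum_congr rfl fun t _ => step1 t, Finset.sum_comm]
    have step2 : ∀ x : ZMod p, ∑ t : ZMod p, (p:ℂ) * (hatJ t * pc p (t * (a * x ^ kk)))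
        = (p:ℂ) * (if a * x ^ kk ∈ J then (p:ℂ) else 0) := by
      intro x
      rw [← Finset.mul_sum, sum_hat p hp J (a * x ^ kk)]
    rw [Finset.sum_congr rfl fun x _ => step2 x, ← Finset.mul_sum]
    rw [← Finset.sum_filter, Finset.sum_const, nsmul_eq_mul]
    ring
  -- split off t = 0
  set W : ℂ := ∑ t ∈ Finset.univ.erase (0 : ZMod p),
      hatJ t * ∑ u : ZMod p, hatI u * T (t * a) u with hW
  have hT0 : ∀ u : ZMod p, T ((0:ZMod p) * a) u = if u = 0 then (p:ℂ) else 0 := by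
    intro u
    rw [hT]
    simp only [zero_mul]
    rw [← sum_pc p hp u]
    refine Finset.sum_congr rfl fun x _ => ?_
    congr 1
    ring
  have hzeroterm : hatJ (0:ZMod p) * ∑ u : ZMod p, hatI u * T ((0:ZMod p) * a) u
      = (J.card : ℂ) * ((I.card : ℂ) * p) := by
    have h1 : ∑ u : ZMod p, hatI u * T ((0:ZMod p) * a) u = hatI 0 * p := by
      rw [Finset.sum_congr rfl fun u _ => by rw [hT0 u, mul_ite, mul_zero]]
      rw [Finset.sum_ite_eq' Finset.univ (0 : ZMod p) (fun u => hatI u * (p:ℂ))]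
      rw [if_pos (Finset.mem_univ _)]
    have hJ0 : hatJ 0 = (J.card : ℂ) := hat_zero p J
    have hI0 : hatI 0 = (I.card : ℂ) := hat_zero p I
    rw [h1, hJ0, hI0]
  have keyid2 : (p:ℂ)^2 * (((I.filter (fun x => a * x ^ kk ∈ J)).card : ℕ) : ℂ)
      = (J.card : ℂ) * ((I.card : ℂ) * p) + W := by
    rw [keyid, ← Finset.add_sum_erase Finset.univ _ (Finset.mem_univ (0 : ZMod p)),
      hzeroterm, hW]
  -- intersection card
  have cardinter : ((I.image σ) ∩ J).card = (I.filter (fun x => a * x ^ kk ∈ J)).card := by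
    have hset : (I.image σ) ∩ J = (I.filter (fun x => a * x ^ kk ∈ J)).image σ := by
      ext y
      simp only [Finset.mem_inter, Finset.mem_image, Finset.mem_filter]
      constructor
      · rintro ⟨⟨x, hxI, rfl⟩, hyJ⟩
        exact ⟨x, ⟨hxI, by rwa [← hσ x]⟩, rfl⟩
      · rintro ⟨x, ⟨hxI, hxJ⟩, rfl⟩
        exact ⟨⟨x, hxI, rfl⟩, by rwa [hσ x]⟩
    rw [hset, Finset.card_image_of_injective _ σ.injective]
  -- bound on |W|
  have hlogpos : (0:ℝ) ≤ Real.log p := Real.log_nonneg (by exact_mod_cast le_trans (by norm_num) hp3)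
  have hMpos : (0:ℝ) ≤ M := by rw [hM]; positivity
  have innerabs : ∀ t : ZMod p, t ≠ 0 →
      Complex.abs (∑ u : ZMod p, hatI u * T (t * a) u)
        ≤ (p * (2 + Real.log p)) * M := by
    intro t ht
    have hta : t * a ≠ 0 := mul_ne_zero ht ha
    calc Complex.abs (∑ u : ZMod p, hatI u * T (t * a) u)
        ≤ ∑ u : ZMod p, Complex.abs (hatI u * T (t * a) u) := Complex.abs.sum_le _ _
      _ ≤ ∑ u : ZMod p, Complex.abs (hatI u) * M := by
          refine Finset.sum_le_sum fun u _ => ?_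
          rw [map_mul]
          exact mul_le_mul_of_nonneg_left (Tle (t*a) u hta) (AbsoluteValue.nonneg _ _)
      _ = (∑ u : ZMod p, Complex.abs (hatI u)) * M := by rw [Finset.sum_mul]
      _ ≤ (p * (2 + Real.log p)) * M :=
          mul_le_mul_of_nonneg_right (hat_sum_all p hp I hI) hMpos
  have Wabs : Complex.abs W ≤ (p * (1 + Real.log p)) * ((p * (2 + Real.log p)) * M) := by
    calc Complex.abs W
        ≤ ∑ t ∈ Finset.univ.erase (0 : ZMod p),
            Complex.abs (hatJ t * ∑ u : ZMod p, hatI u * T (t * a) u) :=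
          Complex.abs.sum_le _ _
      _ ≤ ∑ t ∈ Finset.univ.erase (0 : ZMod p),
            Complex.abs (hatJ t) * ((p * (2 + Real.log p)) * M) := by
          refine Finset.sum_le_sum fun t ht => ?_
          rw [map_mul]
          exact mul_le_mul_of_nonneg_left (innerabs t (Finset.ne_of_mem_erase ht))
            (AbsoluteValue.nonneg _ _)
      _ = (∑ t ∈ Finset.univ.erase (0 : ZMod p), Complex.abs (hatJ t))
            * ((p * (2 + Real.log p)) * M) := by rw [Finset.sum_mul]
      _ ≤ (p * (1 + Real.log p)) * ((p * (2 + Real.log p)) * M) := by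
          apply mul_le_mul_of_nonneg_right (hat_sum_nonzero p hp J hJ)
          positivity
  -- relate discIn to |W|
  have hdisc : (p:ℝ)^2 * discIn (I.image σ) J = Complex.abs W := by
    have hcard2 : (I.image σ).card = I.card := Finset.card_image_of_injective _ σ.injective
    have hcast : ((((p:ℝ)^2 * ((((I.image σ) ∩ J).card : ℝ)
        - (I.card : ℝ) * (J.card : ℝ) / p)) : ℝ) : ℂ) = W := by
      push_cast
      rw [cardinter]
      have hpne : ((p:ℕ):ℂ) ≠ 0 := Nat.cast_ne_zero.2 (by omega)
      field_simp [hpne]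
      push_cast at keyid2
      linear_combination keyid2
    rw [discIn, hcard2]
    rw [← abs_of_pos (show (0:ℝ) < (p:ℝ)^2 by positivity), ← abs_mul]
    rw [← Complex.abs_ofReal]
    rw [hcast]
  -- numeric endgame
  have hL : 1 ≤ Real.log p := by
    have h3 : Real.exp 1 ≤ 3 := by
      have := Real.exp_one_lt_d9
      linarith
    calc (1:ℝ) = Real.log (Real.exp 1) := (Real.log_exp 1).symm
      _ ≤ Real.log 3 := Real.log_le_log (Real.exp_pos 1) h3
      _ ≤ Real.log p := Real.log_le_log (by norm_num) (by exact_mod_cast hp3)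
  have hM2 : M ≤ 2 * (kk : ℝ) ^ ((1:ℝ)/4) * (p : ℝ) ^ ((3:ℝ)/4) := by
    have hstep1 : M ≤ (3 * (kk:ℝ) * (p:ℝ)^3) ^ ((1:ℝ)/4) := by
      rw [hM]
      apply Real.rpow_le_rpow (by positivity) _ (by norm_num)
      have : (2:ℝ) * ((kk:ℝ) + 1) ≤ 3 * kk := by
        have : (2:ℝ) ≤ (kk:ℝ) := by exact_mod_cast hk2
        linarith
      nlinarith [pow_nonneg hp0.le 3]
    have hstep2 : ((3 * (kk:ℝ) * (p:ℝ)^3) : ℝ) ^ ((1:ℝ)/4)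
        = (3:ℝ)^((1:ℝ)/4) * (kk:ℝ)^((1:ℝ)/4) * ((p:ℝ)^3)^((1:ℝ)/4) := by
      rw [Real.mul_rpow (by positivity) (by positivity),
        Real.mul_rpow (by positivity) (by positivity)]
    have hstep3 : ((p:ℝ)^3)^((1:ℝ)/4) = (p:ℝ)^((3:ℝ)/4) := by
      rw [← Real.rpow_natCast (p:ℝ) 3, ← Real.rpow_mul hp0.le]
      norm_num
    have hstep4 : (3:ℝ)^((1:ℝ)/4) ≤ 2 := by
      have h16 : ((16:ℝ))^((1:ℝ)/4) = 2 := by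
        rw [show (16:ℝ) = 2^(4:ℕ) by norm_num, ← Real.rpow_natCast 2 4,
          ← Real.rpow_mul (by norm_num)]
        norm_num
      calc (3:ℝ)^((1:ℝ)/4) ≤ ((16:ℝ))^((1:ℝ)/4) :=
            Real.rpow_le_rpow (by norm_num) (by norm_num) (by norm_num)
        _ = 2 := h16
    calc M ≤ (3 * (kk:ℝ) * (p:ℝ)^3) ^ ((1:ℝ)/4) := hstep1
      _ = (3:ℝ)^((1:ℝ)/4) * (kk:ℝ)^((1:ℝ)/4) * ((p:ℝ)^3)^((1:ℝ)/4) := hstep2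
      _ = (3:ℝ)^((1:ℝ)/4) * ((kk:ℝ)^((1:ℝ)/4) * (p:ℝ)^((3:ℝ)/4)) := by rw [hstep3]; ring
      _ ≤ 2 * ((kk:ℝ)^((1:ℝ)/4) * (p:ℝ)^((3:ℝ)/4)) := by
          apply mul_le_mul_of_nonneg_right hstep4 (by positivity)
      _ = 2 * (kk : ℝ) ^ ((1:ℝ)/4) * (p : ℝ) ^ ((3:ℝ)/4) := by ring
  -- combine
  have hfinal : (p:ℝ)^2 * discIn (I.image σ) J
      ≤ (p:ℝ)^2 * (12 * (kk : ℝ) ^ ((1:ℝ)/4) * (p : ℝ) ^ ((3:ℝ)/4) * (Real.log p)^2) := by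
    rw [hdisc]
    calc Complex.abs W ≤ (p * (1 + Real.log p)) * ((p * (2 + Real.log p)) * M) := Wabs
      _ ≤ (p * (2 * Real.log p)) * ((p * (3 * Real.log p)) * M) := by
          have h1 : 1 + Real.log p ≤ 2 * Real.log p := by linarith
          have h2 : 2 + Real.log p ≤ 3 * Real.log p := by linarith
          have hm1 : (p:ℝ) * (1 + Real.log p) ≤ p * (2 * Real.log p) :=
            mul_le_mul_of_nonneg_left h1 hp0.le
          have hm2 : (p:ℝ) * (2 + Real.log p) ≤ p * (3 * Real.log p) :=
            mul_le_mul_of_nonneg_left h2 hp0.le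
          apply mul_le_mul hm1 (mul_le_mul_of_nonneg_right hm2 hMpos) (by positivity) (by positivity)
      _ = (p:ℝ)^2 * (6 * (Real.log p)^2 * M) := by ring
      _ ≤ (p:ℝ)^2 * (6 * (Real.log p)^2 * (2 * (kk : ℝ) ^ ((1:ℝ)/4) * (p : ℝ) ^ ((3:ℝ)/4))) := by
          apply mul_le_mul_of_nonneg_left _ (by positivity)
          apply mul_le_mul_of_nonneg_left hM2 (by positivity)
      _ = (p:ℝ)^2 * (12 * (kk : ℝ) ^ ((1:ℝ)/4) * (p : ℝ) ^ ((3:ℝ)/4) * (Real.log p)^2) := by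
          ring
  exact le_of_mul_le_mul_left hfinal (by positivity)

end Stmt9Aux

/-- For `p` prime, `a ∈ (ZMod p)ˣ` and `2 ≤ k ≤ p-1` with `gcd(k, p-1) = 1`, the power
permutation `η_{a,k} : s ↦ a·s^k` has `D(η_{a,k}) ≤ C k^{1/4} p^{3/4} (log p)²`. -/

theorem stmt_9 :
    ∃ C : ℝ, ∀ (p : ℕ), p.Prime → ∀ (a : ZMod p), a ≠ 0 →
      ∀ k : ℕ, 2 ≤ k → k ≤ p - 1 → Nat.Coprime k (p - 1) →
      ∀ σ : Equiv.Perm (ZMod p), (∀ s : ZMod p, σ s = a * s ^ k) →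
        disc σ ≤ C * (k : ℝ) ^ ((1 : ℝ) / 4) * (p : ℝ) ^ ((3 : ℝ) / 4) * (Real.log p) ^ 2 := by
  refine ⟨12, ?_⟩
  intro p hp a ha k hk2 hkp hcop σ hσ
  haveI hfact : Fact p.Prime := ⟨hp⟩
  haveI : NeZero p := ⟨hp.pos.ne'⟩
  have hp2 : 2 ≤ p := hp.two_le
  have hp3 : 3 ≤ p := by omega
  have hodd : Odd k := by
    rcases Nat.even_or_odd k with he | ho
    · exfalso
      have hpodd : Odd p := hp.odd_of_ne_two (by omega)
      have h2p : 2 ∣ (p - 1) := by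
        rcases hpodd with ⟨m, hm⟩
        omega
      have h2k : 2 ∣ k := he.two_dvd
      have h21 : (2:ℕ) ∣ 1 := hcop ▸ Nat.dvd_gcd h2k h2p
      norm_num at h21
    · exact ho
  have hinj : Function.Injective (fun s : ZMod p => s ^ k) := by
    intro s t hst
    have hst' : s ^ k = t ^ k := hst
    apply σ.injective
    rw [hσ s, hσ t, hst']
  have hbound := fun I J hI hJ =>
    Stmt9Aux.main_bound p hfact hp3 a ha k hk2 hkp hodd hinj σ hσ I J hI hJ
  apply Real.sSup_le
  · rintro d ⟨I, J, hI, hJ, rfl⟩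
    exact hbound I J hI hJ
  · positivity
end
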